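/- arXiv:math/0606316 — 7 statements merged into one kernel-verified Lean document; each statement's English description precedes it below -/
import Mathlib

section
/- For every integer n ≥ 2, the sum Υ(n) = Σ_{p ≤ n, p prime} v_p(n!) satisfies Υ(n) < (n−1)·log(log(n−1)) + c₄·(n−1) + n/log n + 1717433·n/(log n)⁵, where c₄ = 21.181 (the paper's effective constant c₄ ≈ 21.18095291). -/
open Finset

/-- `Υ(n) = ∑_{p ≤ n, p prime} v_p(n!)`, where `v_p(n!)` is the exponent of the
prime `p` in the prime factorization of `n!`. -/
noncomputable def Upsilon (n : ℕ) : ℕ :=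
  ∑ p ∈ (Finset.range (n + 1)).filter Nat.Prime, (Nat.factorial n).factorization p

namespace UpsilonAux


/-- The sum of base-`p` digits of a positive number is positive. -/
lemma digitsum_pos {p : ℕ} (hp : 2 ≤ p) : ∀ n : ℕ, n ≠ 0 → 1 ≤ (p.digits n).sum := by
  intro n
  induction n using Nat.strong_induction_on with
  | _ n ih =>
    intro hn
    rw [Nat.digits_def' (by omega : 1 < p) (by omega : 0 < n)]
    simp only [List.sum_cons]
    rcases Nat.eq_zero_or_pos (n % p) with h | h
    · have hdvd : p ∣ n := Nat.dvd_of_mod_eq_zero h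
      have hq : n / p ≠ 0 := by
        rcases hdvd with ⟨k, rfl⟩
        have : k ≠ 0 := by rintro rfl; simp at hn
        rw [Nat.mul_div_cancel_left _ (by omega : 0 < p)]; exact this
      have := ih (n / p) (Nat.div_lt_self (by omega) (by omega)) hq
      omega
    · omega

/-- Telescoping sum over `Icc`. -/
lemma sum_tele (g : ℕ → ℝ) : ∀ b a : ℕ, a ≤ b + 1 →
    ∑ m ∈ Finset.Icc a b, (g m - g (m + 1)) = g a - g (b + 1) := by
  intro b
  induction b with
  | zero =>
    intro a ha
    interval_cases a
    · simp
    · rw [Finset.Icc_eq_empty (by omega)]; simp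
  | succ b ih =>
    intro a ha
    rcases Nat.lt_or_ge a (b + 2) with h | h
    · have ha' : a ≤ b + 1 := by omega
      rw [Finset.sum_Icc_succ_top ha', ih a ha']
      ring
    · have : a = b + 2 := by omega
      subst this
      rw [Finset.Icc_eq_empty (by omega)]; simp

lemma one_sub_inv_le_log {x : ℝ} (hx : 0 < x) : 1 - 1 / x ≤ Real.log x := by
  have h := Real.log_le_sub_one_of_pos (show (0:ℝ) < 1 / x by positivity)
  rw [one_div, Real.log_inv] at h
  have : 1 / x = x⁻¹ := one_div x
  linarith [h]


/-- Chebyshev-type bound from the primorial: `∑_{p ≤ n} log p ≤ n log 4`. -/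
lemma chebyshev (n : ℕ) :
    ∑ p ∈ (Finset.range (n + 1)).filter Nat.Prime, Real.log p ≤ n * Real.log 4 := by
  have h1 : (primorial n : ℝ) ≤ ((4 : ℕ) ^ n : ℕ) := by
    exact_mod_cast primorial_le_4_pow n
  have h2 : Real.log (primorial n) ≤ Real.log ((4 : ℕ) ^ n : ℕ) :=
    Real.log_le_log (by exact_mod_cast primorial_pos n) h1
  have h3 : Real.log ((4 : ℕ) ^ n : ℕ) = n * Real.log 4 := by
    push_cast
    rw [Real.log_pow]
  have h4 : Real.log (primorial n) =
      ∑ p ∈ (Finset.range (n + 1)).filter Nat.Prime, Real.log p := by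
    rw [primorial]
    push_cast
    rw [Real.log_prod]
    intro p hp
    have := (Finset.mem_filter.1 hp).2.pos
    positivity
  rw [h4] at h2
  rwa [h3] at h2

/-- `log n! = ∑_{p ≤ n} v_p(n!) log p`. -/
lemma log_factorial_eq (n : ℕ) :
    Real.log (n.factorial) =
      ∑ p ∈ (Finset.range (n + 1)).filter Nat.Prime,
        ((n.factorial.factorization p : ℝ)) * Real.log p := by
  have hPF : (n.factorial).primeFactors = (Finset.range (n + 1)).filter Nat.Prime := by
    ext q
    simp only [Nat.mem_primeFactors, Finset.mem_filter, Finset.mem_range]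
    constructor
    · rintro ⟨hq, hdvd, -⟩
      exact ⟨by have := (Nat.Prime.dvd_factorial hq).1 hdvd; omega, hq⟩
    · rintro ⟨hq1, hq2⟩
      exact ⟨hq2, (Nat.Prime.dvd_factorial hq2).2 (by omega), n.factorial_ne_zero⟩
  have hprod : (n.factorial : ℝ) =
      ∏ p ∈ (Finset.range (n + 1)).filter Nat.Prime, (p : ℝ) ^ (n.factorial.factorization p) := by
    conv_lhs => rw [← Nat.factorization_prod_pow_eq_self n.factorial_ne_zero]
    rw [Finsupp.prod, Nat.support_factorization, hPF]
    push_cast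
    rfl
  rw [hprod, Real.log_prod]
  · refine Finset.sum_congr rfl fun p hp => ?_
    rw [Real.log_pow]
  · intro p hp
    have := (Finset.mem_filter.1 hp).2.pos
    positivity

/-- `n/p ≤ v_p(n!)` for primes `p ≤ n`. -/
lemma div_le_factorization {p n : ℕ} (hp : p.Prime) (hpn : p ≤ n) :
    n / p ≤ n.factorial.factorization p := by
  haveI := Fact.mk hp
  rw [Nat.factorization_def _ hp,
    padicValNat_factorial (Nat.lt_succ_self (Nat.log p n))]
  have h1 : 1 ∈ Finset.Ico 1 (Nat.log p n + 1) := by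
    simp only [Finset.mem_Ico]
    exact ⟨le_refl 1, by have := Nat.log_pos hp.one_lt hpn; omega⟩
  calc n / p = n / p ^ 1 := by rw [pow_one]
    _ ≤ _ := Finset.single_le_sum (f := fun i => n / p ^ i) (fun i _ => Nat.zero_le _) h1

/-- Mertens' first theorem with explicit constant. -/
lemma mertens (n : ℕ) (hn : 1 ≤ n) :
    ∑ p ∈ (Finset.range (n + 1)).filter Nat.Prime, Real.log p / p ≤
      Real.log n + Real.log 4 := by
  have hn0 : (0 : ℝ) < n := by exact_mod_cast hn
  have hstep : ∀ p ∈ (Finset.range (n + 1)).filter Nat.Prime,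
      Real.log p / p ≤ (((n / p : ℕ) : ℝ) + 1) * Real.log p / n := by
    intro p hp
    obtain ⟨hpr, hple⟩ : p.Prime ∧ p ≤ n := by
      have := Finset.mem_filter.1 hp
      exact ⟨this.2, by have := Finset.mem_range.1 this.1; omega⟩
    have hp0 : (0 : ℝ) < p := by exact_mod_cast hpr.pos
    have hlogp : 0 ≤ Real.log p := Real.log_nonneg (by exact_mod_cast hpr.one_le)
    have hfl : (n : ℝ) / p ≤ ((n / p : ℕ) : ℝ) + 1 := by
      have h1 : n < (n / p + 1) * p := by
        have h := Nat.div_add_mod n p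
        have h2 := Nat.mod_lt n hpr.pos
        nlinarith [h, h2]
      have : (n : ℝ) < (((n / p : ℕ) : ℝ) + 1) * p := by exact_mod_cast h1
      rw [div_le_iff₀ hp0]
      linarith
    have heq : Real.log p / p = ((n : ℝ) / p) * Real.log p / n := by
      field_simp
    rw [heq]
    gcongr
  have hfact : Real.log (n.factorial) ≤ (n : ℝ) * Real.log n := by
    have h1 : (n.factorial : ℝ) ≤ (n : ℝ) ^ n := by exact_mod_cast Nat.factorial_le_pow n
    have h2 := Real.log_le_log (by exact_mod_cast n.factorial_pos) h1
    rwa [Real.log_pow] at h2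
  calc ∑ p ∈ (Finset.range (n + 1)).filter Nat.Prime, Real.log p / p
      ≤ ∑ p ∈ (Finset.range (n + 1)).filter Nat.Prime,
          (((n / p : ℕ) : ℝ) + 1) * Real.log p / n := Finset.sum_le_sum hstep
    _ = ((∑ p ∈ (Finset.range (n + 1)).filter Nat.Prime, ((n / p : ℕ) : ℝ) * Real.log p)
          + ∑ p ∈ (Finset.range (n + 1)).filter Nat.Prime, Real.log p) / n := by
        simp_rw [add_mul, one_mul, add_div, Finset.sum_add_distrib, Finset.sum_div]
    _ ≤ (Real.log (n.factorial) + (n : ℝ) * Real.log 4) / n := by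
        gcongr with p hp
        · rw [log_factorial_eq]
          refine Finset.sum_le_sum fun p hp => ?_
          have hpr := (Finset.mem_filter.1 hp).2
          have hlogp : 0 ≤ Real.log p := Real.log_nonneg (by exact_mod_cast hpr.one_le)
          have hple : p ≤ n := by have := Finset.mem_range.1 (Finset.mem_filter.1 hp).1; omega
          have := div_le_factorization hpr hple
          have hc : ((n / p : ℕ) : ℝ) ≤ (n.factorial.factorization p : ℝ) := by exact_mod_cast this
          exact mul_le_mul_of_nonneg_right hc hlogp
        · exact chebyshev n
    _ ≤ ((n : ℝ) * Real.log n + (n : ℝ) * Real.log 4) / n := by gcongr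
    _ = Real.log n + Real.log 4 := by field_simp


/-- Swapping the order of summation. -/
lemma swap_sum (n : ℕ) (f : ℕ → ℕ → ℝ) :
    ∑ p ∈ (Finset.range (n + 1)).filter Nat.Prime, ∑ m ∈ Finset.Icc p n, f p m
      = ∑ m ∈ Finset.Icc 2 n, ∑ p ∈ (Finset.range (m + 1)).filter Nat.Prime, f p m := by
  have h1 : ∀ p ∈ (Finset.range (n + 1)).filter Nat.Prime,
      ∑ m ∈ Finset.Icc p n, f p m = ∑ m ∈ Finset.Icc 2 n, if p ≤ m then f p m else 0 := by
    intro p hp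
    have hp2 : 2 ≤ p := (Finset.mem_filter.1 hp).2.two_le
    rw [← Finset.sum_filter]
    congr 1
    ext m
    simp only [Finset.mem_Icc, Finset.mem_filter]
    omega
  rw [Finset.sum_congr rfl h1, Finset.sum_comm]
  refine Finset.sum_congr rfl fun m hm => ?_
  have hm' : m ≤ n := (Finset.mem_Icc.1 hm).2
  rw [← Finset.sum_filter]
  congr 1
  ext p
  simp only [Finset.mem_filter, Finset.mem_range]
  constructor
  · rintro ⟨⟨h1, h2⟩, h3⟩; exact ⟨by omega, h2⟩
  · rintro ⟨h1, h2⟩; exact ⟨⟨by omega, h2⟩, by omega⟩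

/-- Abel summation: `∑_{p ≤ n} 1/p ≤ log log (n+1) - log log 2 + 5`. -/
lemma sum_inv_primes_le (n : ℕ) (hn : 2 ≤ n) :
    ∑ p ∈ (Finset.range (n + 1)).filter Nat.Prime, 1 / (p : ℝ) ≤
      Real.log (Real.log (n + 1)) - Real.log (Real.log 2) + 5 := by
  set w : ℕ → ℝ := fun m => 1 / Real.log m with hw
  have hlog2 : (0:ℝ) < Real.log 2 := Real.log_pos (by norm_num)
  have hlogm : ∀ m : ℕ, 2 ≤ m → (0:ℝ) < Real.log m := fun m hm =>
    Real.log_pos (by exact_mod_cast hm)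
  -- decompose each 1/p
  have key : ∀ p ∈ (Finset.range (n + 1)).filter Nat.Prime,
      1 / (p : ℝ) = (∑ m ∈ Finset.Icc p n, Real.log p / p * (w m - w (m + 1)))
        + Real.log p / p * w (n + 1) := by
    intro p hp
    obtain ⟨hpr, hple⟩ : p.Prime ∧ p ≤ n := by
      have := Finset.mem_filter.1 hp
      exact ⟨this.2, by have := Finset.mem_range.1 this.1; omega⟩
    have hlp : (0:ℝ) < Real.log p := hlogm p hpr.two_le
    have hp0 : (0:ℝ) < p := by exact_mod_cast hpr.pos
    rw [← Finset.mul_sum, sum_tele w n p (by omega)]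
    have : w p = 1 / Real.log p := rfl
    rw [mul_sub, sub_add_cancel, this]
    rw [div_mul_eq_mul_div, mul_one_div, div_div]
    rw [← div_div, div_self hlp.ne']
  rw [Finset.sum_congr rfl key, Finset.sum_add_distrib]
  rw [swap_sum n (fun p m => Real.log p / p * (w m - w (m + 1)))]
  have hΔ : ∀ m : ℕ, 2 ≤ m → 0 ≤ w m - w (m + 1) := by
    intro m hm
    have ha := hlogm m hm
    have hm0R : (0:ℝ) < (m:ℝ) := by exact_mod_cast (show 0 < m by omega)
    have hab : Real.log (m:ℝ) ≤ Real.log ((m + 1 : ℕ) : ℝ) :=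
      Real.log_le_log hm0R (by exact_mod_cast Nat.le_succ m)
    have := one_div_le_one_div_of_le ha hab
    simp only [hw]
    push_cast at this ⊢
    linarith
  have hlog4 : Real.log 4 * (1 / Real.log 2) = 2 := by
    rw [show (4:ℝ) = 2 ^ (2:ℕ) by norm_num, Real.log_pow]
    field_simp
    norm_num
  have hlog4' : 0 ≤ Real.log 4 := Real.log_nonneg (by norm_num)
  have hterm : ∀ m ∈ Finset.Icc 2 n,
      (∑ p ∈ (Finset.range (m + 1)).filter Nat.Prime, Real.log p / p * (w m - w (m + 1)))
        ≤ (Real.log (Real.log (m + 1)) - Real.log (Real.log m))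
            + Real.log 4 * (w m - w (m + 1)) := by
    intro m hm
    have hm2 : 2 ≤ m := (Finset.mem_Icc.1 hm).1
    rw [← Finset.sum_mul]
    have hS := mertens m (by omega)
    have ha : 0 < Real.log m := hlogm m hm2
    have hm0R : (0:ℝ) < (m:ℝ) := by exact_mod_cast (show 0 < m by omega)
    have hb : 0 < Real.log ((m : ℝ) + 1) := Real.log_pos (by linarith)
    have hb' : (0:ℝ) < Real.log ((m + 1 : ℕ) : ℝ) := by push_cast; exact hb
    have hab : Real.log m ≤ Real.log ((m + 1 : ℕ) : ℝ) :=
      Real.log_le_log hm0R (by exact_mod_cast Nat.le_succ m)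
    have h1 := mul_le_mul_of_nonneg_right hS (hΔ m hm2)
    refine h1.trans ?_
    have hexp : Real.log m * (w m - w (m + 1)) =
        1 - Real.log m / Real.log ((m + 1 : ℕ) : ℝ) := by
      simp only [hw]
      field_simp
    have h3 : Real.log (Real.log m) - Real.log (Real.log ((m + 1 : ℕ) : ℝ)) ≤
        Real.log m / Real.log ((m + 1 : ℕ) : ℝ) - 1 := by
      have h4 := Real.log_le_sub_one_of_pos
        (show 0 < Real.log m / Real.log ((m + 1 : ℕ) : ℝ) by positivity)
      rwa [Real.log_div ha.ne' hb'.ne'] at h4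
    have h2 : Real.log m * (w m - w (m + 1)) ≤
        Real.log (Real.log ((m + 1 : ℕ) : ℝ)) - Real.log (Real.log m) := by
      rw [hexp]; linarith
    push_cast at h2 ⊢
    nlinarith [hΔ m hm2]
  have hpart1 : (∑ m ∈ Finset.Icc 2 n, ∑ p ∈ (Finset.range (m + 1)).filter Nat.Prime,
      Real.log p / p * (w m - w (m + 1)))
      ≤ (Real.log (Real.log (n + 1)) - Real.log (Real.log 2)) + 2 := by
    refine (Finset.sum_le_sum hterm).trans ?_
    rw [Finset.sum_add_distrib]
    have hA : ∑ m ∈ Finset.Icc 2 n,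
        (Real.log (Real.log (m + 1)) - Real.log (Real.log m))
        = Real.log (Real.log (n + 1)) - Real.log (Real.log 2) := by
      have h := sum_tele (fun m => -Real.log (Real.log m)) n 2 (by omega)
      have h2 : ∑ m ∈ Finset.Icc 2 n,
          (Real.log (Real.log (m + 1)) - Real.log (Real.log m))
          = ∑ m ∈ Finset.Icc 2 n,
            ((fun m : ℕ => -Real.log (Real.log m)) m
              - (fun m : ℕ => -Real.log (Real.log m)) (m + 1)) := by
        refine Finset.sum_congr rfl fun m _ => ?_
        push_cast
        ring
      rw [h2, h]
      push_cast
      ring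
    have hB : ∑ m ∈ Finset.Icc 2 n, Real.log 4 * (w m - w (m + 1)) ≤ 2 := by
      rw [← Finset.mul_sum, sum_tele w n 2 (by omega)]
      have hw2 : w 2 = 1 / Real.log 2 := by simp [hw]
      have hwn : 0 ≤ w (n + 1) := by
        simp only [hw]
        have : (0:ℝ) ≤ Real.log ((n + 1 : ℕ) : ℝ) :=
          Real.log_nonneg (by exact_mod_cast Nat.one_le_iff_ne_zero.2 (by omega))
        positivity
      calc Real.log 4 * (w 2 - w (n + 1)) ≤ Real.log 4 * w 2 := by nlinarith
        _ = 2 := by rw [hw2]; exact hlog4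
    linarith
  have hpart2 : (∑ p ∈ (Finset.range (n + 1)).filter Nat.Prime,
      Real.log p / p * w (n + 1)) ≤ 3 := by
    rw [← Finset.sum_mul]
    have hS := mertens n (by omega)
    have hb : (0:ℝ) < Real.log ((n + 1 : ℕ) : ℝ) := by
      apply Real.log_pos
      have : (2:ℝ) ≤ ((n + 1 : ℕ) : ℝ) := by exact_mod_cast (by omega : 2 ≤ n + 1)
      linarith
    have hwn : w (n + 1) = 1 / Real.log ((n + 1 : ℕ) : ℝ) := rfl
    have hwn0 : 0 ≤ w (n + 1) := by rw [hwn]; positivity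
    have hSn : 0 ≤ Real.log (n : ℝ) + Real.log 4 := by
      have : 0 ≤ Real.log (n : ℝ) := Real.log_nonneg (by exact_mod_cast (by omega : 1 ≤ n))
      linarith
    have h1 : (∑ p ∈ (Finset.range (n + 1)).filter Nat.Prime, Real.log p / p) * w (n + 1)
        ≤ (Real.log n + Real.log 4) * w (n + 1) := mul_le_mul_of_nonneg_right hS hwn0
    refine h1.trans ?_
    rw [hwn, mul_one_div, add_div]
    have hc1 : Real.log (n : ℝ) / Real.log ((n + 1 : ℕ) : ℝ) ≤ 1 := by
      rw [div_le_one hb]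
      have hn0R : (0:ℝ) < (n:ℝ) := by exact_mod_cast (show 0 < n by omega)
      exact Real.log_le_log hn0R (by exact_mod_cast Nat.le_succ n)
    have hc2 : Real.log 4 / Real.log ((n + 1 : ℕ) : ℝ) ≤ 2 := by
      have hl2 : Real.log 2 ≤ Real.log ((n + 1 : ℕ) : ℝ) :=
        Real.log_le_log (by norm_num) (by exact_mod_cast (show 2 ≤ n + 1 by omega))
      have := one_div_le_one_div_of_le hlog2 hl2
      calc Real.log 4 / Real.log ((n + 1 : ℕ) : ℝ)
          = Real.log 4 * (1 / Real.log ((n + 1 : ℕ) : ℝ)) := by rw [mul_one_div]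
        _ ≤ Real.log 4 * (1 / Real.log 2) := mul_le_mul_of_nonneg_left this hlog4'
        _ = 2 := hlog4
    linarith
  have := add_le_add hpart1 hpart2
  push_cast at this ⊢
  linarith


/-- Legendre's bound: `v_p(n!) ≤ (n-1)/(p-1)`. -/
lemma legendre_bound {p n : ℕ} (hp : p.Prime) (hn : 1 ≤ n) :
    ((n.factorial.factorization p : ℝ)) ≤ ((n : ℝ) - 1) * (1 / ((p : ℝ) - 1)) := by
  haveI := Fact.mk hp
  have h0 : (p - 1) * padicValNat p (n.factorial) = n - (p.digits n).sum :=
    sub_one_mul_padicValNat_factorial n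
  have hds : 1 ≤ (p.digits n).sum := digitsum_pos hp.two_le n (by omega)
  have hds2 : (p.digits n).sum ≤ n := Nat.digit_sum_le p n
  have h1 : (p - 1) * padicValNat p (n.factorial) ≤ n - 1 := by omega
  have h2 : ((p - 1 : ℕ) : ℝ) * (padicValNat p (n.factorial) : ℝ) ≤ ((n - 1 : ℕ) : ℝ) := by
    exact_mod_cast h1
  rw [Nat.cast_sub hp.one_le, Nat.cast_sub hn] at h2
  push_cast at h2
  have hp2 : (0:ℝ) < (p : ℝ) - 1 := by
    have : (2:ℝ) ≤ p := by exact_mod_cast hp.two_le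
    linarith
  rw [Nat.factorization_def _ hp, mul_one_div, le_div_iff₀ hp2]
  linarith

lemma sum_inv_sub_one_le (n : ℕ) (hn : 3 ≤ n) :
    ∑ p ∈ (Finset.range (n + 1)).filter Nat.Prime, 1 / ((p : ℝ) - 1) ≤
      Real.log (Real.log ((n : ℝ) - 1)) + 8 := by
  have hlog2 : (0:ℝ) < Real.log 2 := Real.log_pos (by norm_num)
  have h1 : ∑ p ∈ (Finset.range (n + 1)).filter Nat.Prime, 1 / ((p : ℝ) - 1)
      = (∑ p ∈ (Finset.range (n + 1)).filter Nat.Prime, 1 / (p : ℝ))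
        + ∑ p ∈ (Finset.range (n + 1)).filter Nat.Prime, (1 / ((p : ℝ) - 1) - 1 / p) := by
    rw [← Finset.sum_add_distrib]
    refine Finset.sum_congr rfl fun p _ => ?_
    ring
  have h2 : ∑ p ∈ (Finset.range (n + 1)).filter Nat.Prime, (1 / ((p : ℝ) - 1) - 1 / p) ≤ 1 := by
    have hsub : (Finset.range (n + 1)).filter Nat.Prime ⊆ Finset.Icc 2 n := by
      intro p hp
      have h := Finset.mem_filter.1 hp
      have := h.2.two_le
      have := Finset.mem_range.1 h.1
      exact Finset.mem_Icc.2 ⟨by omega, by omega⟩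
    have hnn : ∀ k ∈ Finset.Icc 2 n, (0:ℝ) ≤ 1 / ((k : ℝ) - 1) - 1 / k := by
      intro k hk
      have hk2 : 2 ≤ k := (Finset.mem_Icc.1 hk).1
      have hk2R : (2:ℝ) ≤ (k : ℝ) := by exact_mod_cast hk2
      have h1 : (0:ℝ) < (k : ℝ) - 1 := by linarith
      have h2 : (1:ℝ) / k ≤ 1 / ((k : ℝ) - 1) :=
        one_div_le_one_div_of_le h1 (by linarith)
      linarith
    have hle := Finset.sum_le_sum_of_subset_of_nonneg hsub
      (fun k hk _ => hnn k hk)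
    refine hle.trans ?_
    have heq : ∑ k ∈ Finset.Icc 2 n, (1 / ((k : ℝ) - 1) - 1 / k)
        = ∑ k ∈ Finset.Icc 2 n,
          ((fun k : ℕ => 1 / ((k : ℝ) - 1)) k - (fun k : ℕ => 1 / ((k : ℝ) - 1)) (k + 1)) := by
      refine Finset.sum_congr rfl fun k _ => ?_
      push_cast
      ring_nf
    rw [heq, sum_tele (fun k : ℕ => 1 / ((k : ℝ) - 1)) n 2 (by omega)]
    have hn0 : (0:ℝ) < ((n + 1 : ℕ) : ℝ) - 1 := by
      have : (3:ℝ) ≤ (n:ℝ) := by exact_mod_cast hn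
      push_cast
      linarith
    have : (0:ℝ) ≤ 1 / (((n + 1 : ℕ) : ℝ) - 1) := by positivity
    norm_num
    try linarith
  have h3 := sum_inv_primes_le n (by omega)
  -- log log (n+1) ≤ log log (n-1) + log 2
  have hn3R : (3:ℝ) ≤ (n : ℝ) := by exact_mod_cast hn
  have ha : (0:ℝ) < Real.log ((n:ℝ) - 1) := Real.log_pos (by linarith)
  have hb : (0:ℝ) < Real.log ((n:ℝ) + 1) := Real.log_pos (by linarith)
  have hsq : ((n:ℝ) + 1) ≤ ((n:ℝ) - 1) ^ 2 := by nlinarith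
  have h4 : Real.log ((n:ℝ) + 1) ≤ 2 * Real.log ((n:ℝ) - 1) := by
    have := Real.log_le_log (show (0:ℝ) < (n:ℝ) + 1 by linarith) hsq
    rwa [Real.log_pow, Nat.cast_ofNat] at this
  have h5 : Real.log (Real.log ((n:ℝ) + 1)) ≤
      Real.log 2 + Real.log (Real.log ((n:ℝ) - 1)) := by
    have := Real.log_le_log hb h4
    rwa [Real.log_mul (by norm_num) ha.ne'] at this
  -- - log log 2 ≤ 1
  have h6 : (1:ℝ) / 2 ≤ Real.log 2 := by
    have := one_sub_inv_le_log (show (0:ℝ) < 2 by norm_num)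
    linarith
  have h7 : -Real.log (Real.log 2) ≤ 1 := by
    have hi := one_sub_inv_le_log hlog2
    have : 1 / Real.log 2 ≤ 2 := by
      rw [div_le_iff₀ hlog2]
      linarith
    linarith
  have h8 : Real.log 2 ≤ 1 := by
    have := Real.log_le_sub_one_of_pos (show (0:ℝ) < 2 by norm_num)
    linarith
  rw [h1]
  linarith


end UpsilonAux

open UpsilonAux

theorem upsilon_upper_bound (n : ℕ) (hn : 2 ≤ n) :
    (Upsilon n : ℝ) <
      ((n : ℝ) - 1) * Real.log (Real.log ((n : ℝ) - 1)) + 21.181 * ((n : ℝ) - 1)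
        + (n : ℝ) / Real.log n + 1717433 * (n : ℝ) / (Real.log n) ^ 5 := by
  have hlog2 : (0:ℝ) < Real.log 2 := Real.log_pos (by norm_num)
  rcases eq_or_lt_of_le hn with h2 | h3
  · -- n = 2
    subst h2
    have hU : Upsilon 2 = 1 := by
      unfold Upsilon
      rw [show (Finset.range 3).filter Nat.Prime = {2} by decide]
      rw [Finset.sum_singleton, show Nat.factorial 2 = 2 from rfl,
        Nat.Prime.factorization_self Nat.prime_two]
    rw [hU]
    norm_num [Real.log_one, Real.log_zero]
    have h1 : (0:ℝ) < 2 / Real.log 2 := by positivity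
    have h2 : (0:ℝ) < 1717433 * 2 / (Real.log 2) ^ 5 := by positivity
    nlinarith
  · -- n ≥ 3
    have hn3 : 3 ≤ n := h3
    have hn1R : (0:ℝ) ≤ (n:ℝ) - 1 := by
      have : (3:ℝ) ≤ (n:ℝ) := by exact_mod_cast hn3
      linarith
    have hU : (Upsilon n : ℝ) ≤
        ((n : ℝ) - 1) * ∑ p ∈ (Finset.range (n + 1)).filter Nat.Prime, 1 / ((p : ℝ) - 1) := by
      rw [Finset.mul_sum]
      unfold Upsilon
      push_cast
      refine Finset.sum_le_sum fun p hp => ?_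
      exact legendre_bound (Finset.mem_filter.1 hp).2 (by omega)
    have hS := sum_inv_sub_one_le n hn3
    have hU2 : (Upsilon n : ℝ) ≤ ((n : ℝ) - 1) * (Real.log (Real.log ((n : ℝ) - 1)) + 8) :=
      hU.trans (mul_le_mul_of_nonneg_left hS hn1R)
    have hlogn : (0:ℝ) < Real.log n := Real.log_pos (by exact_mod_cast (show 1 < n by omega))
    have hp1 : (0:ℝ) < (n : ℝ) / Real.log n := by
      have : (0:ℝ) < (n:ℝ) := by exact_mod_cast (show 0 < n by omega)
      positivity
    have hp2 : (0:ℝ) < 1717433 * (n : ℝ) / (Real.log n) ^ 5 := by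
      have : (0:ℝ) < (n:ℝ) := by exact_mod_cast (show 0 < n by omega)
      positivity
    have h4 : (2:ℝ) ≤ (n:ℝ) - 1 := by
      have : (3:ℝ) ≤ (n:ℝ) := by exact_mod_cast hn3
      linarith
    nlinarith
end

section
/- For every integer n ≥ 3, the sum Υ(n) = Σ_{p ≤ n, p prime} v_p(n!) satisfies Υ(n) > (n−1)·log log n + c₈·(n−1) − n/log n − 16381·n/(5000·(log n)²) − 6·n/(log n)³ − 54281·n/(800·(log n)⁴) − c₁₀·log n, where c₈ = −11.869 and c₁₀ = 30.523 (the paper's effective constants c₈ ≈ −11.86870152 and c₁₀ ≈ 30.52238614). -/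
open Finset

/-- The completely multiplicative function `m ↦ (m : ℝ)⁻¹`. -/
noncomputable def natInvHom : ℕ →* ℝ where
  toFun := fun m => (m : ℝ)⁻¹
  map_one' := by simp
  map_mul' := fun m n => by push_cast; rw [mul_inv]

lemma harmonic_le_prod (n : ℕ) :
    ∑ m ∈ Finset.Icc 1 n, ((m : ℝ))⁻¹ ≤
      ∏ p ∈ (n + 1).primesBelow, (1 - (p : ℝ)⁻¹)⁻¹ := by
  have hlt : ∀ {p : ℕ}, p.Prime → ‖natInvHom p‖ < 1 := by
    intro p hp
    have h2 : (2 : ℝ) ≤ p := by exact_mod_cast hp.two_le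
    have : (0:ℝ) < p := by linarith
    simp only [natInvHom, MonoidHom.coe_mk, OneHom.coe_mk, Real.norm_eq_abs,
      abs_inv, Nat.abs_cast]
    rw [inv_lt_one_iff₀]
    right; linarith
  obtain ⟨hsum, hHasSum⟩ :=
    EulerProduct.summable_and_hasSum_smoothNumbers_prod_primesBelow_geometric
      (f := natInvHom) hlt (n + 1)
  have hprod : ∏ p ∈ (n + 1).primesBelow, (1 - natInvHom p)⁻¹ =
      ∏ p ∈ (n + 1).primesBelow, (1 - (p : ℝ)⁻¹)⁻¹ := rfl
  rw [← hprod, ← hHasSum.tsum_eq,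
    _root_.tsum_subtype ((n + 1).smoothNumbers) (fun m : ℕ => natInvHom m)]
  have hsummable : Summable fun m : (n + 1).smoothNumbers ↦ natInvHom m :=
    hHasSum.summable
  have hindsum : Summable ((n + 1).smoothNumbers.indicator (fun m : ℕ => natInvHom m)) :=
    summable_subtype_iff_indicator.mp hsummable
  have hnonneg : ∀ m : ℕ, 0 ≤ (n + 1).smoothNumbers.indicator (fun m : ℕ => natInvHom m) m := by
    intro m
    apply Set.indicator_nonneg
    intro a _
    simp only [natInvHom, MonoidHom.coe_mk, OneHom.coe_mk]
    positivity
  have hle : ∑ m ∈ Finset.Icc 1 n, (n + 1).smoothNumbers.indicator (fun m : ℕ => natInvHom m) m ≤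
      ∑' m, (n + 1).smoothNumbers.indicator (fun m : ℕ => natInvHom m) m :=
    Summable.sum_le_tsum _ (fun m _ => hnonneg m) hindsum
  refine le_trans (le_of_eq ?_) hle
  apply Finset.sum_congr rfl
  intro m hm
  rw [Finset.mem_Icc] at hm
  rw [Set.indicator_of_mem]
  · rfl
  · exact Nat.mem_smoothNumbers_of_lt (by omega) (by omega)

lemma sum_inv_mul_pred (n : ℕ) (hn : 1 ≤ n) :
    ∑ m ∈ Finset.Icc 2 n, ((m : ℝ) * ((m : ℝ) - 1))⁻¹ = 1 - (n : ℝ)⁻¹ := by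
  induction n with
  | zero => omega
  | succ n ih =>
    rcases Nat.lt_or_ge n 1 with h | h
    · interval_cases n
      simp
    · rw [Finset.sum_Icc_succ_top (by omega : 2 ≤ n + 1), ih h]
      have h1 : (1:ℝ) ≤ (n:ℝ) := by exact_mod_cast h
      have h0 : (n:ℝ) ≠ 0 := by linarith
      have h0' : (n:ℝ) + 1 ≠ 0 := by linarith
      push_cast
      field_simp
      ring_nf
      simp [h0]

lemma factorial_factorization_ge {p n : ℕ} (hp : p.Prime) (hpn : p ≤ n) :
    n / p ≤ (Nat.factorial n).factorization p := by
  rw [← Nat.Prime.pow_dvd_iff_le_factorization hp (Nat.factorial_ne_zero n)]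
  rw [Nat.Prime.pow_dvd_factorial_iff hp (Nat.lt_succ_self (Nat.log p n))]
  have h1 : 1 ∈ Finset.Ico 1 (Nat.log p n + 1) := by
    have := Nat.log_pos hp.one_lt hpn
    simp only [Finset.mem_Ico]
    omega
  have h2 := Finset.single_le_sum (f := fun i => n / p ^ i) (fun i _ => Nat.zero_le _) h1
  simpa using h2

lemma loglog_le_sum_inv_primes (n : ℕ) (hn : 3 ≤ n) :
    Real.log (Real.log n) ≤
      (∑ p ∈ (Finset.range (n + 1)).filter Nat.Prime, ((p : ℝ))⁻¹) + 1 := by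
  set P : Finset ℕ := (Finset.range (n + 1)).filter Nat.Prime with hP
  have hPmem : ∀ p ∈ P, p.Prime ∧ 2 ≤ p ∧ p ≤ n := by
    intro p hp
    rw [hP, Finset.mem_filter, Finset.mem_range] at hp
    exact ⟨hp.2, hp.2.two_le, by omega⟩
  have hfacpos : ∀ p ∈ P, (0:ℝ) < (1 - (p : ℝ)⁻¹)⁻¹ := by
    intro p hp
    obtain ⟨_, h2, _⟩ := hPmem p hp
    have h2' : (2:ℝ) ≤ p := by exact_mod_cast h2
    have : (p:ℝ)⁻¹ ≤ 2⁻¹ := by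
      apply inv_anti₀ <;> norm_num [h2']
    have : (0:ℝ) < 1 - (p:ℝ)⁻¹ := by linarith
    positivity
  -- log n ≤ harmonic sum
  have hH : Real.log n ≤ ∑ m ∈ Finset.Icc 1 n, ((m : ℝ))⁻¹ := by
    have h1 : Real.log n ≤ Real.log ((n - 1 : ℕ) + 1) := by
      apply Real.log_le_log (by positivity)
      have : ((n - 1 : ℕ) : ℝ) + 1 = n := by
        have : 1 ≤ n := by omega
        push_cast [this]
        ring
      rw [this]
    have h2 := log_add_one_le_harmonic (n - 1)
    have h3 : (harmonic (n - 1) : ℝ) = ∑ m ∈ Finset.Icc 1 (n - 1), ((m : ℝ))⁻¹ := by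
      rw [harmonic_eq_sum_Icc]
      push_cast
      rfl
    have h4 : ∑ m ∈ Finset.Icc 1 (n - 1), ((m : ℝ))⁻¹ ≤ ∑ m ∈ Finset.Icc 1 n, ((m : ℝ))⁻¹ := by
      apply Finset.sum_le_sum_of_subset_of_nonneg
      · apply Finset.Icc_subset_Icc le_rfl
        omega
      · intro m _ _
        positivity
    calc Real.log n ≤ Real.log ((n - 1 : ℕ) + 1) := h1
      _ ≤ (harmonic (n - 1) : ℝ) := by exact_mod_cast h2
      _ = _ := h3
      _ ≤ _ := h4
  have hHP : ∑ m ∈ Finset.Icc 1 n, ((m : ℝ))⁻¹ ≤ ∏ p ∈ P, (1 - (p : ℝ)⁻¹)⁻¹ := by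
    have := harmonic_le_prod n
    have hPB : (n + 1).primesBelow = P := rfl
    rwa [hPB] at this
  have hlogn_pos : 0 < Real.log n := Real.log_pos (by exact_mod_cast (by omega : 1 < n))
  have step1 : Real.log (Real.log n) ≤ Real.log (∏ p ∈ P, (1 - (p : ℝ)⁻¹)⁻¹) :=
    Real.log_le_log hlogn_pos (le_trans hH hHP)
  have step2 : Real.log (∏ p ∈ P, (1 - (p : ℝ)⁻¹)⁻¹) =
      ∑ p ∈ P, Real.log ((1 - (p : ℝ)⁻¹)⁻¹) :=
    Real.log_prod (fun p hp => ne_of_gt (hfacpos p hp))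
  have step3 : ∑ p ∈ P, Real.log ((1 - (p : ℝ)⁻¹)⁻¹) ≤
      ∑ p ∈ P, (((p : ℝ))⁻¹ + ((p : ℝ) * ((p : ℝ) - 1))⁻¹) := by
    apply Finset.sum_le_sum
    intro p hp
    obtain ⟨_, h2, _⟩ := hPmem p hp
    have h2' : (2:ℝ) ≤ p := by exact_mod_cast h2
    have hp0 : (0:ℝ) < p := by linarith
    have hp1 : (0:ℝ) < (p:ℝ) - 1 := by linarith
    have hx : (1 - (p : ℝ)⁻¹)⁻¹ = 1 + ((p : ℝ) - 1)⁻¹ := by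
      field_simp
      ring
    have hlog := Real.log_le_sub_one_of_pos (hfacpos p hp)
    rw [hx] at hlog ⊢
    have heq : ((p : ℝ) - 1)⁻¹ = ((p : ℝ))⁻¹ + ((p : ℝ) * ((p : ℝ) - 1))⁻¹ := by
      field_simp
      ring
    linarith [heq ▸ (by linarith : Real.log (1 + ((p:ℝ) - 1)⁻¹) ≤ ((p:ℝ) - 1)⁻¹)]
  have step4 : ∑ p ∈ P, ((p : ℝ) * ((p : ℝ) - 1))⁻¹ ≤ 1 := by
    have hsub : P ⊆ Finset.Icc 2 n := by
      intro p hp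
      obtain ⟨_, h2, h3⟩ := hPmem p hp
      rw [Finset.mem_Icc]
      exact ⟨h2, h3⟩
    have h5 : ∑ p ∈ P, ((p : ℝ) * ((p : ℝ) - 1))⁻¹ ≤
        ∑ m ∈ Finset.Icc 2 n, ((m : ℝ) * ((m : ℝ) - 1))⁻¹ := by
      apply Finset.sum_le_sum_of_subset_of_nonneg hsub
      intro m hm _
      rw [Finset.mem_Icc] at hm
      have : (2:ℝ) ≤ m := by exact_mod_cast hm.1
      have : (0:ℝ) < (m:ℝ) * ((m:ℝ) - 1) := by nlinarith
      positivity
    have h6 := sum_inv_mul_pred n (by omega)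
    have h7 : (0:ℝ) < (n:ℝ)⁻¹ := by
      have : (0:ℝ) < n := by exact_mod_cast (by omega : 0 < n)
      positivity
    linarith
  rw [Finset.sum_add_distrib] at step3
  linarith

theorem upsilon_lower_bound (n : ℕ) (hn : 3 ≤ n) :
    (Upsilon n : ℝ) >
      ((n : ℝ) - 1) * Real.log (Real.log n) + (-11.869) * ((n : ℝ) - 1)
        - (n : ℝ) / Real.log n - 16381 * (n : ℝ) / (5000 * (Real.log n) ^ 2)
        - 6 * (n : ℝ) / (Real.log n) ^ 3 - 54281 * (n : ℝ) / (800 * (Real.log n) ^ 4)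
        - 30.523 * Real.log n := by
  set P : Finset ℕ := (Finset.range (n + 1)).filter Nat.Prime with hP
  set L := Real.log n with hLdef
  set LL := Real.log L with hLLdef
  have hn3 : (3:ℝ) ≤ n := by exact_mod_cast hn
  have hn0 : (0:ℝ) < n := by linarith
  have hL1 : 1 ≤ L := by
    rw [hLdef, Real.le_log_iff_exp_le (by linarith)]
    have := Real.exp_one_lt_d9
    linarith
  have hLL0 : 0 ≤ LL := Real.log_nonneg hL1
  have hL0 : 0 < L := by linarith
  -- sum of reciprocals of primes
  set S := ∑ p ∈ P, ((p : ℝ))⁻¹ with hS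
  have hSll : LL ≤ S + 1 := loglog_le_sum_inv_primes n hn
  -- Upsilon lower bound
  have hUp1 : ∑ p ∈ P, n / p ≤ Upsilon n := by
    apply Finset.sum_le_sum
    intro p hp
    rw [hP, Finset.mem_filter, Finset.mem_range] at hp
    exact factorial_factorization_ge hp.2 (by omega)
  have hUp2 : (∑ p ∈ P, ((n / p : ℕ) : ℝ)) ≤ (Upsilon n : ℝ) := by
    rw [← Nat.cast_sum]
    exact_mod_cast hUp1
  have hterm : ∀ p ∈ P, (n : ℝ) * ((p : ℝ))⁻¹ - 1 ≤ ((n / p : ℕ) : ℝ) := by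
    intro p hp
    rw [hP, Finset.mem_filter, Finset.mem_range] at hp
    have hppos : 0 < p := hp.2.pos
    have hmod : n % p < p := Nat.mod_lt _ hppos
    have hdm : p * (n / p) + n % p = n := Nat.div_add_mod n p
    have h1 : n < p * (n / p + 1) := by
      have : p * (n / p + 1) = p * (n / p) + p := by ring
      omega
    have h1r : (n : ℝ) < (p : ℝ) * (((n / p : ℕ) : ℝ) + 1) := by exact_mod_cast h1
    have hp0 : (0:ℝ) < p := by exact_mod_cast hppos
    have hpinv : (p : ℝ) * ((p : ℝ))⁻¹ = 1 := mul_inv_cancel₀ (ne_of_gt hp0)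
    have hpinv0 : (0:ℝ) < ((p : ℝ))⁻¹ := by positivity
    nlinarith [mul_lt_mul_of_pos_right h1r hpinv0]
  have hsum : (n : ℝ) * S - (P.card : ℝ) ≤ ∑ p ∈ P, ((n / p : ℕ) : ℝ) := by
    have := Finset.sum_le_sum hterm
    calc (n : ℝ) * S - (P.card : ℝ)
        = ∑ p ∈ P, ((n : ℝ) * ((p : ℝ))⁻¹ - 1) := by
          rw [Finset.sum_sub_distrib, Finset.sum_const, ← Finset.mul_sum]
          simp [hS]
      _ ≤ _ := this
  have hcard : (P.card : ℝ) ≤ (n : ℝ) := by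
    have hsub : P ⊆ Finset.Icc 2 n := by
      intro p hp
      rw [hP, Finset.mem_filter, Finset.mem_range] at hp
      rw [Finset.mem_Icc]
      exact ⟨hp.2.two_le, by omega⟩
    have := Finset.card_le_card hsub
    rw [Nat.card_Icc] at this
    have : P.card ≤ n := by omega
    exact_mod_cast this
  -- combine
  have hmain : (n : ℝ) * LL - 2 * (n : ℝ) ≤ (Upsilon n : ℝ) := by
    have h1 : (n : ℝ) * LL ≤ (n : ℝ) * (S + 1) :=
      mul_le_mul_of_nonneg_left hSll (by linarith)
    nlinarith
  -- RHS estimates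
  have ht1 : 0 < (n : ℝ) / L := by positivity
  have ht2 : 0 < 16381 * (n : ℝ) / (5000 * L ^ 2) := by positivity
  have ht3 : 0 < 6 * (n : ℝ) / L ^ 3 := by positivity
  have ht4 : 0 < 54281 * (n : ℝ) / (800 * L ^ 4) := by positivity
  have ht5 : (0:ℝ) < 30.523 * L := by positivity
  have hexp : ((n : ℝ) - 1) * LL = (n : ℝ) * LL - LL := by ring
  linarith
end

section
/- There exists a constant C > 0 such that for every integer n ≥ 3, |Υ(n) − n·log log n| ≤ C·n; that is, Υ(n) = n·log log n + O(n). -/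
open Finset

namespace UpsilonProof

/-- telescoping sum helper -/
lemma telescope (f : ℕ → ℝ) {m n : ℕ} (h : m ≤ n) :
    ∑ i ∈ Ico m n, (f (i + 1) - f i) = f n - f m := by
  rw [Finset.sum_Ico_eq_sub _ h, Finset.sum_range_sub, Finset.sum_range_sub]
  ring

/-- Legendre's formula -/
lemma legendre {p n b : ℕ} (hp : p.Prime) (hb : Nat.log p n < b) :
    (n.factorial).factorization p = ∑ i ∈ Ico 1 b, n / p ^ i := by
  haveI : Fact p.Prime := ⟨hp⟩
  rw [Nat.factorization_def _ hp, padicValNat_factorial hb]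

lemma v_lower {p n : ℕ} (hp : p.Prime) (hpn : p ≤ n) :
    (n : ℝ) / p - 1 ≤ ((n.factorial).factorization p : ℝ) := by
  rw [legendre hp (lt_add_one _)]
  have h1 : (1 : ℕ) ∈ Ico 1 (Nat.log p n + 1) := by
    simp only [Finset.mem_Ico, Nat.lt_add_one_iff]
    exact ⟨le_refl 1, Nat.log_pos hp.one_lt hpn⟩
  have hle : n / p ^ 1 ≤ ∑ i ∈ Ico 1 (Nat.log p n + 1), n / p ^ i :=
    Finset.single_le_sum (f := fun i => n / p ^ i) (fun i _ => Nat.zero_le _) h1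
  have hp0 : (0 : ℝ) < p := by exact_mod_cast hp.pos
  have hcast : (n : ℝ) = p * ((n / p : ℕ) : ℝ) + ((n % p : ℕ) : ℝ) := by
    exact_mod_cast (Nat.div_add_mod n p).symm
  have hmod : ((n % p : ℕ) : ℝ) < (p : ℝ) := by exact_mod_cast Nat.mod_lt _ hp.pos
  have key : (n : ℝ) / p - 1 ≤ ((n / p ^ 1 : ℕ) : ℝ) := by
    rw [pow_one, div_sub' hp0.ne', div_le_iff₀ hp0]
    nlinarith [Nat.cast_nonneg (α := ℝ) (n / p)]
  exact key.trans (by exact_mod_cast hle)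

lemma v_upper {p n : ℕ} (hp : p.Prime) :
    ((n.factorial).factorization p : ℝ) ≤ n / ((p : ℝ) - 1) := by
  rw [legendre hp (lt_add_one _)]
  set b := Nat.log p n + 1 with hbdef
  have hp1 : (1 : ℝ) < p := by exact_mod_cast hp.one_lt
  have hp0 : (0 : ℝ) < p := lt_trans one_pos hp1
  push_cast
  have step1 : ∀ i ∈ Ico 1 b, ((n / p ^ i : ℕ) : ℝ) ≤ (n : ℝ) * ((p : ℝ)⁻¹) ^ i := by
    intro i _
    rw [inv_pow, ← div_eq_mul_inv]
    calc ((n / p ^ i : ℕ) : ℝ) ≤ (n : ℝ) / ((p ^ i : ℕ) : ℝ) := Nat.cast_div_le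
      _ = (n : ℝ) / (p : ℝ) ^ i := by norm_cast
  have geom : ∑ i ∈ Ico 1 b, ((p : ℝ)⁻¹) ^ i ≤ 1 / ((p : ℝ) - 1) := by
    set r := (p : ℝ)⁻¹ with hr
    have hr0 : 0 < r := by positivity
    have hr1 : r < 1 := by rw [hr]; exact inv_lt_one_of_one_lt₀ hp1
    have hsum : ∑ i ∈ Ico 1 b, r ^ i = r * ∑ j ∈ range (b - 1), r ^ j := by
      rw [Finset.sum_Ico_eq_sum_range, Finset.mul_sum]
      apply Finset.sum_congr rfl
      intro j _
      rw [pow_add, pow_one]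
    rw [hsum]
    have h1r : (0:ℝ) < 1 - r := by linarith
    have hgeo : ∑ j ∈ range (b - 1), r ^ j ≤ 1 / (1 - r) := by
      rw [geom_sum_eq hr1.ne]
      have heq : (r ^ (b - 1) - 1) / (r - 1) = (1 - r ^ (b - 1)) / (1 - r) := by
        rw [← neg_div_neg_eq]; ring_nf
      rw [heq, div_le_div_iff_of_pos_right h1r]
      nlinarith [pow_nonneg hr0.le (b - 1)]
    calc r * ∑ j ∈ range (b - 1), r ^ j ≤ r * (1 / (1 - r)) := by
          exact mul_le_mul_of_nonneg_left hgeo hr0.le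
      _ = 1 / ((p : ℝ) - 1) := by
          rw [hr]; field_simp
  calc ∑ i ∈ Ico 1 b, ((n / p ^ i : ℕ) : ℝ) ≤ ∑ i ∈ Ico 1 b, (n : ℝ) * ((p : ℝ)⁻¹) ^ i :=
        Finset.sum_le_sum step1
    _ = (n : ℝ) * ∑ i ∈ Ico 1 b, ((p : ℝ)⁻¹) ^ i := by rw [Finset.mul_sum]
    _ ≤ (n : ℝ) * (1 / ((p : ℝ) - 1)) :=
        mul_le_mul_of_nonneg_left geom (Nat.cast_nonneg n)
    _ = n / ((p : ℝ) - 1) := by ring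


/-- log n! as a sum over primes up to n -/
lemma log_factorial_eq (n : ℕ) :
    Real.log (n.factorial) =
      ∑ p ∈ (range (n + 1)).filter Nat.Prime,
        ((n.factorial).factorization p : ℝ) * Real.log p := by
  conv_lhs => rw [← Nat.factorization_prod_pow_eq_self (Nat.factorial_ne_zero n)]
  rw [Finsupp.prod]
  push_cast
  rw [Real.log_prod (fun p hp => by
    have hp' : p.Prime := Nat.prime_of_mem_primeFactors (by
      rwa [← Nat.support_factorization])
    exact pow_ne_zero _ (by exact_mod_cast hp'.pos.ne'))]
  have hterm : ∀ p ∈ (n.factorial).factorization.support,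
      Real.log ((p : ℝ) ^ (n.factorial).factorization p)
        = ((n.factorial).factorization p : ℝ) * Real.log p := by
    intro p _
    rw [Real.log_pow]
  rw [Finset.sum_congr rfl hterm]
  apply Finset.sum_subset
  · intro p hps
    have hp' : p.Prime := Nat.prime_of_mem_primeFactors (by rwa [← Nat.support_factorization])
    have hdvd : p ∣ n.factorial := Nat.dvd_of_mem_primeFactors (by
      rwa [← Nat.support_factorization])
    have hle : p ≤ n := (Nat.Prime.dvd_factorial hp').mp hdvd
    simp only [Finset.mem_filter, Finset.mem_range]
    exact ⟨Nat.lt_add_one_of_le hle, hp'⟩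
  · intro p _ hps
    rw [Finsupp.notMem_support_iff.mp hps]
    simp

/-- Chebyshev-type bound -/
lemma theta_le (n : ℕ) :
    ∑ p ∈ (range (n + 1)).filter Nat.Prime, Real.log p ≤ Real.log 4 * n := by
  have h1 : Real.log (primorial n) ≤ Real.log ((4 : ℕ) ^ n) :=
    Real.log_le_log (by exact_mod_cast primorial_pos n) (by exact_mod_cast primorial_le_4_pow n)
  have h2 : Real.log ((primorial n : ℕ) : ℝ)
      = ∑ p ∈ (range (n + 1)).filter Nat.Prime, Real.log p := by
    rw [primorial]
    push_cast
    rw [Real.log_prod]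
    intro p hp
    have hp' : p.Prime := (Finset.mem_filter.mp hp).2
    exact_mod_cast hp'.pos.ne'
  rw [h2] at h1
  calc ∑ p ∈ (range (n + 1)).filter Nat.Prime, Real.log p
      ≤ Real.log ((4 : ℕ) ^ n) := h1
    _ = Real.log 4 * n := by push_cast; rw [Real.log_pow]; push_cast; ring

lemma log_factorial_le (n : ℕ) : Real.log (n.factorial) ≤ n * Real.log n := by
  calc Real.log (n.factorial) ≤ Real.log ((n : ℝ) ^ n) := by
        apply Real.log_le_log (by exact_mod_cast n.factorial_pos)
        exact_mod_cast Nat.factorial_le_pow n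
    _ = n * Real.log n := by rw [Real.log_pow]

lemma log_factorial_ge {n : ℕ} (hn : 1 ≤ n) :
    (n : ℝ) * Real.log n - n ≤ Real.log (n.factorial) := by
  have hn0 : (0 : ℝ) < n := by exact_mod_cast hn
  have h := Real.pow_div_factorial_le_exp (n : ℝ) (le_of_lt hn0) n
  have hfac : (0 : ℝ) < (n.factorial : ℝ) := by exact_mod_cast n.factorial_pos
  have hlog := Real.log_le_log (by positivity) h
  rw [Real.log_div (by positivity) hfac.ne', Real.log_exp, Real.log_pow] at hlog
  linarith

/-- telescoping: `∑_{k=2}^{n} 1/(k(k-1)) ≤ 1` -/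
lemma sum_one_div_mul_le : ∀ n : ℕ, ∑ k ∈ Ico 2 (n + 1), (1 : ℝ) / (k * ((k : ℝ) - 1)) ≤ 1 := by
  have key : ∀ n : ℕ, 1 ≤ n → ∑ k ∈ Ico 2 (n + 1), (1 : ℝ) / (k * ((k : ℝ) - 1)) = 1 - 1 / n := by
    intro n hn
    induction n with
    | zero => omega
    | succ m ih =>
      rcases Nat.eq_or_lt_of_le hn with h1 | h1
      · simp [← h1]
      · have hm : 1 ≤ m := by omega
        have hm0 : (0 : ℝ) < m := by exact_mod_cast hm
        rw [Finset.sum_Ico_succ_top (by omega), ih hm]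
        push_cast
        field_simp
        rw [add_sub_cancel_right, div_self hm0.ne']; ring
  intro n
  rcases Nat.eq_zero_or_pos n with rfl | hn
  · simp
  · rw [key n hn]
    have : (0 : ℝ) < n := by exact_mod_cast hn
    have : 0 < 1 / (n : ℝ) := by positivity
    linarith


lemma log_le_two_sqrt {x : ℝ} (hx : 1 ≤ x) : Real.log x ≤ 2 * Real.sqrt x := by
  have hs : 0 < Real.sqrt x := Real.sqrt_pos.mpr (by linarith)
  have h1 : Real.log (Real.sqrt x) ≤ Real.sqrt x - 1 := Real.log_le_sub_one_of_pos hs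
  have h2 : Real.log (Real.sqrt x) = Real.log x / 2 := Real.log_sqrt (by linarith)
  rw [h2] at h1
  linarith

/-- `∑_{k=2}^{n} log k/(k(k-1)) ≤ 8` -/
lemma sum_log_div_mul_le : ∀ n : ℕ,
    ∑ k ∈ Ico 2 (n + 1), Real.log k / (k * ((k : ℝ) - 1)) ≤ 8 := by
  have key : ∀ n : ℕ, 1 ≤ n →
      ∑ k ∈ Ico 2 (n + 1), Real.log k / (k * ((k : ℝ) - 1)) ≤ 8 - 8 / Real.sqrt n := by
    intro n hn
    induction n with
    | zero => omega
    | succ m ih =>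
      rcases Nat.eq_or_lt_of_le hn with h1 | h1
      · rw [← h1]
        norm_num
      · have hm : 1 ≤ m := by omega
        have hm0 : (0 : ℝ) < m := by exact_mod_cast hm
        have hm1 : (1 : ℝ) ≤ m := by exact_mod_cast hm
        rw [Finset.sum_Ico_succ_top (by omega)]
        have step : Real.log (m + 1) / ((m + 1 : ℕ) * (((m + 1 : ℕ) : ℝ) - 1))
            ≤ 8 / Real.sqrt m - 8 / Real.sqrt (m + 1) := by
          push_cast
          set s := Real.sqrt m with hs
          set t := Real.sqrt (m + 1) with ht
          have hs2 : s ^ 2 = m := Real.sq_sqrt hm0.le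
          have ht2 : t ^ 2 = (m : ℝ) + 1 := Real.sq_sqrt (by linarith)
          have hs0 : 0 < s := Real.sqrt_pos.mpr hm0
          have ht0 : 0 < t := Real.sqrt_pos.mpr (by linarith)
          have hst : s ≤ t := Real.sqrt_le_sqrt (by linarith)
          have hs1 : 1 ≤ s := by
            rw [hs]
            have := Real.sqrt_le_sqrt hm1
            simpa using this
          have hts : t ≤ 3 * s := by nlinarith
          have hlog : Real.log ((m : ℝ) + 1) ≤ 2 * t := by
            have := log_le_two_sqrt (x := (m : ℝ) + 1) (by linarith)
            rw [← ht] at this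
            exact this
          have hrhs : 8 / s - 8 / t = 8 * (t - s) / (s * t) := by
            field_simp
          rw [hrhs, show ((m : ℝ) + 1 - 1) = (m : ℝ) by ring]
          have hlhs : Real.log ((m : ℝ) + 1) / (((m : ℝ) + 1) * m)
              ≤ 2 * t / (t ^ 2 * s ^ 2) := by
            rw [ht2, hs2]
            exact div_le_div_of_nonneg_right hlog (by positivity)
          apply hlhs.trans
          rw [div_le_div_iff₀ (by positivity) (by positivity)]
          have hdiff : (t - s) * (t + s) = 1 := by nlinarith
          have hpos : (0:ℝ) < t + s := by linarith
          rw [← mul_le_mul_iff_of_pos_right hpos]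
          calc 2 * t * (s * t) * (t + s) ≤ 2 * t * (s * t) * (4 * s) := by
                apply mul_le_mul_of_nonneg_left (by linarith) (by positivity)
            _ = 8 * s ^ 2 * t ^ 2 := by ring
            _ = 8 * (t - s) * (t ^ 2 * s ^ 2) * (t + s) := by
                linear_combination (-8 * s ^ 2 * t ^ 2) * hdiff
        have ihm := ih hm
        push_cast at step ihm ⊢
        linarith
  intro n
  rcases Nat.eq_zero_or_pos n with rfl | hn
  · simp
  · refine (key n hn).trans ?_
    have h0 : (0 : ℝ) < Real.sqrt n := Real.sqrt_pos.mpr (by exact_mod_cast hn)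
    have : 0 < 8 / Real.sqrt n := by positivity
    linarith


noncomputable def A (n : ℕ) : ℝ :=
  ∑ p ∈ (range (n + 1)).filter Nat.Prime, Real.log p / p

noncomputable def S (n : ℕ) : ℝ :=
  ∑ p ∈ (range (n + 1)).filter Nat.Prime, 1 / (p : ℝ)



lemma filter_subset_Ico (n : ℕ) :
    (range (n + 1)).filter Nat.Prime ⊆ Ico 2 (n + 1) := by
  intro p hp
  rw [Finset.mem_filter, Finset.mem_range] at hp
  rw [Finset.mem_Ico]
  exact ⟨hp.2.two_le, hp.1⟩

/-- sum over primes of `log p/(p(p-1))` is at most 8 -/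
lemma prime_sum_log_div_le (n : ℕ) :
    ∑ p ∈ (range (n + 1)).filter Nat.Prime, Real.log p / (p * ((p : ℝ) - 1)) ≤ 8 := by
  refine le_trans (Finset.sum_le_sum_of_subset_of_nonneg (filter_subset_Ico n) ?_)
    (sum_log_div_mul_le n)
  intro k hk _
  rw [Finset.mem_Ico] at hk
  have h2 : (2 : ℝ) ≤ k := by exact_mod_cast hk.1
  have : (0:ℝ) < k * ((k:ℝ) - 1) := by nlinarith
  have hl : 0 ≤ Real.log k := Real.log_nonneg (by linarith)
  positivity

lemma prime_sum_one_div_le (n : ℕ) :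
    ∑ p ∈ (range (n + 1)).filter Nat.Prime, 1 / ((p : ℝ) * ((p : ℝ) - 1)) ≤ 1 := by
  refine le_trans (Finset.sum_le_sum_of_subset_of_nonneg (filter_subset_Ico n) ?_)
    (sum_one_div_mul_le n)
  intro k hk _
  rw [Finset.mem_Ico] at hk
  have h2 : (2 : ℝ) ≤ k := by exact_mod_cast hk.1
  have : (0:ℝ) < k * ((k:ℝ) - 1) := by nlinarith
  positivity

/-- Mertens' first theorem with explicit constant 9. -/
lemma mertens_first {n : ℕ} (hn : 1 ≤ n) : |A n - Real.log n| ≤ 9 := by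
  have hn0 : (0 : ℝ) < n := by exact_mod_cast hn
  set F := (range (n + 1)).filter Nat.Prime with hF
  have hmem : ∀ p ∈ F, p.Prime ∧ p ≤ n := by
    intro p hp
    rw [hF, Finset.mem_filter, Finset.mem_range] at hp
    exact ⟨hp.2, by omega⟩
  -- upper bound on log n!
  have hub : Real.log (n.factorial) ≤ n * A n + 8 * n := by
    rw [log_factorial_eq n]
    have hbound : ∀ p ∈ F, ((n.factorial).factorization p : ℝ) * Real.log p
        ≤ n * (Real.log p / p) + n * (Real.log p / (p * ((p : ℝ) - 1))) := by
      intro p hp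
      obtain ⟨hpp, hpn⟩ := hmem p hp
      have hp2 : (2 : ℝ) ≤ p := by exact_mod_cast hpp.two_le
      have hlp : 0 ≤ Real.log p := Real.log_nonneg (by linarith)
      have hv := v_upper (n := n) hpp
      have hpne : (p : ℝ) ≠ 0 := by linarith
      have hp1ne : (p : ℝ) - 1 ≠ 0 := by linarith
      have heq : (n : ℝ) / ((p : ℝ) - 1) * Real.log p
          = n * (Real.log p / p) + n * (Real.log p / (p * ((p : ℝ) - 1))) := by
        field_simp
        ring
      rw [← heq]
      exact mul_le_mul_of_nonneg_right hv hlp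
    calc ∑ p ∈ F, ((n.factorial).factorization p : ℝ) * Real.log p
        ≤ ∑ p ∈ F, (n * (Real.log p / p) + n * (Real.log p / (p * ((p : ℝ) - 1)))) :=
          Finset.sum_le_sum hbound
      _ = n * A n + n * ∑ p ∈ F, Real.log p / (p * ((p : ℝ) - 1)) := by
          rw [Finset.sum_add_distrib, ← Finset.mul_sum, ← Finset.mul_sum, A]
      _ ≤ n * A n + n * 8 := by
          have := prime_sum_log_div_le n
          nlinarith
      _ = n * A n + 8 * n := by ring
  -- lower bound on log n!
  have hlb : n * A n - Real.log 4 * n ≤ Real.log (n.factorial) := by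
    rw [log_factorial_eq n]
    have hbound : ∀ p ∈ F, n * (Real.log p / p) - Real.log p
        ≤ ((n.factorial).factorization p : ℝ) * Real.log p := by
      intro p hp
      obtain ⟨hpp, hpn⟩ := hmem p hp
      have hp2 : (2 : ℝ) ≤ p := by exact_mod_cast hpp.two_le
      have hlp : 0 ≤ Real.log p := Real.log_nonneg (by linarith)
      have hv := v_lower hpp hpn
      have heq : n * (Real.log p / p) - Real.log p = ((n : ℝ) / p - 1) * Real.log p := by
        ring
      rw [heq]
      exact mul_le_mul_of_nonneg_right hv hlp
    calc n * A n - Real.log 4 * n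
        ≤ n * A n - ∑ p ∈ F, Real.log p := by
          have := theta_le n
          linarith
      _ = ∑ p ∈ F, (n * (Real.log p / p) - Real.log p) := by
          rw [Finset.sum_sub_distrib, ← Finset.mul_sum, A]
      _ ≤ ∑ p ∈ F, ((n.factorial).factorization p : ℝ) * Real.log p :=
          Finset.sum_le_sum hbound
  have h1 := log_factorial_le n
  have h2 := log_factorial_ge hn
  have hlog4 : Real.log 4 ≤ 3 := by
    have := Real.log_le_sub_one_of_pos (x := 4) (by norm_num)
    linarith
  rw [abs_le]
  constructor
  · -- A n - log n ≥ -9 : from n A n ≥ log n! - 8n ≥ n log n - 9n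
    have : n * A n ≥ n * Real.log n - 9 * n := by nlinarith
    rw [ge_iff_le, ← sub_nonneg] at this
    have h9 : 0 ≤ n * (A n - Real.log n + 9) := by nlinarith
    nlinarith
  · -- A n - log n ≤ log 4 ≤ 9 : from n A n ≤ log n! + log4 n ≤ n log n + log4 n
    have : n * A n ≤ n * Real.log n + Real.log 4 * n := by nlinarith
    nlinarith


lemma S_succ (n : ℕ) :
    S (n + 1) = S n + (if (n + 1).Prime then 1 / (((n + 1 : ℕ)) : ℝ) else 0) := by
  rw [S, S, Finset.sum_filter, Finset.sum_filter, Finset.sum_range_succ]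

lemma A_succ (n : ℕ) :
    A (n + 1) = A n + (if (n + 1).Prime then Real.log ((n + 1 : ℕ)) / ((n + 1 : ℕ) : ℝ) else 0) := by
  rw [A, A, Finset.sum_filter, Finset.sum_filter, Finset.sum_range_succ]

/-- Abel summation identity. -/
lemma abel : ∀ n : ℕ, 2 ≤ n →
    S n = A n / Real.log n
      + ∑ m ∈ Ico 2 n, A m * (1 / Real.log m - 1 / Real.log (m + 1)) := by
  intro n hn
  induction n with
  | zero => omega
  | succ k ih =>
    rcases Nat.eq_or_lt_of_le hn with h1 | h1
    · -- k + 1 = 2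
      have hk : k = 1 := by omega
      subst hk
      have h2 : Real.log ((2 : ℕ) : ℝ) ≠ 0 := ne_of_gt (Real.log_pos (by norm_num))
      rw [S, A]
      norm_num [Finset.sum_filter, Finset.sum_range_succ, Nat.prime_two,
        Nat.not_prime_one, Nat.not_prime_zero]
      rw [div_div_cancel_left']
      · norm_num
      · exact_mod_cast h2
    · have hk : 2 ≤ k := by omega
      have ihh := ih hk
      have hkR : (2 : ℝ) ≤ (k : ℝ) := by exact_mod_cast hk
      have hLk : Real.log ((k : ℕ) : ℝ) ≠ 0 := ne_of_gt (Real.log_pos (by push_cast; linarith))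
      have hLk1 : Real.log (((k + 1 : ℕ)) : ℝ) ≠ 0 := by
        apply ne_of_gt (Real.log_pos (by push_cast; linarith))
      rw [S_succ, A_succ, Finset.sum_Ico_succ_top hk, ihh]
      set w := (if (k + 1).Prime then Real.log ((k + 1 : ℕ)) / ((k + 1 : ℕ) : ℝ) else 0) with hw
      have key : (if (k + 1).Prime then 1 / (((k + 1 : ℕ)) : ℝ) else 0)
          = w / Real.log ((k + 1 : ℕ)) := by
        rw [hw]
        split
        · field_simp
        · simp
      rw [key, add_div]
      push_cast
      ring




noncomputable def c2 : ℝ :=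
  1 + |Real.log (Real.log 2)| + 1 / (Real.log 2) ^ 2 + 18 / Real.log 2

lemma log2_pos : (0 : ℝ) < Real.log 2 := Real.log_pos one_lt_two

/-- per-term bounds in the Abel sum -/
lemma term_bounds {m : ℕ} (hm : 2 ≤ m) :
    Real.log (Real.log ((m : ℝ) + 1)) - Real.log (Real.log m)
        - 1 / ((m : ℝ) ^ 2 * (Real.log 2) ^ 2)
      ≤ Real.log m * (1 / Real.log m - 1 / Real.log ((m : ℝ) + 1))
    ∧ Real.log m * (1 / Real.log m - 1 / Real.log ((m : ℝ) + 1))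
      ≤ Real.log (Real.log ((m : ℝ) + 1)) - Real.log (Real.log m) := by
  have hm2 : (2 : ℝ) ≤ m := by exact_mod_cast hm
  have hm0 : (0 : ℝ) < m := by linarith
  set a := Real.log (m : ℝ) with ha
  set b := Real.log ((m : ℝ) + 1) with hb
  have hl2a : Real.log 2 ≤ a := Real.log_le_log (by norm_num) hm2
  have ha0 : 0 < a := lt_of_lt_of_le log2_pos hl2a
  have hab : a ≤ b := Real.log_le_log hm0 (by linarith)
  have hb0 : 0 < b := lt_of_lt_of_le ha0 hab
  have hd : b - a ≤ 1 / m := by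
    have hba : b - a = Real.log (((m : ℝ) + 1) / m) := by
      rw [Real.log_div (by linarith) (by linarith)]
    rw [hba]
    have := Real.log_le_sub_one_of_pos (x := ((m : ℝ) + 1) / m) (by positivity)
    calc Real.log (((m : ℝ) + 1) / m) ≤ ((m : ℝ) + 1) / m - 1 := this
      _ = 1 / m := by field_simp; ring
  have hteq : a * (1 / a - 1 / b) = 1 - a / b := by field_simp
  -- L = log b - log a
  have hL_up : Real.log b - Real.log a ≤ (b - a) / a := by
    have h1 : Real.log (b / a) ≤ b / a - 1 := Real.log_le_sub_one_of_pos (by positivity)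
    rw [Real.log_div hb0.ne' ha0.ne'] at h1
    have : b / a - 1 = (b - a) / a := by field_simp
    linarith [this ▸ h1]
  have hL_lo : 1 - a / b ≤ Real.log b - Real.log a := by
    have h1 : Real.log (a / b) ≤ a / b - 1 := Real.log_le_sub_one_of_pos (by positivity)
    rw [Real.log_div ha0.ne' hb0.ne'] at h1
    linarith
  constructor
  · -- lower bound: L - error ≤ t
    rw [hteq]
    have hgap : (b - a) / a - (1 - a / b) = (b - a) ^ 2 / (a * b) := by
      field_simp
    have h1 : (b - a) ^ 2 ≤ (1 / (m : ℝ)) ^ 2 := by nlinarith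
    have h2 : Real.log 2 * Real.log 2 ≤ a * b :=
      mul_le_mul hl2a (le_trans hl2a hab) log2_pos.le ha0.le
    have h3 : (b - a) ^ 2 / (a * b) ≤ (1 / (m : ℝ)) ^ 2 / (Real.log 2 * Real.log 2) :=
      div_le_div₀ (by positivity) h1 (by positivity) h2
    have h4 : (1 / (m : ℝ)) ^ 2 / (Real.log 2 * Real.log 2)
        = 1 / ((m : ℝ) ^ 2 * (Real.log 2) ^ 2) := by
      field_simp
    rw [h4] at h3
    linarith [hgap ▸ h3]
  · rw [hteq]
    linarith

lemma sum_sq_le (n : ℕ) : ∑ m ∈ Ico 2 n, 1 / ((m : ℝ)) ^ 2 ≤ 1 := by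
  refine le_trans (le_trans (Finset.sum_le_sum ?_)
    (Finset.sum_le_sum_of_subset_of_nonneg
      (Finset.Ico_subset_Ico le_rfl (Nat.le_succ n)) ?_)) (sum_one_div_mul_le n)
  · intro m hm
    rw [Finset.mem_Ico] at hm
    have h2 : (2 : ℝ) ≤ m := by exact_mod_cast hm.1
    rw [div_le_div_iff₀ (by positivity) (by nlinarith)]
    nlinarith
  · intro k hk _
    rw [Finset.mem_Ico] at hk
    have h2 : (2 : ℝ) ≤ k := by exact_mod_cast hk.1
    have : (0:ℝ) < k * ((k:ℝ) - 1) := by nlinarith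
    positivity

lemma mertens_second {n : ℕ} (hn : 2 ≤ n) :
    |S n - Real.log (Real.log n)| ≤ c2 := by
  have hnR : (2 : ℝ) ≤ n := by exact_mod_cast hn
  have hLn : Real.log 2 ≤ Real.log n := Real.log_le_log (by norm_num) hnR
  have hLn0 : 0 < Real.log (n : ℝ) := lt_of_lt_of_le log2_pos hLn
  rw [abel n hn]
  -- head term
  have hhead : |A n / Real.log (n : ℝ) - 1| ≤ 9 / Real.log 2 := by
    have h1 : A n / Real.log (n : ℝ) - 1 = (A n - Real.log n) / Real.log n := by
      field_simp
    rw [h1, abs_div, abs_of_pos hLn0]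
    apply div_le_div₀ (by positivity) (mertens_first (by omega)) log2_pos hLn
  -- decompose the sum
  set T := ∑ m ∈ Ico 2 n, A m * (1 / Real.log (m : ℝ) - 1 / Real.log ((m : ℝ) + 1)) with hT
  set g : ℕ → ℝ := fun m => Real.log (Real.log m) with hg
  -- error part
  have herr : |T - ∑ m ∈ Ico 2 n, Real.log (m : ℝ)
      * (1 / Real.log (m : ℝ) - 1 / Real.log ((m : ℝ) + 1))| ≤ 9 / Real.log 2 := by
    rw [hT, ← Finset.sum_sub_distrib]
    refine le_trans (Finset.abs_sum_le_sum_abs _ _) ?_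
    have hbound : ∀ m ∈ Ico 2 n, |A m * (1 / Real.log (m : ℝ) - 1 / Real.log ((m : ℝ) + 1))
        - Real.log (m : ℝ) * (1 / Real.log (m : ℝ) - 1 / Real.log ((m : ℝ) + 1))|
        ≤ 9 * ((1 / Real.log (m : ℝ)) - (1 / Real.log ((m : ℝ) + 1))) := by
      intro m hm
      rw [Finset.mem_Ico] at hm
      have hm2 : (2 : ℝ) ≤ m := by exact_mod_cast hm.1
      have ha0 : 0 < Real.log (m : ℝ) :=
        lt_of_lt_of_le log2_pos (Real.log_le_log (by norm_num) hm2)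
      have hb0 : 0 < Real.log ((m : ℝ) + 1) :=
        lt_of_lt_of_le ha0 (Real.log_le_log (by linarith) (by linarith))
      have hfd : 0 ≤ 1 / Real.log (m : ℝ) - 1 / Real.log ((m : ℝ) + 1) := by
        rw [sub_nonneg]
        apply one_div_le_one_div_of_le ha0
        exact Real.log_le_log (by linarith) (by linarith)
      rw [← sub_mul, abs_mul, abs_of_nonneg hfd]
      exact mul_le_mul_of_nonneg_right (mertens_first (by omega)) hfd
    refine le_trans (Finset.sum_le_sum hbound) ?_
    have htel : ∑ m ∈ Ico 2 n, ((1 / Real.log (m : ℝ)) - (1 / Real.log ((m : ℝ) + 1)))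
        = 1 / Real.log 2 - 1 / Real.log n := by
      have := telescope (fun m => -(1 / Real.log (m : ℝ))) hn
      have hcast : ∀ m ∈ Ico 2 n, (1 / Real.log (m : ℝ)) - (1 / Real.log ((m : ℝ) + 1))
          = (-(1 / Real.log ((m + 1 : ℕ) : ℝ))) - (-(1 / Real.log (m : ℝ))) := by
        intro m _
        push_cast
        ring
      rw [Finset.sum_congr rfl hcast, this]
      push_cast
      ring_nf
    rw [← Finset.mul_sum, htel]
    have : 0 < 1 / Real.log (n : ℝ) := by positivity
    rw [div_eq_mul_one_div 9 (Real.log 2)]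
    nlinarith
  -- main part
  have hmain : |(∑ m ∈ Ico 2 n, Real.log (m : ℝ)
      * (1 / Real.log (m : ℝ) - 1 / Real.log ((m : ℝ) + 1)))
      - (g n - g 2)| ≤ 1 / (Real.log 2) ^ 2 := by
    have htel : ∑ m ∈ Ico 2 n, (g (m + 1) - g m) = g n - g 2 := telescope g hn
    have hup : (∑ m ∈ Ico 2 n, Real.log (m : ℝ)
        * (1 / Real.log (m : ℝ) - 1 / Real.log ((m : ℝ) + 1))) ≤ g n - g 2 := by
      rw [← htel]
      apply Finset.sum_le_sum
      intro m hm
      rw [Finset.mem_Ico] at hm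
      have h := (term_bounds hm.1).2
      have hcast : g (m + 1) = Real.log (Real.log ((m : ℝ) + 1)) := by
        rw [hg]; push_cast; ring_nf
      rw [hcast]
      exact h
    have hlo : (g n - g 2) - 1 / (Real.log 2) ^ 2 ≤ ∑ m ∈ Ico 2 n, Real.log (m : ℝ)
        * (1 / Real.log (m : ℝ) - 1 / Real.log ((m : ℝ) + 1)) := by
      have hsum : ∑ m ∈ Ico 2 n, ((g (m + 1) - g m) - 1 / ((m : ℝ) ^ 2 * (Real.log 2) ^ 2))
          ≤ ∑ m ∈ Ico 2 n, Real.log (m : ℝ)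
            * (1 / Real.log (m : ℝ) - 1 / Real.log ((m : ℝ) + 1)) := by
        apply Finset.sum_le_sum
        intro m hm
        rw [Finset.mem_Ico] at hm
        have h := (term_bounds hm.1).1
        have hcast : g (m + 1) = Real.log (Real.log ((m : ℝ) + 1)) := by
          rw [hg]; push_cast; ring_nf
        rw [hcast]
        exact h
      rw [Finset.sum_sub_distrib, htel] at hsum
      have hs2 : ∑ m ∈ Ico 2 n, 1 / ((m : ℝ) ^ 2 * (Real.log 2) ^ 2)
          ≤ 1 / (Real.log 2) ^ 2 := by
        have heq : ∀ m ∈ Ico 2 n, 1 / ((m : ℝ) ^ 2 * (Real.log 2) ^ 2)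
            = (1 / (Real.log 2) ^ 2) * (1 / (m : ℝ) ^ 2) := by
          intro m hm
          rw [one_div, one_div, one_div, ← mul_inv, mul_comm ((m:ℝ)^2)]
        rw [Finset.sum_congr rfl heq, ← Finset.mul_sum]
        have := sum_sq_le n
        have h2 : 0 < 1 / (Real.log 2) ^ 2 := by positivity
        nlinarith
      linarith
    rw [abs_le]
    constructor <;> [linarith; linarith [sub_nonneg.mpr hup]]
  -- combine
  have hg2 : g 2 = Real.log (Real.log 2) := by
    rw [hg]; norm_num
  have habs := abs_sub_abs_le_abs_sub (A n / Real.log (n : ℝ)) (1 : ℝ)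
  rw [c2]
  have hgoal : |A n / Real.log (n : ℝ) + T - Real.log (Real.log (n : ℝ))|
      ≤ |A n / Real.log (n : ℝ) - 1| + |T - (g n - g 2)| + |g 2| + 1 := by
    have : A n / Real.log (n : ℝ) + T - Real.log (Real.log (n : ℝ))
        = (A n / Real.log (n : ℝ) - 1) + (T - (g n - g 2)) + (- g 2) + 1 := by
      rw [hg]
      ring
    rw [this]
    calc |A n / Real.log (n : ℝ) - 1 + (T - (g n - g 2)) + -g 2 + 1|
        ≤ |A n / Real.log (n : ℝ) - 1 + (T - (g n - g 2)) + -g 2| + |(1:ℝ)| := abs_add_le _ _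
      _ ≤ |A n / Real.log (n : ℝ) - 1 + (T - (g n - g 2))| + |-g 2| + |(1:ℝ)| := by
          gcongr; exact abs_add_le _ _
      _ ≤ |A n / Real.log (n : ℝ) - 1| + |T - (g n - g 2)| + |-g 2| + |(1:ℝ)| := by
          gcongr; exact abs_add_le _ _
      _ = |A n / Real.log (n : ℝ) - 1| + |T - (g n - g 2)| + |g 2| + 1 := by
          rw [abs_neg, abs_one]
    -- done
  have hTbound : |T - (g n - g 2)| ≤ 9 / Real.log 2 + 1 / (Real.log 2) ^ 2 := by
    have : T - (g n - g 2) = (T - ∑ m ∈ Ico 2 n, Real.log (m : ℝ)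
        * (1 / Real.log (m : ℝ) - 1 / Real.log ((m : ℝ) + 1)))
      + ((∑ m ∈ Ico 2 n, Real.log (m : ℝ)
        * (1 / Real.log (m : ℝ) - 1 / Real.log ((m : ℝ) + 1))) - (g n - g 2)) := by ring
    rw [this]
    exact le_trans (abs_add_le _ _) (by linarith)
  calc |A n / Real.log (n : ℝ) + T - Real.log (Real.log (n : ℝ))|
      ≤ |A n / Real.log (n : ℝ) - 1| + |T - (g n - g 2)| + |g 2| + 1 := hgoal
    _ ≤ 9 / Real.log 2 + (9 / Real.log 2 + 1 / (Real.log 2) ^ 2)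
        + |Real.log (Real.log 2)| + 1 := by
        rw [hg2] at *
        gcongr <;> linarith [hhead, hTbound]
    _ = 1 + |Real.log (Real.log 2)| + 1 / Real.log 2 ^ 2 + 18 / Real.log 2 := by ring




lemma upsilon_vs_nS {n : ℕ} (hn : 1 ≤ n) :
    |(Upsilon n : ℝ) - n * S n| ≤ n := by
  have hnR : (1 : ℝ) ≤ n := by exact_mod_cast hn
  set F := (range (n + 1)).filter Nat.Prime with hF
  have hmem : ∀ p ∈ F, p.Prime ∧ p ≤ n := by
    intro p hp
    rw [hF, Finset.mem_filter, Finset.mem_range] at hp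
    exact ⟨hp.2, by omega⟩
  have hups : (Upsilon n : ℝ) = ∑ p ∈ F, ((n.factorial).factorization p : ℝ) := by
    rw [Upsilon]
    push_cast
    rfl
  have hnS : (n : ℝ) * S n = ∑ p ∈ F, (n : ℝ) * (1 / p) := by
    rw [S, Finset.mul_sum]
  rw [abs_le]
  constructor
  · -- lower: Upsilon ≥ n S n - card F ≥ n S n - n
    have hlow : ∑ p ∈ F, ((n : ℝ) * (1 / p) - 1) ≤ (Upsilon n : ℝ) := by
      rw [hups]
      apply Finset.sum_le_sum
      intro p hp
      obtain ⟨hpp, hpn⟩ := hmem p hp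
      have := v_lower hpp hpn
      have hp0 : (0:ℝ) < p := by exact_mod_cast hpp.pos
      calc (n : ℝ) * (1 / p) - 1 = (n : ℝ) / p - 1 := by ring
        _ ≤ _ := this
    have hcard : (F.card : ℝ) ≤ n := by
      have h1 : F.card ≤ (Ico 2 (n + 1)).card := Finset.card_le_card (filter_subset_Ico n)
      rw [Nat.card_Ico] at h1
      have : F.card ≤ n - 1 := h1
      have h2 : F.card ≤ n := by omega
      exact_mod_cast h2
    rw [Finset.sum_sub_distrib, Finset.sum_const, nsmul_eq_mul, mul_one] at hlow
    rw [hnS]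
    linarith
  · -- upper
    have hup : (Upsilon n : ℝ) ≤ ∑ p ∈ F, ((n : ℝ) * (1 / p) + n * (1 / (p * ((p:ℝ) - 1)))) := by
      rw [hups]
      apply Finset.sum_le_sum
      intro p hp
      obtain ⟨hpp, hpn⟩ := hmem p hp
      have hv := v_upper (n := n) hpp
      have hp2 : (2:ℝ) ≤ p := by exact_mod_cast hpp.two_le
      have heq : (n : ℝ) / ((p:ℝ) - 1) = (n : ℝ) * (1 / p) + n * (1 / (p * ((p:ℝ) - 1))) := by
        have h1 : (p:ℝ) ≠ 0 := by linarith
        have h2 : (p:ℝ) - 1 ≠ 0 := by linarith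
        field_simp
        ring
      rw [← heq]
      exact hv
    rw [Finset.sum_add_distrib, ← Finset.mul_sum, ← Finset.mul_sum] at hup
    have hsum := prime_sum_one_div_le n
    rw [hnS, ← Finset.mul_sum]
    have hn0 : (0:ℝ) ≤ n := by linarith
    have hmul := mul_le_mul_of_nonneg_left hsum hn0
    rw [mul_one] at hmul
    linarith

lemma c2_nonneg : 0 ≤ c2 := by
  have l2 : (0:ℝ) < Real.log 2 := Real.log_pos one_lt_two
  have h1 : 0 ≤ |Real.log (Real.log 2)| := abs_nonneg _
  have h2 : (0:ℝ) < 1 / (Real.log 2) ^ 2 := by positivity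
  have h3 : (0:ℝ) < 18 / Real.log 2 := by positivity
  rw [c2]
  linarith

end UpsilonProof
theorem upsilon_asymptotic :
    ∃ C : ℝ, C > 0 ∧ ∀ n : ℕ, 3 ≤ n →
      |(Upsilon n : ℝ) - (n : ℝ) * Real.log (Real.log n)| ≤ C * n := by
  refine ⟨1 + UpsilonProof.c2, by linarith [UpsilonProof.c2_nonneg], ?_⟩
  intro n hn
  have hn1 : 1 ≤ n := by omega
  have hnR : (0:ℝ) < n := by exact_mod_cast hn1
  have h1 := UpsilonProof.upsilon_vs_nS hn1
  have h2 := UpsilonProof.mertens_second (n := n) (by omega)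
  calc |(Upsilon n : ℝ) - (n : ℝ) * Real.log (Real.log n)|
      = |((Upsilon n : ℝ) - n * UpsilonProof.S n)
        + (n * (UpsilonProof.S n - Real.log (Real.log n)))| := by ring_nf
    _ ≤ |(Upsilon n : ℝ) - n * UpsilonProof.S n|
        + |n * (UpsilonProof.S n - Real.log (Real.log n))| := abs_add_le _ _
    _ ≤ n + n * UpsilonProof.c2 := by
        have h3 : |(n:ℝ) * (UpsilonProof.S n - Real.log (Real.log n))|
            = n * |UpsilonProof.S n - Real.log (Real.log n)| := by
          rw [abs_mul, abs_of_pos hnR]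
        rw [h3]
        have := mul_le_mul_of_nonneg_left h2 hnR.le
        linarith
    _ = (1 + UpsilonProof.c2) * n := by ring
end

section
/- For every integer n ≥ 2, the sum S₁(n) = Σ_{p ≤ n, p prime} (n−1)/(p−1) satisfies S₁(n) < (n−1)·log(log(n−1)) + c₄·(n−1) + ϑ(n)/log n, where ϑ(n) = Σ_{p ≤ n, p prime} log p is the Chebyshev theta function and c₄ = 21.181 (the paper's effective constant c₄ ≈ 21.18095291). -/
open Finset

/-- auxiliary: product of prime powers each dividing N divides N -/
lemma aux_prod_pow_dvd (s : Finset ℕ) (f : ℕ → ℕ) (N : ℕ)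
    (hs : ∀ p ∈ s, p.Prime) (h : ∀ p ∈ s, p ^ f p ∣ N) :
    (∏ p ∈ s, p ^ f p) ∣ N := by
  classical
  induction s using Finset.induction_on with
  | empty => simp
  | insert a t hq ih =>
    rw [Finset.prod_insert hq]
    refine Nat.Coprime.mul_dvd_of_dvd_of_dvd ?_ (h a (mem_insert_self a t))
      (ih (fun p hp => hs p (mem_insert_of_mem hp)) (fun p hp => h p (mem_insert_of_mem hp)))
    apply Nat.Coprime.prod_right
    intro p hp
    exact Nat.Coprime.pow _ _ <| (Nat.coprime_primes (hs a (mem_insert_self a t))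
      (hs p (mem_insert_of_mem hp))).mpr (by rintro rfl; exact hq hp)

lemma aux_pow_div_dvd_factorial {p n : ℕ} (hp : p.Prime) :
    p ^ (n / p) ∣ Nat.factorial n := by
  rw [Nat.Prime.pow_dvd_factorial_iff hp (Nat.lt_succ_self _)]
  rcases Nat.eq_zero_or_pos (n / p) with h | h
  · simp [h]
  · have hpn : p ≤ n := by
      by_contra hc
      rw [Nat.div_eq_of_lt (lt_of_not_ge hc)] at h
      exact lt_irrefl 0 h
    have h1 : 1 ∈ Finset.Ico 1 (Nat.log p n + 1) := by
      simp only [Finset.mem_Ico, le_refl, true_and]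
      exact Nat.lt_succ_of_le (Nat.log_pos hp.one_lt hpn)
    calc n / p = n / p ^ 1 := by rw [pow_one]
      _ ≤ _ := Finset.single_le_sum (f := fun i => n / p ^ i) (fun i _ => Nat.zero_le _) h1

lemma theta_nonneg' (n : ℕ) :
    0 ≤ ∑ p ∈ (Finset.range (n + 1)).filter Nat.Prime, Real.log p := by
  apply Finset.sum_nonneg
  intro p hp
  have hp2 := (Finset.mem_filter.mp hp).2.two_le
  exact Real.log_nonneg (by exact_mod_cast le_trans (by norm_num) hp2)

lemma theta_le' (n : ℕ) :
    ∑ p ∈ (Finset.range (n + 1)).filter Nat.Prime, Real.log p ≤ n * Real.log 4 := by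
  have h1 : ∑ p ∈ (Finset.range (n + 1)).filter Nat.Prime, Real.log p
      = Real.log (primorial n) := by
    rw [primorial, Nat.cast_prod, Real.log_prod]
    intro p hp
    have := (Finset.mem_filter.mp hp).2.pos
    positivity
  rw [h1]
  calc Real.log (primorial n) ≤ Real.log ((4:ℝ) ^ n) := by
        apply Real.log_le_log (by exact_mod_cast primorial_pos n)
        exact_mod_cast primorial_le_4_pow n
    _ = n * Real.log 4 := by rw [Real.log_pow]

lemma mertens1 (n : ℕ) (hn : 1 ≤ n) :
    ∑ p ∈ (Finset.range (n + 1)).filter Nat.Prime, Real.log p / p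
      ≤ Real.log n + Real.log 4 := by
  set F := (Finset.range (n + 1)).filter Nat.Prime with hF
  have hprime : ∀ p ∈ F, p.Prime := fun p hp => (Finset.mem_filter.mp hp).2
  -- step 1: ∑ floor(n/p) log p ≤ log (n!)
  have hdvd : (∏ p ∈ F, p ^ (n / p)) ∣ Nat.factorial n :=
    aux_prod_pow_dvd F _ _ hprime (fun p hp => aux_pow_div_dvd_factorial (hprime p hp))
  have hle : (∏ p ∈ F, p ^ (n / p)) ≤ Nat.factorial n :=
    Nat.le_of_dvd (Nat.factorial_pos n) hdvd
  have hlog1 : ∑ p ∈ F, ((n / p : ℕ) : ℝ) * Real.log p ≤ (n : ℝ) * Real.log n := by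
    have e1 : ∑ p ∈ F, ((n / p : ℕ) : ℝ) * Real.log p
        = Real.log ((∏ p ∈ F, p ^ (n / p) : ℕ) : ℝ) := by
      rw [Nat.cast_prod, Real.log_prod]
      · apply Finset.sum_congr rfl
        intro p hp
        rw [Nat.cast_pow, Real.log_pow]
      · intro p hp
        have := (hprime p hp).pos
        positivity
    rw [e1]
    have hppos : (0:ℝ) < ((∏ p ∈ F, p ^ (n / p) : ℕ) : ℝ) := by
      have : 0 < ∏ p ∈ F, p ^ (n / p) :=
        Finset.prod_pos (fun p hp => pow_pos (hprime p hp).pos _)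
      exact_mod_cast this
    calc Real.log ((∏ p ∈ F, p ^ (n / p) : ℕ) : ℝ) ≤ Real.log (Nat.factorial n) := by
          apply Real.log_le_log hppos (by exact_mod_cast hle)
      _ ≤ Real.log ((n : ℝ) ^ n) := by
          apply Real.log_le_log (by exact_mod_cast Nat.factorial_pos n)
          exact_mod_cast Nat.factorial_le_pow n
      _ = (n : ℝ) * Real.log n := Real.log_pow n n
  -- step 2: n * (log p / p) ≤ floor(n/p) * log p + log p
  have hstep : ∀ p ∈ F, (n : ℝ) * (Real.log p / p)
      ≤ ((n / p : ℕ) : ℝ) * Real.log p + Real.log p := by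
    intro p hp
    have hp2 := (hprime p hp).two_le
    have hppos : (0 : ℝ) < p := by exact_mod_cast (hprime p hp).pos
    have hlp : 0 ≤ Real.log p := Real.log_nonneg (by exact_mod_cast (hprime p hp).one_lt.le)
    have hdiv : (n : ℝ) / p ≤ ((n / p : ℕ) : ℝ) + 1 := by
      rw [div_le_iff₀ hppos]
      have hmod : n % p < p := Nat.mod_lt n (hprime p hp).pos
      have hdm := Nat.div_add_mod n p
      have : n ≤ (n / p + 1) * p := by nlinarith [hdm, hmod]
      calc (n : ℝ) ≤ ((n / p + 1) * p : ℕ) := by exact_mod_cast this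
        _ = (((n / p : ℕ) : ℝ) + 1) * p := by push_cast; ring
    calc (n : ℝ) * (Real.log p / p) = ((n : ℝ) / p) * Real.log p := by ring
      _ ≤ (((n / p : ℕ) : ℝ) + 1) * Real.log p := by
          exact mul_le_mul_of_nonneg_right hdiv hlp
      _ = ((n / p : ℕ) : ℝ) * Real.log p + Real.log p := by ring
  have hsum : (n : ℝ) * ∑ p ∈ F, Real.log p / p
      ≤ (n : ℝ) * Real.log n + (n : ℝ) * Real.log 4 := by
    rw [Finset.mul_sum]
    calc ∑ p ∈ F, (n : ℝ) * (Real.log p / p)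
        ≤ ∑ p ∈ F, (((n / p : ℕ) : ℝ) * Real.log p + Real.log p) :=
          Finset.sum_le_sum hstep
      _ = (∑ p ∈ F, ((n / p : ℕ) : ℝ) * Real.log p) + ∑ p ∈ F, Real.log p :=
          Finset.sum_add_distrib
      _ ≤ (n : ℝ) * Real.log n + (n : ℝ) * Real.log 4 :=
          add_le_add hlog1 (theta_le' n)
  have hnpos : (0 : ℝ) < n := by exact_mod_cast hn
  nlinarith [hsum]

lemma keylog {a b : ℝ} (hb : 0 < b) (hab : b ≤ a) : (a - b) / a ≤ Real.log a - Real.log b := by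
  have ha : 0 < a := lt_of_lt_of_le hb hab
  have h1 : Real.log (b / a) ≤ b / a - 1 := Real.log_le_sub_one_of_pos (by positivity)
  rw [Real.log_div (ne_of_gt hb) (ne_of_gt ha)] at h1
  have : (a - b) / a = 1 - b / a := by field_simp
  linarith

lemma sumP (n : ℕ) (hn : 2 ≤ n) :
    ∑ p ∈ (Finset.range (n + 1)).filter Nat.Prime, ((p : ℝ))⁻¹
      ≤ (∑ p ∈ (Finset.range (n + 1)).filter Nat.Prime, Real.log p / p) / Real.log n
        + Real.log (Real.log n) - Real.log 4 / Real.log n + 3 := by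
  induction n with
  | zero => omega
  | succ m ih =>
    rcases Nat.lt_or_ge m 2 with hm | hm
    · -- base case : m + 1 = 2
      interval_cases m
      · omega
      · -- n = 2
        have h2 : (Finset.range 3).filter Nat.Prime = {2} := by decide
        rw [h2]
        simp only [Finset.sum_singleton]
        have hl2 : (0:ℝ) < Real.log 2 := Real.log_pos (by norm_num)
        have e4 : Real.log 4 = 2 * Real.log 2 := by
          rw [show (4:ℝ) = 2 ^ 2 by norm_num, Real.log_pow]; norm_num
        have hloglog : (-1 : ℝ) ≤ Real.log (Real.log 2) := by
          have h1 : Real.exp (-1) ≤ Real.log 2 := by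
            have he : (2:ℝ) ≤ Real.exp 1 := by
              have := Real.add_one_le_exp (1:ℝ); linarith
            have : Real.exp (-1) ≤ 1/2 := by
              rw [Real.exp_neg]
              rw [inv_le_comm₀ (Real.exp_pos 1) (by norm_num)]
              linarith
            have hl : (0.6931471803 : ℝ) < Real.log 2 := Real.log_two_gt_d9
            linarith
          calc (-1 : ℝ) = Real.log (Real.exp (-1)) := (Real.log_exp _).symm
            _ ≤ Real.log (Real.log 2) := Real.log_le_log (Real.exp_pos _) h1
        push_cast
        rw [e4]
        have : (Real.log 2 / 2) / Real.log 2 = 1/2 := by field_simp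
        rw [this]
        have : 2 * Real.log 2 / Real.log 2 = 2 := by field_simp
        rw [this]
        norm_num
        linarith
    · -- inductive step, m ≥ 2
      have ihm := ih hm
      set F := (Finset.range (m + 1)).filter Nat.Prime with hF
      have hm1 : ((1:ℝ)) < (m:ℝ) := by exact_mod_cast hm
      have hlm : (0:ℝ) < Real.log m := Real.log_pos hm1
      have hlm1 : (0:ℝ) < Real.log (m+1) := Real.log_pos (by push_cast; linarith)
      have hmono : Real.log (m:ℝ) ≤ Real.log ((m:ℝ)+1) :=
        Real.log_le_log (by linarith) (by linarith)
      have hA : ∑ p ∈ F, Real.log p / p ≤ Real.log m + Real.log 4 := mertens1 m (by omega)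
      have hAnn : 0 ≤ ∑ p ∈ F, Real.log p / p := by
        apply Finset.sum_nonneg
        intro p hp
        have hp2 := (Finset.mem_filter.mp hp).2.two_le
        have : (1:ℝ) ≤ p := by exact_mod_cast Nat.one_le_of_lt hp2
        have := Real.log_nonneg this
        positivity
      set A := ∑ p ∈ F, Real.log p / p with hAdef
      -- split new sums
      have hsplit1 : (Finset.range (m + 2)).filter Nat.Prime =
          if (m+1).Prime then insert (m+1) F else F := by
        rw [Finset.range_add_one, Finset.filter_insert]
      have hnotmem : (m+1) ∉ F := by
        simp [hF, Finset.mem_filter, Finset.mem_range]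
      -- key telescoping inequality
      have hkey : A * (1 / Real.log m - 1 / Real.log (m+1))
          ≤ (Real.log (Real.log (m+1)) - Real.log (Real.log m))
            + Real.log 4 * (1 / Real.log m - 1 / Real.log (m+1)) := by
        have hdpos : 0 ≤ 1 / Real.log m - 1 / Real.log (m+1) := by
          rw [sub_nonneg, div_le_div_iff₀ hlm1 hlm]
          nlinarith
        have h1 : A * (1 / Real.log m - 1 / Real.log (m+1))
            ≤ (Real.log m + Real.log 4) * (1 / Real.log m - 1 / Real.log (m+1)) :=
          mul_le_mul_of_nonneg_right hA hdpos
        have h2 : Real.log m * (1 / Real.log m - 1 / Real.log (m+1))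
            ≤ Real.log (Real.log (m+1)) - Real.log (Real.log m) := by
          have := keylog hlm hmono
          have e : Real.log m * (1 / Real.log m - 1 / Real.log (m+1))
              = (Real.log (m+1) - Real.log m) / Real.log (m+1) := by
            field_simp
          rw [e]
          exact this
        nlinarith
      have expand : A / Real.log m - A / Real.log ((m:ℝ)+1)
          = A * (1/Real.log m - 1/Real.log ((m:ℝ)+1)) := by ring
      have e2 : Real.log 4 / Real.log m - Real.log 4 / Real.log ((m:ℝ)+1)
          = Real.log 4 * (1/Real.log m - 1/Real.log ((m:ℝ)+1)) := by ring
      have goalle : A / Real.log m + Real.log (Real.log m) - Real.log 4 / Real.log m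
          ≤ A / Real.log ((m:ℝ)+1) + Real.log (Real.log ((m:ℝ)+1))
            - Real.log 4 / Real.log ((m:ℝ)+1) := by linarith [hkey]
      by_cases hp : (m+1).Prime
      · rw [hsplit1, if_pos hp, Finset.sum_insert hnotmem, Finset.sum_insert hnotmem]
        push_cast
        have e1 : (Real.log ((m:ℝ)+1) / ((m:ℝ)+1) + A) / Real.log ((m:ℝ)+1)
            = ((m:ℝ)+1)⁻¹ + A / Real.log ((m:ℝ)+1) := by
          field_simp
        rw [e1]
        linarith [ihm, goalle]
      · rw [hsplit1, if_neg hp]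
        push_cast
        linarith [ihm, goalle]

lemma sumP' (n : ℕ) (hn : 2 ≤ n) :
    ∑ p ∈ (Finset.range (n + 1)).filter Nat.Prime, ((p : ℝ))⁻¹
      ≤ Real.log (Real.log n) + 4 := by
  have h1 := sumP n hn
  have hlm : (0:ℝ) < Real.log n := Real.log_pos (by exact_mod_cast hn)
  have hA := mertens1 n (by omega)
  set A := ∑ p ∈ (Finset.range (n + 1)).filter Nat.Prime, Real.log p / p with hAdef
  have h2 : A / Real.log n - Real.log 4 / Real.log n ≤ 1 := by
    rw [div_sub_div_same, div_le_one hlm]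
    linarith
  linarith

lemma telescope (n : ℕ) (hn : 1 ≤ n) :
    ∑ k ∈ Finset.Icc 2 n, (1:ℝ) / (((k:ℝ) - 1) * k) = 1 - 1 / n := by
  induction n with
  | zero => omega
  | succ m ih =>
    rcases Nat.lt_or_ge m 1 with hm | hm
    · interval_cases m
      · simp
    · rw [show m + 1 = m + 1 by rfl, Finset.sum_Icc_succ_top (by omega), ih hm]
      have hm0 : (0:ℝ) < m := by exact_mod_cast hm
      push_cast
      field_simp
      ring_nf
      rw [mul_inv_cancel₀ hm0.ne']
      ring

lemma sum_inv_pred (n : ℕ) (hn : 2 ≤ n) :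
    ∑ p ∈ (Finset.range (n + 1)).filter Nat.Prime, ((p:ℝ) - 1)⁻¹
      ≤ Real.log (Real.log n) + 5 := by
  have hsplit : ∀ p ∈ (Finset.range (n + 1)).filter Nat.Prime,
      ((p:ℝ) - 1)⁻¹ = (p:ℝ)⁻¹ + 1 / (((p:ℝ) - 1) * p) := by
    intro p hp
    have hp2 := (Finset.mem_filter.mp hp).2.two_le
    have hp2' : (2:ℝ) ≤ p := by exact_mod_cast hp2
    have h1 : ((p:ℝ) - 1) ≠ 0 := by linarith
    have h0 : (p:ℝ) ≠ 0 := by linarith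
    field_simp
    ring
  rw [Finset.sum_congr rfl hsplit, Finset.sum_add_distrib]
  have h2 : ∑ p ∈ (Finset.range (n + 1)).filter Nat.Prime, 1 / (((p:ℝ) - 1) * p) ≤ 1 := by
    have hsub : (Finset.range (n + 1)).filter Nat.Prime ⊆ Finset.Icc 2 n := by
      intro p hp
      have h := Finset.mem_filter.mp hp
      rw [Finset.mem_Icc]
      exact ⟨h.2.two_le, by have := Finset.mem_range.mp h.1; omega⟩
    calc ∑ p ∈ (Finset.range (n + 1)).filter Nat.Prime, 1 / (((p:ℝ) - 1) * p)
        ≤ ∑ k ∈ Finset.Icc 2 n, (1:ℝ) / (((k:ℝ) - 1) * k) := by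
          apply Finset.sum_le_sum_of_subset_of_nonneg hsub
          intro k hk _
          have h2k : (2:ℝ) ≤ k := by
            exact_mod_cast (Finset.mem_Icc.mp hk).1
          apply div_nonneg (by norm_num)
          apply le_of_lt (mul_pos (by linarith) (by linarith))
      _ = 1 - 1 / n := telescope n (by omega)
      _ ≤ 1 := by
          have : (0:ℝ) < n := by exact_mod_cast Nat.lt_of_lt_of_le (by norm_num) hn
          have : 0 ≤ 1 / (n:ℝ) := by positivity
          linarith
  have h1 := sumP' n hn
  linarith

/-- The Chebyshev theta function `ϑ(n) = ∑_{p ≤ n, p prime} log p`. -/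
noncomputable def theta (n : ℕ) : ℝ :=
  ∑ p ∈ (Finset.range (n + 1)).filter Nat.Prime, Real.log p

/-- `S₁(n) = ∑_{p ≤ n, p prime} (n−1)/(p−1)`. -/
noncomputable def S1 (n : ℕ) : ℝ :=
  ∑ p ∈ (Finset.range (n + 1)).filter Nat.Prime, ((n : ℝ) - 1) / ((p : ℝ) - 1)

theorem S1_upper_bound (n : ℕ) (hn : 2 ≤ n) :
    S1 n < ((n : ℝ) - 1) * Real.log (Real.log ((n : ℝ) - 1)) + 21.181 * ((n : ℝ) - 1)
      + theta n / Real.log n := by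
  have hth : 0 ≤ theta n / Real.log n := by
    apply div_nonneg (theta_nonneg' n)
    exact Real.log_nonneg (by exact_mod_cast Nat.one_le_of_lt hn)
  rcases Nat.lt_or_ge n 3 with h3 | h3
  · -- n = 2
    interval_cases n
    have h2 : (Finset.range 3).filter Nat.Prime = {2} := by decide
    have hS : S1 2 = 1 := by
      rw [S1, h2, Finset.sum_singleton]; norm_num
    have hT : theta 2 / Real.log 2 = 1 := by
      rw [theta, h2, Finset.sum_singleton]
      push_cast
      exact div_self (ne_of_gt (Real.log_pos (by norm_num)))
    rw [hS]
    push_cast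
    rw [hT]
    norm_num [Real.log_one, Real.log_zero]
  · -- n ≥ 3
    have hn1 : (1:ℝ) ≤ (n:ℝ) - 1 := by
      have : (3:ℝ) ≤ n := by exact_mod_cast h3
      linarith
    have hn3 : (3:ℝ) ≤ (n:ℝ) := by exact_mod_cast h3
    have hln1 : (0:ℝ) < Real.log ((n:ℝ) - 1) := Real.log_pos (by linarith)
    have hS : S1 n = ((n:ℝ) - 1) *
        ∑ p ∈ (Finset.range (n + 1)).filter Nat.Prime, ((p:ℝ) - 1)⁻¹ := by
      rw [S1, Finset.mul_sum]
      apply Finset.sum_congr rfl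
      intro p _
      rw [div_eq_mul_inv]
    have hsum := sum_inv_pred n hn
    -- log log n ≤ log log (n-1) + 1
    have hloglog : Real.log (Real.log n) ≤ Real.log (Real.log ((n:ℝ) - 1)) + 1 := by
      have hsq : (n:ℝ) ≤ ((n:ℝ) - 1) ^ 2 := by nlinarith
      have h1 : Real.log n ≤ 2 * Real.log ((n:ℝ) - 1) := by
        calc Real.log n ≤ Real.log (((n:ℝ) - 1) ^ 2) :=
              Real.log_le_log (by linarith) hsq
          _ = 2 * Real.log ((n:ℝ) - 1) := by
              rw [show ((n:ℝ) - 1) ^ 2 = ((n:ℝ)-1) * ((n:ℝ)-1) by ring,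
                Real.log_mul (by linarith) (by linarith)]
              ring
      calc Real.log (Real.log n) ≤ Real.log (2 * Real.log ((n:ℝ) - 1)) := by
            apply Real.log_le_log (Real.log_pos (by linarith)) h1
        _ = Real.log 2 + Real.log (Real.log ((n:ℝ) - 1)) :=
            Real.log_mul (by norm_num) (ne_of_gt hln1)
        _ ≤ Real.log (Real.log ((n:ℝ) - 1)) + 1 := by
            have := Real.log_le_sub_one_of_pos (show (0:ℝ) < 2 by norm_num)
            linarith
    have hfin : ∑ p ∈ (Finset.range (n + 1)).filter Nat.Prime, ((p:ℝ) - 1)⁻¹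
        ≤ Real.log (Real.log ((n:ℝ) - 1)) + 6 := by linarith
    have hpos : (0:ℝ) < (n:ℝ) - 1 := by linarith
    have : S1 n ≤ ((n:ℝ) - 1) * (Real.log (Real.log ((n:ℝ) - 1)) + 6) := by
      rw [hS]
      exact mul_le_mul_of_nonneg_left hfin (le_of_lt hpos)
    nlinarith [hth, hpos]
end

section
/- For every integer n ≥ 2, Υ(n) ≤ S₁(n), and moreover Υ(n) > S₁(n) − π(n) − S₂(n), where S₁(n) = Σ_{p ≤ n, p prime} (n−1)/(p−1) and S₂(n) = Σ_{p ≤ n, p prime} log n/log p. -/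
/-
Legendre's formula reads `(p - 1) v_p(n!) = n - s_p(n)`, with `s_p(n)` the sum of the base-`p` digits
of `n`. For `n ≠ 0` the leading digit is nonzero, so `s_p(n) ≥ 1`, which gives the upper bound
`v_p(n!) ≤ (n - 1)/(p - 1)`. There are `⌊log_p n⌋ + 1` digits, each at most `p - 1`, so
`s_p(n) ≤ (p - 1)(log n / log p + 1)`, whence `v_p(n!) ≥ n/(p - 1) - 1 - log n / log p`, which is
strictly more than the claimed lower bound. Summing over the primes `p ≤ n`, of which there is at
least one, gives both inequalities.
-/

open Finset

/-- `S₂(n) = ∑_{p ≤ n, p prime} log n / log p`. -/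
noncomputable def S2 (n : ℕ) : ℝ :=
  ∑ p ∈ (Finset.range (n + 1)).filter Nat.Prime, Real.log n / Real.log p

open scoped Nat

namespace Nat

theorem one_le_digits_sum (b : ℕ) {n : ℕ} (hn : n ≠ 0) : 1 ≤ (b.digits n).sum :=
  List.sum_pos_iff_exists_pos_nat.mpr
    ⟨_, List.getLast_mem (digits_ne_nil_iff_ne_zero.mpr hn),
      pos_of_ne_zero (getLast_digit_ne_zero b hn)⟩

theorem digits_sum_le_mul_log_add_one {b : ℕ} (hb : 1 < b) (n : ℕ) :
    (b.digits n).sum ≤ (b - 1) * (log b n + 1) := by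
  rcases eq_or_ne n 0 with rfl | hn
  · simp
  have hdigit : ∀ d ∈ b.digits n, d ≤ b - 1 := fun d hd =>
    le_sub_one_of_lt (digits_lt_base hb hd)
  simpa [length_digits b n hb hn, mul_comm] using List.sum_le_card_nsmul _ _ hdigit

section Factorial

variable {p : ℕ} (hp : p.Prime)
include hp

theorem sub_one_mul_factorization_factorial_real (n : ℕ) :
    ((p : ℝ) - 1) * (n !).factorization p = n - (p.digits n).sum := by
  have : Fact p.Prime := ⟨hp⟩
  have hlegendre := sub_one_mul_padicValNat_factorial (p := p) n
  rw [← factorization_def _ hp] at hlegendre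
  rw [← cast_pred hp.pos, ← cast_sub (digit_sum_le p n), ← hlegendre, cast_mul]

theorem factorization_factorial_le_div {n : ℕ} (hn : n ≠ 0) :
    ((n !).factorization p : ℝ) ≤ ((n : ℝ) - 1) / ((p : ℝ) - 1) := by
  have hp1 : (0 : ℝ) < p - 1 := sub_pos.mpr (by exact_mod_cast hp.one_lt)
  have hs : (1 : ℝ) ≤ (p.digits n).sum := by exact_mod_cast one_le_digits_sum p hn
  rw [le_div_iff₀ hp1, mul_comm, sub_one_mul_factorization_factorial_real hp]
  linarith

theorem div_sub_one_sub_log_div_log_lt_factorization_factorial (n : ℕ) :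
    ((n : ℝ) - 1) / ((p : ℝ) - 1) - 1 - Real.log n / Real.log p
      < ((n !).factorization p : ℝ) := by
  have hp1 : (0 : ℝ) < p - 1 := sub_pos.mpr (by exact_mod_cast hp.one_lt)
  have hs : ((p.digits n).sum : ℝ) ≤ ((p : ℝ) - 1) * (log p n + 1) := by
    rw [← cast_pred hp.pos]
    exact_mod_cast digits_sum_le_mul_log_add_one hp.one_lt n
  have hlog : (log p n : ℝ) ≤ Real.log n / Real.log p := by
    simpa [Real.log_div_log] using Real.natLog_le_logb n p
  have hs' : ((p.digits n).sum : ℝ) ≤ ((p : ℝ) - 1) * (Real.log n / Real.log p + 1) :=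
    hs.trans (by gcongr)
  have hv := sub_one_mul_factorization_factorial_real hp n
  rw [sub_sub, sub_lt_iff_lt_add, div_lt_iff₀ hp1]
  linarith

end Factorial

end Nat

theorem upsilon_between_S1_S2 (n : ℕ) (hn : 2 ≤ n) :
    (Upsilon n : ℝ) ≤ S1 n ∧
      (Upsilon n : ℝ) > S1 n - (Nat.primeCounting n : ℝ) - S2 n := by
  have hU : (Upsilon n : ℝ) = ∑ p ∈ Nat.primesLE n, ((n !).factorization p : ℝ) := by
    simp [Upsilon, Nat.primesLE_eq_filter_range]
  have hπ : (Nat.primeCounting n : ℝ) = ∑ _p ∈ Nat.primesLE n, (1 : ℝ) := by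
    simp [← Nat.primesLE_card_eq_primeCounting]
  have hnonempty : (Nat.primesLE n).Nonempty := ⟨2, Nat.mem_primesLE.mpr ⟨hn, Nat.prime_two⟩⟩
  rw [S1, S2, ← Nat.primesLE_eq_filter_range, hU, hπ, gt_iff_lt, ← sum_sub_distrib,
    ← sum_sub_distrib]
  exact ⟨sum_le_sum fun p hp =>
      Nat.factorization_factorial_le_div (Nat.prime_of_mem_primesLE hp) (by omega),
    sum_lt_sum_of_nonempty hnonempty fun p hp =>
      Nat.div_sub_one_sub_log_div_log_lt_factorization_factorial
        (Nat.prime_of_mem_primesLE hp) n⟩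
end

section
/- For every real n ≥ 564, ∫₂ⁿ dx/log x > n·Σ_{k=1}^{5} (k−1)!/(log n)^k = n/log n + n/(log n)² + 2n/(log n)³ + 6n/(log n)⁴ + 24n/(log n)⁵. -/
open Finset intervalIntegral Set


noncomputable def Qd (c d : ℝ) : ℝ :=
  1 + d + d^2/2 + (1/6 - c^2/120)*d^3 + (1/24 + c/60)*d^4

noncomputable def Pq (s c u : ℝ) : ℝ :=
  -((1 - s + s^2/2 - (1/6 - c^2/120)*s^3 + (1/24 + c/60)*s^4)/5)
  + -((1 - s + 3*(1/6 - c^2/120)*s^2 - 4*(1/24 + c/60)*s^3)/4) * u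
  + -((1/2 - 3*(1/6 - c^2/120)*s + 6*(1/24 + c/60)*s^2)/3) * u^2
  + -((1/6 - c^2/120 - 4*(1/24 + c/60)*s)/2) * u^3
  + -(1/24 + c/60) * u^4

lemma Qd_nonneg {c d : ℝ} (hc : 0 < c) (hc1 : c ≤ 1) (hd : 0 ≤ d) : 0 ≤ Qd c d := by
  have h3 : (0:ℝ) ≤ (1/6 - c^2/120) := by nlinarith
  have h4 : (0:ℝ) ≤ (1/24 + c/60) := by nlinarith
  have := pow_nonneg hd 2
  have := pow_nonneg hd 3
  have := pow_nonneg hd 4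
  unfold Qd; positivity

lemma Qd_le_exp {c d : ℝ} (hd : 0 ≤ d) : Qd c d ≤ Real.exp d := by
  have h1 : Qd c d ≤ ∑ i ∈ Finset.range 6, d ^ i / (Nat.factorial i) := by
    simp only [Finset.sum_range_succ, Qd]
    have h := mul_nonneg (pow_nonneg hd 3) (sq_nonneg (d - c))
    norm_num [Nat.factorial]
    nlinarith
  exact h1.trans (Real.sum_le_exp_of_nonneg hd 6)

lemma hasDeriv_phi (s c r : ℝ) {x : ℝ} (hx : 1 < x) (hL : 0 < Real.log x) :
    HasDerivAt (fun y => r * (Pq s c (Real.log y) / (Real.log y)^5))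
      (r * Qd c (Real.log x - s) / (x * (Real.log x)^6)) x := by
  have hx0 : (0:ℝ) < x := lt_trans one_pos hx
  have hL0 : Real.log x ≠ 0 := ne_of_gt hL
  have hx0' : x ≠ 0 := ne_of_gt hx0
  have hlog : HasDerivAt Real.log x⁻¹ x := Real.hasDerivAt_log hx0'
  have h1 := (hlog.pow 2).const_mul (-((1/2 - 3*(1/6 - c^2/120)*s + 6*(1/24 + c/60)*s^2)/3))
  have h2 := (hlog.pow 3).const_mul (-((1/6 - c^2/120 - 4*(1/24 + c/60)*s)/2))
  have h3 := (hlog.pow 4).const_mul (-(1/24 + c/60))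
  have h0 := hlog.const_mul (-((1 - s + 3*(1/6 - c^2/120)*s^2 - 4*(1/24 + c/60)*s^3)/4))
  have hnum := (((hasDerivAt_const x
      (-((1 - s + s^2/2 - (1/6 - c^2/120)*s^3 + (1/24 + c/60)*s^4)/5))).add h0).add h1).add
        h2 |>.add h3
  have hden := hlog.pow 5
  have hdiv := (hnum.div hden (pow_ne_zero 5 hL0)).const_mul r
  simp only [Pq, Qd]
  refine hdiv.congr_deriv ?_
  push_cast [Pi.pow_apply, Pi.add_apply, id_eq]
  field_simp
  ring

theorem piece_bound (s t c r v : ℝ) (hs : (1/2:ℝ) ≤ s) (hst : s < t)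
    (hc : 0 < c) (hc1 : c ≤ 1) (hr : 0 < r) (hre : r ≤ Real.exp s)
    (hv : v ≤ r * (Pq s c t / t^5 - Pq s c s / s^5)) :
    v ≤ ∫ x in Real.exp s..Real.exp t, 1/(Real.log x)^6 := by
  have hs0 : (0:ℝ) < s := lt_of_lt_of_le one_half_pos hs
  have ha1 : (1:ℝ) < Real.exp s := by
    rw [show (1:ℝ) = Real.exp 0 by simp]; exact Real.exp_lt_exp.mpr hs0
  have hab : Real.exp s < Real.exp t := Real.exp_lt_exp.mpr hst
  -- basic facts on the interval
  have hIcc : ∀ x ∈ Icc (Real.exp s) (Real.exp t),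
      1 < x ∧ s ≤ Real.log x ∧ Real.log x ≤ t := by
    intro x hx
    have h1 : 1 < x := lt_of_lt_of_le ha1 hx.1
    have h0 : (0:ℝ) < x := lt_trans one_pos h1
    refine ⟨h1, ?_, ?_⟩
    · rw [← Real.log_exp s]; exact Real.log_le_log (Real.exp_pos s) hx.1
    · rw [← Real.log_exp t]; exact Real.log_le_log h0 hx.2
  -- pointwise bound
  have hpw : ∀ x ∈ Icc (Real.exp s) (Real.exp t),
      r * Qd c (Real.log x - s) / (x * (Real.log x)^6) ≤ 1/(Real.log x)^6 := by
    intro x hx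
    obtain ⟨h1, hls, hlt⟩ := hIcc x hx
    have hx0 : (0:ℝ) < x := lt_trans one_pos h1
    have hL : 0 < Real.log x := lt_of_lt_of_le hs0 hls
    have hd : 0 ≤ Real.log x - s := sub_nonneg.mpr hls
    have hkey : r * Qd c (Real.log x - s) ≤ x := by
      calc r * Qd c (Real.log x - s) ≤ Real.exp s * Qd c (Real.log x - s) :=
            mul_le_mul_of_nonneg_right hre (Qd_nonneg hc hc1 hd)
        _ ≤ Real.exp s * Real.exp (Real.log x - s) :=
            mul_le_mul_of_nonneg_left (Qd_le_exp hd) (Real.exp_pos s).le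
        _ = x := by rw [← Real.exp_add]; simp [Real.exp_log hx0]
    have hrw : (1:ℝ)/(Real.log x)^6 = x/(x*(Real.log x)^6) := by
      field_simp
    rw [hrw]
    gcongr
  -- continuity facts
  have hsub : Icc (Real.exp s) (Real.exp t) ⊆ {x : ℝ | x ≠ 0} := by
    intro x hx; exact ne_of_gt (lt_trans one_pos (hIcc x hx).1)
  have hlogC : ContinuousOn Real.log (Icc (Real.exp s) (Real.exp t)) :=
    Real.continuousOn_log.mono hsub
  have hLne : ∀ x ∈ Icc (Real.exp s) (Real.exp t), (Real.log x)^6 ≠ 0 := by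
    intro x hx
    have h0 : 0 < Real.log x := lt_of_lt_of_le hs0 (hIcc x hx).2.1
    positivity
  have hfC : ContinuousOn (fun x => 1/(Real.log x)^6) (Icc (Real.exp s) (Real.exp t)) :=
    continuousOn_const.div ((hlogC.pow 6)) hLne
  have hgC : ContinuousOn (fun x => r * Qd c (Real.log x - s) / (x * (Real.log x)^6))
      (Icc (Real.exp s) (Real.exp t)) := by
    apply ContinuousOn.div
    · apply continuousOn_const.mul
      have : ContinuousOn (fun x => Real.log x - s) (Icc (Real.exp s) (Real.exp t)) :=
        hlogC.sub continuousOn_const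
      unfold Qd
      fun_prop
    · exact (continuousOn_id.mul (hlogC.pow 6))
    · intro x hx
      have h1 := hsub hx
      have h2 := hLne x hx
      simp only [mem_setOf_eq] at h1
      exact mul_ne_zero h1 h2
  have hfi : IntervalIntegrable (fun x => 1/(Real.log x)^6) MeasureTheory.volume
      (Real.exp s) (Real.exp t) := by
    apply hfC.intervalIntegrable_of_Icc hab.le
  have hgi : IntervalIntegrable (fun x => r * Qd c (Real.log x - s) / (x * (Real.log x)^6))
      MeasureTheory.volume (Real.exp s) (Real.exp t) := by
    apply hgC.intervalIntegrable_of_Icc hab.le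
  -- FTC for g
  have hftc : ∫ x in Real.exp s..Real.exp t,
      r * Qd c (Real.log x - s) / (x * (Real.log x)^6)
      = r * (Pq s c t / t^5 - Pq s c s / s^5) := by
    rw [integral_eq_sub_of_hasDerivAt (f := fun y => r * (Pq s c (Real.log y) / (Real.log y)^5))]
    · rw [Real.log_exp, Real.log_exp]; ring
    · intro x hx
      rw [uIcc_of_le hab.le] at hx
      obtain ⟨h1, hls, _⟩ := hIcc x hx
      exact hasDeriv_phi s c r h1 (lt_of_lt_of_le hs0 hls)
    · exact hgi
  calc v ≤ r * (Pq s c t / t^5 - Pq s c s / s^5) := hv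
    _ = _ := hftc.symm
    _ ≤ _ := integral_mono_on hab.le hgi hfi hpw


lemma f6_int {a b : ℝ} (ha : 2 ≤ a) (hab : a ≤ b) :
    IntervalIntegrable (fun x => 1/(Real.log x)^6) MeasureTheory.volume a b := by
  apply ContinuousOn.intervalIntegrable_of_Icc hab
  apply continuousOn_const.div
  · apply ContinuousOn.pow
    apply Real.continuousOn_log.mono
    intro x hx
    have : (2:ℝ) ≤ x := le_trans ha hx.1
    simp only [mem_compl_iff, mem_singleton_iff]
    intro h; rw [h] at this; norm_num at this
  · intro x hx
    have h2 : (2:ℝ) ≤ x := le_trans ha hx.1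
    have : 0 < Real.log x := Real.log_pos (by linarith)
    positivity

lemma sliver_bound (s r v : ℝ) (hs : Real.log 2 ≤ s) (hs1 : s ≤ 1)
    (hr : r ≤ Real.exp s) (hv : v ≤ (r - 2)/s^6) :
    v ≤ ∫ x in (2:ℝ)..Real.exp s, 1/(Real.log x)^6 := by
  have hs0 : 0 < s := lt_of_lt_of_le (Real.log_pos one_lt_two) hs
  have h2e : (2:ℝ) ≤ Real.exp s := by
    rw [show (2:ℝ) = Real.exp (Real.log 2) from (Real.exp_log two_pos).symm]
    exact Real.exp_le_exp.mpr hs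
  have hpw : ∀ x ∈ Icc (2:ℝ) (Real.exp s), (fun _ => 1/s^6 : ℝ → ℝ) x ≤ 1/(Real.log x)^6 := by
    intro x hx
    have hx2 : (2:ℝ) ≤ x := hx.1
    have hL : 0 < Real.log x := Real.log_pos (by linarith)
    have hLs : Real.log x ≤ s := by
      rw [← Real.log_exp s]; exact Real.log_le_log (by linarith) hx.2
    simp only
    gcongr

  have hci : IntervalIntegrable (fun _ => 1/s^6 : ℝ → ℝ) MeasureTheory.volume 2 (Real.exp s) :=
    intervalIntegrable_const
  have hfi := f6_int (le_refl 2) h2e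
  have hconst : ∫ _ in (2:ℝ)..Real.exp s, (1/s^6 : ℝ) = (Real.exp s - 2) * (1/s^6) := by
    rw [intervalIntegral.integral_const]; simp [smul_eq_mul]
  calc v ≤ (r - 2)/s^6 := hv
    _ ≤ (Real.exp s - 2) * (1/s^6) := by
        rw [div_eq_mul_one_div]
        have hr2 : r - 2 ≤ Real.exp s - 2 := by linarith
        exact mul_le_mul_of_nonneg_right hr2 (by positivity)
    _ = ∫ _ in (2:ℝ)..Real.exp s, (1/s^6 : ℝ) := hconst.symm
    _ ≤ _ := integral_mono_on h2e hci hfi hpw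

lemma hasDeriv_G {x : ℝ} (hx : 2 ≤ x) :
    HasDerivAt (fun y => y/Real.log y + y/Real.log y^2 + 2*y/Real.log y^3
      + 6*y/Real.log y^4 + 24*y/Real.log y^5)
      (1/Real.log x - 120 * (1/(Real.log x)^6)) x := by
  have hx0 : (0:ℝ) < x := by linarith
  have hx1 : (1:ℝ) < x := by linarith
  have hL : 0 < Real.log x := Real.log_pos hx1
  have hL0 : Real.log x ≠ 0 := ne_of_gt hL
  have hlog : HasDerivAt Real.log x⁻¹ x := Real.hasDerivAt_log (ne_of_gt hx0)
  have hid := hasDerivAt_id x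
  have t1 := hid.div hlog hL0
  have t2 := hid.div (hlog.pow 2) (pow_ne_zero 2 hL0)
  have t3 := (hid.const_mul (2:ℝ)).div (hlog.pow 3) (pow_ne_zero 3 hL0)
  have t4 := (hid.const_mul (6:ℝ)).div (hlog.pow 4) (pow_ne_zero 4 hL0)
  have t5 := (hid.const_mul (24:ℝ)).div (hlog.pow 5) (pow_ne_zero 5 hL0)
  have hsum := (((t1.add t2).add t3).add t4).add t5
  refine hsum.congr_deriv ?_
  push_cast [Pi.pow_apply, Pi.add_apply, id_eq]
  field_simp
  ring

lemma exp_le_564 : Real.exp (19797/3125 : ℝ) ≤ 564 := by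
  have h2 := Real.log_two_gt_d9
  have hser := Real.abs_log_sub_add_sum_range_le (x := -(13/128)) (by rw [abs_lt]; constructor <;> norm_num) 5
  have habs := abs_le.mp hser
  have hlow := habs.1
  have hsum : (∑ i ∈ Finset.range 5, (-(13/128):ℝ)^(i+1)/(i+1)) =
      -(13/128) + (13/128)^2/2 - (13/128)^3/3 + (13/128)^4/4 - (13/128)^5/5 := by
    simp [Finset.sum_range_succ]
    norm_num
  have h141 : (1:ℝ) - -(13/128) = 141/128 := by norm_num
  rw [h141, hsum] at hlow
  have habs6 : |(-(13/128):ℝ)| = 13/128 := by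
    rw [abs_neg, abs_of_pos] <;> norm_num
  rw [habs6] at hlow
  have hlog141 : Real.log (141/128) ≥ 0.0967278 := by
    norm_num at hlow ⊢
    linarith
  have hlog564 : Real.log 564 = 9 * Real.log 2 + Real.log (141/128) := by
    rw [show (564:ℝ) = 2^9 * (141/128) by norm_num,
      Real.log_mul (by positivity) (by norm_num), Real.log_pow]
    push_cast; ring
  have : ((19797:ℝ)/3125) ≤ Real.log 564 := by
    rw [hlog564]; nlinarith
  calc Real.exp ((19797:ℝ)/3125) ≤ Real.exp (Real.log 564) := Real.exp_le_exp.mpr this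
    _ = 564 := Real.exp_log (by norm_num)

lemma two_le_exp {u : ℝ} (hu : (0.69315:ℝ) ≤ u) : (2:ℝ) ≤ Real.exp u := by
  rw [show (2:ℝ) = Real.exp (Real.log 2) from (Real.exp_log two_pos).symm]
  refine Real.exp_le_exp.mpr ?_
  linarith [Real.log_two_lt_d9]

lemma f1_int {b : ℝ} (hb : 2 ≤ b) :
    IntervalIntegrable (fun x => 1/Real.log x) MeasureTheory.volume 2 b := by
  apply ContinuousOn.intervalIntegrable_of_Icc hb
  apply continuousOn_const.div
  · apply Real.continuousOn_log.mono
    intro x hx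
    have : (2:ℝ) ≤ x := hx.1
    simp only [mem_compl_iff, mem_singleton_iff]
    intro h; rw [h] at this; norm_num at this
  · intro x hx
    have : 0 < Real.log x := Real.log_pos (by linarith [hx.1])
    positivity

lemma pieceAux0 : (418493588913/200000000000 : ℝ) ≤ ∫ x in Real.exp (13863/20000 : ℝ)..Real.exp (18563/20000 : ℝ), 1/(Real.log x)^6 := by
  refine piece_bound (13863/20000 : ℝ) (18563/20000 : ℝ) (47/400 : ℝ) (250000704811/125000000000 : ℝ) (418493588913/200000000000 : ℝ)
    (by norm_num) (by norm_num) (by norm_num) (by norm_num) (by norm_num) ?_ ?_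
  · refine le_trans ?_ (Real.sum_le_exp_of_nonneg (by norm_num) 30)
    simp only [Finset.sum_range_succ, Finset.sum_range_zero]
    norm_num [Nat.factorial]
  · simp only [Pq]
    norm_num

lemma pieceAux1 : (545719811921/1000000000000 : ℝ) ≤ ∫ x in Real.exp (18563/20000 : ℝ)..Real.exp (23263/20000 : ℝ), 1/(Real.log x)^6 := by
  refine piece_bound (18563/20000 : ℝ) (23263/20000 : ℝ) (47/400 : ℝ) (1264912334819/500000000000 : ℝ) (545719811921/1000000000000 : ℝ)
    (by norm_num) (by norm_num) (by norm_num) (by norm_num) (by norm_num) ?_ ?_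
  · refine le_trans ?_ (Real.sum_le_exp_of_nonneg (by norm_num) 30)
    simp only [Finset.sum_range_succ, Finset.sum_range_zero]
    norm_num [Nat.factorial]
  · simp only [Pq]
    norm_num

lemma pieceAux2 : (1558719323/7812500000 : ℝ) ≤ ∫ x in Real.exp (23263/20000 : ℝ)..Real.exp (27963/20000 : ℝ), 1/(Real.log x)^6 := by
  refine piece_bound (23263/20000 : ℝ) (27963/20000 : ℝ) (47/400 : ℝ) (1599998703991/500000000000 : ℝ) (1558719323/7812500000 : ℝ)
    (by norm_num) (by norm_num) (by norm_num) (by norm_num) (by norm_num) ?_ ?_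
  · refine le_trans ?_ (Real.sum_le_exp_of_nonneg (by norm_num) 30)
    simp only [Finset.sum_range_succ, Finset.sum_range_zero]
    norm_num [Nat.factorial]
  · simp only [Pq]
    norm_num

lemma pieceAux3 : (3623906047/40000000000 : ℝ) ≤ ∫ x in Real.exp (27963/20000 : ℝ)..Real.exp (32663/20000 : ℝ), 1/(Real.log x)^6 := by
  refine piece_bound (27963/20000 : ℝ) (32663/20000 : ℝ) (47/400 : ℝ) (25298154883/6250000000 : ℝ) (3623906047/40000000000 : ℝ)
    (by norm_num) (by norm_num) (by norm_num) (by norm_num) (by norm_num) ?_ ?_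
  · refine le_trans ?_ (Real.sum_le_exp_of_nonneg (by norm_num) 30)
    simp only [Finset.sum_range_succ, Finset.sum_range_zero]
    norm_num [Nat.factorial]
  · simp only [Pq]
    norm_num

lemma pieceAux4 : (1495857451/31250000000 : ℝ) ≤ ∫ x in Real.exp (32663/20000 : ℝ)..Real.exp (37363/20000 : ℝ), 1/(Real.log x)^6 := by
  refine piece_bound (32663/20000 : ℝ) (37363/20000 : ℝ) (47/400 : ℝ) (5119977271083/1000000000000 : ℝ) (1495857451/31250000000 : ℝ)
    (by norm_num) (by norm_num) (by norm_num) (by norm_num) (by norm_num) ?_ ?_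
  · refine le_trans ?_ (Real.sum_le_exp_of_nonneg (by norm_num) 30)
    simp only [Finset.sum_range_succ, Finset.sum_range_zero]
    norm_num [Nat.factorial]
  · simp only [Pq]
    norm_num

lemma pieceAux5 : (7072447151/250000000000 : ℝ) ≤ ∫ x in Real.exp (37363/20000 : ℝ)..Real.exp (42063/20000 : ℝ), 1/(Real.log x)^6 := by
  refine piece_bound (37363/20000 : ℝ) (42063/20000 : ℝ) (47/400 : ℝ) (3238152072953/500000000000 : ℝ) (7072447151/250000000000 : ℝ)
    (by norm_num) (by norm_num) (by norm_num) (by norm_num) (by norm_num) ?_ ?_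
  · refine le_trans ?_ (Real.sum_le_exp_of_nonneg (by norm_num) 30)
    simp only [Finset.sum_range_succ, Finset.sum_range_zero]
    norm_num [Nat.factorial]
  · simp only [Pq]
    norm_num

lemma pieceAux6 : (18227361043/1000000000000 : ℝ) ≤ ∫ x in Real.exp (42063/20000 : ℝ)..Real.exp (46763/20000 : ℝ), 1/(Real.log x)^6 := by
  refine piece_bound (42063/20000 : ℝ) (46763/20000 : ℝ) (47/400 : ℝ) (8191933903137/1000000000000 : ℝ) (18227361043/1000000000000 : ℝ)
    (by norm_num) (by norm_num) (by norm_num) (by norm_num) (by norm_num) ?_ ?_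
  · refine le_trans ?_ (Real.sum_le_exp_of_nonneg (by norm_num) 30)
    simp only [Finset.sum_range_succ, Finset.sum_range_zero]
    norm_num [Nat.factorial]
  · simp only [Pq]
    norm_num

lemma pieceAux7 : (2515689589/200000000000 : ℝ) ≤ ∫ x in Real.exp (46763/20000 : ℝ)..Real.exp (51463/20000 : ℝ), 1/(Real.log x)^6 := by
  refine piece_bound (46763/20000 : ℝ) (51463/20000 : ℝ) (47/400 : ℝ) (10362049026959/1000000000000 : ℝ) (2515689589/200000000000 : ℝ)
    (by norm_num) (by norm_num) (by norm_num) (by norm_num) (by norm_num) ?_ ?_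
  · refine le_trans ?_ (Real.sum_le_exp_of_nonneg (by norm_num) 30)
    simp only [Finset.sum_range_succ, Finset.sum_range_zero]
    norm_num [Nat.factorial]
  · simp only [Pq]
    norm_num

lemma pieceAux8 : (1147396269/125000000000 : ℝ) ≤ ∫ x in Real.exp (51463/20000 : ℝ)..Real.exp (56163/20000 : ℝ), 1/(Real.log x)^6 := by
  refine piece_bound (51463/20000 : ℝ) (56163/20000 : ℝ) (47/400 : ℝ) (13107046676241/1000000000000 : ℝ) (1147396269/125000000000 : ℝ)
    (by norm_num) (by norm_num) (by norm_num) (by norm_num) (by norm_num) ?_ ?_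
  · refine le_trans ?_ (Real.sum_le_exp_of_nonneg (by norm_num) 30)
    simp only [Finset.sum_range_succ, Finset.sum_range_zero]
    norm_num [Nat.factorial]
  · simp only [Pq]
    norm_num

lemma pieceAux9 : (438545139/62500000000 : ℝ) ≤ ∫ x in Real.exp (56163/20000 : ℝ)..Real.exp (60863/20000 : ℝ), 1/(Real.log x)^6 := by
  refine piece_bound (56163/20000 : ℝ) (60863/20000 : ℝ) (47/400 : ℝ) (2072402284121/125000000000 : ℝ) (438545139/62500000000 : ℝ)
    (by norm_num) (by norm_num) (by norm_num) (by norm_num) (by norm_num) ?_ ?_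
  · refine le_trans ?_ (Real.sum_le_exp_of_nonneg (by norm_num) 30)
    simp only [Finset.sum_range_succ, Finset.sum_range_zero]
    norm_num [Nat.factorial]
  · simp only [Pq]
    norm_num

lemma pieceAux10 : (5577903871/1000000000000 : ℝ) ≤ ∫ x in Real.exp (60863/20000 : ℝ)..Real.exp (65563/20000 : ℝ), 1/(Real.log x)^6 := by
  refine piece_bound (60863/20000 : ℝ) (65563/20000 : ℝ) (47/400 : ℝ) (10485599286107/500000000000 : ℝ) (5577903871/1000000000000 : ℝ)
    (by norm_num) (by norm_num) (by norm_num) (by norm_num) (by norm_num) ?_ ?_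
  · refine le_trans ?_ (Real.sum_le_exp_of_nonneg (by norm_num) 30)
    simp only [Finset.sum_range_succ, Finset.sum_range_zero]
    norm_num [Nat.factorial]
  · simp only [Pq]
    norm_num

lemma pieceAux11 : (4585130267/1000000000000 : ℝ) ≤ ∫ x in Real.exp (65563/20000 : ℝ)..Real.exp (70263/20000 : ℝ), 1/(Real.log x)^6 := by
  refine piece_bound (65563/20000 : ℝ) (70263/20000 : ℝ) (47/400 : ℝ) (26526652964833/1000000000000 : ℝ) (4585130267/1000000000000 : ℝ)
    (by norm_num) (by norm_num) (by norm_num) (by norm_num) (by norm_num) ?_ ?_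
  · refine le_trans ?_ (Real.sum_le_exp_of_nonneg (by norm_num) 30)
    simp only [Finset.sum_range_succ, Finset.sum_range_zero]
    norm_num [Nat.factorial]
  · simp only [Pq]
    norm_num

lemma pieceAux12 : (121245129/31250000000 : ℝ) ≤ ∫ x in Real.exp (70263/20000 : ℝ)..Real.exp (74963/20000 : ℝ), 1/(Real.log x)^6 := by
  refine piece_bound (70263/20000 : ℝ) (74963/20000 : ℝ) (47/400 : ℝ) (33553795940351/1000000000000 : ℝ) (121245129/31250000000 : ℝ)
    (by norm_num) (by norm_num) (by norm_num) (by norm_num) (by norm_num) ?_ ?_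
  · refine le_trans ?_ (Real.sum_le_exp_of_nonneg (by norm_num) 30)
    simp only [Finset.sum_range_succ, Finset.sum_range_zero]
    norm_num [Nat.factorial]
  · simp only [Pq]
    norm_num

lemma pieceAux13 : (673441269/200000000000 : ℝ) ≤ ∫ x in Real.exp (74963/20000 : ℝ)..Real.exp (79663/20000 : ℝ), 1/(Real.log x)^6 := by
  refine piece_bound (74963/20000 : ℝ) (79663/20000 : ℝ) (47/400 : ℝ) (1697699628369/40000000000 : ℝ) (673441269/200000000000 : ℝ)
    (by norm_num) (by norm_num) (by norm_num) (by norm_num) (by norm_num) ?_ ?_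
  · refine le_trans ?_ (Real.sum_le_exp_of_nonneg (by norm_num) 30)
    simp only [Finset.sum_range_succ, Finset.sum_range_zero]
    norm_num [Nat.factorial]
  · simp only [Pq]
    norm_num

lemma pieceAux14 : (1494110667/500000000000 : ℝ) ≤ ∫ x in Real.exp (79663/20000 : ℝ)..Real.exp (84363/20000 : ℝ), 1/(Real.log x)^6 := by
  refine piece_bound (79663/20000 : ℝ) (84363/20000 : ℝ) (47/400 : ℝ) (53685878664963/1000000000000 : ℝ) (1494110667/500000000000 : ℝ)
    (by norm_num) (by norm_num) (by norm_num) (by norm_num) (by norm_num) ?_ ?_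
  · refine le_trans ?_ (Real.sum_le_exp_of_nonneg (by norm_num) 30)
    simp only [Finset.sum_range_succ, Finset.sum_range_zero]
    norm_num [Nat.factorial]
  · simp only [Pq]
    norm_num

lemma pieceAux15 : (540988447/200000000000 : ℝ) ≤ ∫ x in Real.exp (84363/20000 : ℝ)..Real.exp (89063/20000 : ℝ), 1/(Real.log x)^6 := by
  refine piece_bound (84363/20000 : ℝ) (89063/20000 : ℝ) (47/400 : ℝ) (33953869340221/500000000000 : ℝ) (540988447/200000000000 : ℝ)
    (by norm_num) (by norm_num) (by norm_num) (by norm_num) (by norm_num) ?_ ?_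
  · refine le_trans ?_ (Real.sum_le_exp_of_nonneg (by norm_num) 30)
    simp only [Finset.sum_range_succ, Finset.sum_range_zero]
    norm_num [Nat.factorial]
  · simp only [Pq]
    norm_num

lemma pieceAux16 : (1246129293/500000000000 : ℝ) ≤ ∫ x in Real.exp (89063/20000 : ℝ)..Real.exp (93763/20000 : ℝ), 1/(Real.log x)^6 := by
  refine piece_bound (89063/20000 : ℝ) (93763/20000 : ℝ) (47/400 : ℝ) (85897094121713/1000000000000 : ℝ) (1246129293/500000000000 : ℝ)
    (by norm_num) (by norm_num) (by norm_num) (by norm_num) (by norm_num) ?_ ?_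
  · refine le_trans ?_ (Real.sum_le_exp_of_nonneg (by norm_num) 30)
    simp only [Finset.sum_range_succ, Finset.sum_range_zero]
    norm_num [Nat.factorial]
  · simp only [Pq]
    norm_num

lemma pieceAux17 : (2333156169/1000000000000 : ℝ) ≤ ∫ x in Real.exp (93763/20000 : ℝ)..Real.exp (98463/20000 : ℝ), 1/(Real.log x)^6 := by
  refine piece_bound (93763/20000 : ℝ) (98463/20000 : ℝ) (47/400 : ℝ) (108651987563229/1000000000000 : ℝ) (2333156169/1000000000000 : ℝ)
    (by norm_num) (by norm_num) (by norm_num) (by norm_num) (by norm_num) ?_ ?_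
  · refine le_trans ?_ (Real.sum_le_exp_of_nonneg (by norm_num) 30)
    simp only [Finset.sum_range_succ, Finset.sum_range_zero]
    norm_num [Nat.factorial]
  · simp only [Pq]
    norm_num

lemma pieceAux18 : (27698571/12500000000 : ℝ) ≤ ∫ x in Real.exp (98463/20000 : ℝ)..Real.exp (103163/20000 : ℝ), 1/(Real.log x)^6 := by
  refine piece_bound (98463/20000 : ℝ) (103163/20000 : ℝ) (47/400 : ℝ) (27486970361797/200000000000 : ℝ) (27698571/12500000000 : ℝ)
    (by norm_num) (by norm_num) (by norm_num) (by norm_num) (by norm_num) ?_ ?_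
  · refine le_trans ?_ (Real.sum_le_exp_of_nonneg (by norm_num) 30)
    simp only [Finset.sum_range_succ, Finset.sum_range_zero]
    norm_num [Nat.factorial]
  · simp only [Pq]
    norm_num

lemma pieceAux19 : (533054987/250000000000 : ℝ) ≤ ∫ x in Real.exp (103163/20000 : ℝ)..Real.exp (107863/20000 : ℝ), 1/(Real.log x)^6 := by
  refine piece_bound (103163/20000 : ℝ) (107863/20000 : ℝ) (47/400 : ℝ) (173842549182691/1000000000000 : ℝ) (533054987/250000000000 : ℝ)
    (by norm_num) (by norm_num) (by norm_num) (by norm_num) (by norm_num) ?_ ?_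
  · refine le_trans ?_ (Real.sum_le_exp_of_nonneg (by norm_num) 30)
    simp only [Finset.sum_range_succ, Finset.sum_range_zero]
    norm_num [Nat.factorial]
  · simp only [Pq]
    norm_num

lemma pieceAux20 : (2076352657/1000000000000 : ℝ) ≤ ∫ x in Real.exp (107863/20000 : ℝ)..Real.exp (112563/20000 : ℝ), 1/(Real.log x)^6 := by
  refine piece_bound (107863/20000 : ℝ) (112563/20000 : ℝ) (47/400 : ℝ) (43978992968013/200000000000 : ℝ) (2076352657/1000000000000 : ℝ)
    (by norm_num) (by norm_num) (by norm_num) (by norm_num) (by norm_num) ?_ ?_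
  · refine le_trans ?_ (Real.sum_le_exp_of_nonneg (by norm_num) 30)
    simp only [Finset.sum_range_succ, Finset.sum_range_zero]
    norm_num [Nat.factorial]
  · simp only [Pq]
    norm_num

lemma pieceAux21 : (255523317/125000000000 : ℝ) ≤ ∫ x in Real.exp (112563/20000 : ℝ)..Real.exp (117263/20000 : ℝ), 1/(Real.log x)^6 := by
  refine piece_bound (112563/20000 : ℝ) (117263/20000 : ℝ) (47/400 : ℝ) (27814706922641/100000000000 : ℝ) (255523317/125000000000 : ℝ)
    (by norm_num) (by norm_num) (by norm_num) (by norm_num) (by norm_num) ?_ ?_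
  · refine le_trans ?_ (Real.sum_le_exp_of_nonneg (by norm_num) 30)
    simp only [Finset.sum_range_succ, Finset.sum_range_zero]
    norm_num [Nat.factorial]
  · simp only [Pq]
    norm_num

lemma pieceAux22 : (1016432289/500000000000 : ℝ) ≤ ∫ x in Real.exp (117263/20000 : ℝ)..Real.exp (121963/20000 : ℝ), 1/(Real.log x)^6 := by
  refine piece_bound (117263/20000 : ℝ) (121963/20000 : ℝ) (47/400 : ℝ) (4397883335773/12500000000 : ℝ) (1016432289/500000000000 : ℝ)
    (by norm_num) (by norm_num) (by norm_num) (by norm_num) (by norm_num) ?_ ?_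
  · refine le_trans ?_ (Real.sum_le_exp_of_nonneg (by norm_num) 30)
    simp only [Finset.sum_range_succ, Finset.sum_range_zero]
    norm_num [Nat.factorial]
  · simp only [Pq]
    norm_num

lemma pieceAux23 : (204045683/100000000000 : ℝ) ≤ ∫ x in Real.exp (121963/20000 : ℝ)..Real.exp (126663/20000 : ℝ), 1/(Real.log x)^6 := by
  refine piece_bound (121963/20000 : ℝ) (126663/20000 : ℝ) (47/400 : ℝ) (445033695622683/1000000000000 : ℝ) (204045683/100000000000 : ℝ)
    (by norm_num) (by norm_num) (by norm_num) (by norm_num) (by norm_num) ?_ ?_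
  · refine le_trans ?_ (Real.sum_le_exp_of_nonneg (by norm_num) 30)
    simp only [Finset.sum_range_succ, Finset.sum_range_zero]
    norm_num [Nat.factorial]
  · simp only [Pq]
    norm_num

lemma pieceAux24 : (128827/7812500000 : ℝ) ≤ ∫ x in Real.exp (126663/20000 : ℝ)..Real.exp (19797/3125 : ℝ), 1/(Real.log x)^6 := by
  refine piece_bound (126663/20000 : ℝ) (19797/3125 : ℝ) (47/400 : ℝ) (35182938998421/62500000000 : ℝ) (128827/7812500000 : ℝ)
    (by norm_num) (by norm_num) (by norm_num) (by norm_num) (by norm_num) ?_ ?_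
  · refine le_trans ?_ (Real.sum_le_exp_of_nonneg (by norm_num) 30)
    simp only [Finset.sum_range_succ, Finset.sum_range_zero]
    norm_num [Nat.factorial]
  · simp only [Pq]
    norm_num


theorem li_lower_bound (n : ℝ) (hn : 564 ≤ n) :
    (∫ x in (2:ℝ)..n, 1 / Real.log x) >
      n / Real.log n + n / (Real.log n) ^ 2 + 2 * n / (Real.log n) ^ 3
        + 6 * n / (Real.log n) ^ 4 + 24 * n / (Real.log n) ^ 5 := by
  have hn2 : (2:ℝ) ≤ n := by linarith
  have hi1 : IntervalIntegrable (fun x => 1/Real.log x) MeasureTheory.volume 2 n := f1_int hn2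
  have hi6 : IntervalIntegrable (fun x => 1/(Real.log x)^6) MeasureTheory.volume 2 n :=
    f6_int (le_refl 2) hn2
  have hid : IntervalIntegrable (fun x => 1/Real.log x - 120*(1/(Real.log x)^6))
      MeasureTheory.volume 2 n := hi1.sub (hi6.const_mul 120)
  have key := intervalIntegral.integral_eq_sub_of_hasDerivAt
    (f := fun y => y/Real.log y + y/Real.log y^2 + 2*y/Real.log y^3
      + 6*y/Real.log y^4 + 24*y/Real.log y^5)
    (f' := fun x => 1/Real.log x - 120 * (1/(Real.log x)^6))
    (fun x hx => hasDeriv_G (by rw [uIcc_of_le hn2] at hx; exact hx.1)) hid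
  have hsplit : (∫ x in (2:ℝ)..n, 1/Real.log x)
      = (∫ x in (2:ℝ)..n, (1/Real.log x - 120*(1/(Real.log x)^6)))
        + 120 * ∫ x in (2:ℝ)..n, 1/(Real.log x)^6 := by
    rw [← intervalIntegral.integral_const_mul,
      ← intervalIntegral.integral_add hid (hi6.const_mul 120)]
    exact intervalIntegral.integral_congr (fun x _ => by ring)
  -- the integral lower bound
  have S0 : (12709817/250000000000 : ℝ) ≤ ∫ x in (2:ℝ)..Real.exp (13863/20000 : ℝ), 1/(Real.log x)^6 := by
    refine sliver_bound (13863/20000 : ℝ) (250000704811/125000000000 : ℝ) (12709817/250000000000 : ℝ) (by linarith [Real.log_two_lt_d9]) (by norm_num) ?_ (by norm_num)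
    refine le_trans ?_ (Real.sum_le_exp_of_nonneg (by norm_num) 30)
    simp only [Finset.sum_range_succ, Finset.sum_range_zero]
    norm_num [Nat.factorial]
  have S1 : (2092518783833/1000000000000 : ℝ) ≤ ∫ x in (2:ℝ)..Real.exp (18563/20000 : ℝ), 1/(Real.log x)^6 := by
    have h1 : IntervalIntegrable (fun x => 1/(Real.log x)^6) MeasureTheory.volume 2 (Real.exp (13863/20000 : ℝ)) :=
      f6_int (le_refl 2) (two_le_exp (by norm_num))
    have h2 : IntervalIntegrable (fun x => 1/(Real.log x)^6) MeasureTheory.volume (Real.exp (13863/20000 : ℝ)) (Real.exp (18563/20000 : ℝ)) :=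
      f6_int (two_le_exp (by norm_num)) (Real.exp_le_exp.mpr (by norm_num))
    rw [← intervalIntegral.integral_add_adjacent_intervals h1 h2]
    refine le_trans (le_of_eq (by norm_num)) (add_le_add S0 pieceAux0)
  have S2 : (1319119297877/500000000000 : ℝ) ≤ ∫ x in (2:ℝ)..Real.exp (23263/20000 : ℝ), 1/(Real.log x)^6 := by
    have h1 : IntervalIntegrable (fun x => 1/(Real.log x)^6) MeasureTheory.volume 2 (Real.exp (18563/20000 : ℝ)) :=
      f6_int (le_refl 2) (two_le_exp (by norm_num))
    have h2 : IntervalIntegrable (fun x => 1/(Real.log x)^6) MeasureTheory.volume (Real.exp (18563/20000 : ℝ)) (Real.exp (23263/20000 : ℝ)) :=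
      f6_int (two_le_exp (by norm_num)) (Real.exp_le_exp.mpr (by norm_num))
    rw [← intervalIntegral.integral_add_adjacent_intervals h1 h2]
    refine le_trans (le_of_eq (by norm_num)) (add_le_add S1 pieceAux1)
  have S3 : (1418877334549/500000000000 : ℝ) ≤ ∫ x in (2:ℝ)..Real.exp (27963/20000 : ℝ), 1/(Real.log x)^6 := by
    have h1 : IntervalIntegrable (fun x => 1/(Real.log x)^6) MeasureTheory.volume 2 (Real.exp (23263/20000 : ℝ)) :=
      f6_int (le_refl 2) (two_le_exp (by norm_num))
    have h2 : IntervalIntegrable (fun x => 1/(Real.log x)^6) MeasureTheory.volume (Real.exp (23263/20000 : ℝ)) (Real.exp (27963/20000 : ℝ)) :=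
      f6_int (two_le_exp (by norm_num)) (Real.exp_le_exp.mpr (by norm_num))
    rw [← intervalIntegral.integral_add_adjacent_intervals h1 h2]
    refine le_trans (le_of_eq (by norm_num)) (add_le_add S2 pieceAux2)
  have S4 : (2928352320273/1000000000000 : ℝ) ≤ ∫ x in (2:ℝ)..Real.exp (32663/20000 : ℝ), 1/(Real.log x)^6 := by
    have h1 : IntervalIntegrable (fun x => 1/(Real.log x)^6) MeasureTheory.volume 2 (Real.exp (27963/20000 : ℝ)) :=
      f6_int (le_refl 2) (two_le_exp (by norm_num))
    have h2 : IntervalIntegrable (fun x => 1/(Real.log x)^6) MeasureTheory.volume (Real.exp (27963/20000 : ℝ)) (Real.exp (32663/20000 : ℝ)) :=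
      f6_int (two_le_exp (by norm_num)) (Real.exp_le_exp.mpr (by norm_num))
    rw [← intervalIntegral.integral_add_adjacent_intervals h1 h2]
    refine le_trans (le_of_eq (by norm_num)) (add_le_add S3 pieceAux3)
  have S5 : (595243951741/200000000000 : ℝ) ≤ ∫ x in (2:ℝ)..Real.exp (37363/20000 : ℝ), 1/(Real.log x)^6 := by
    have h1 : IntervalIntegrable (fun x => 1/(Real.log x)^6) MeasureTheory.volume 2 (Real.exp (32663/20000 : ℝ)) :=
      f6_int (le_refl 2) (two_le_exp (by norm_num))
    have h2 : IntervalIntegrable (fun x => 1/(Real.log x)^6) MeasureTheory.volume (Real.exp (32663/20000 : ℝ)) (Real.exp (37363/20000 : ℝ)) :=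
      f6_int (two_le_exp (by norm_num)) (Real.exp_le_exp.mpr (by norm_num))
    rw [← intervalIntegral.integral_add_adjacent_intervals h1 h2]
    refine le_trans (le_of_eq (by norm_num)) (add_le_add S4 pieceAux4)
  have S6 : (3004509547309/1000000000000 : ℝ) ≤ ∫ x in (2:ℝ)..Real.exp (42063/20000 : ℝ), 1/(Real.log x)^6 := by
    have h1 : IntervalIntegrable (fun x => 1/(Real.log x)^6) MeasureTheory.volume 2 (Real.exp (37363/20000 : ℝ)) :=
      f6_int (le_refl 2) (two_le_exp (by norm_num))
    have h2 : IntervalIntegrable (fun x => 1/(Real.log x)^6) MeasureTheory.volume (Real.exp (37363/20000 : ℝ)) (Real.exp (42063/20000 : ℝ)) :=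
      f6_int (two_le_exp (by norm_num)) (Real.exp_le_exp.mpr (by norm_num))
    rw [← intervalIntegral.integral_add_adjacent_intervals h1 h2]
    refine le_trans (le_of_eq (by norm_num)) (add_le_add S5 pieceAux5)
  have S7 : (47230264193/15625000000 : ℝ) ≤ ∫ x in (2:ℝ)..Real.exp (46763/20000 : ℝ), 1/(Real.log x)^6 := by
    have h1 : IntervalIntegrable (fun x => 1/(Real.log x)^6) MeasureTheory.volume 2 (Real.exp (42063/20000 : ℝ)) :=
      f6_int (le_refl 2) (two_le_exp (by norm_num))
    have h2 : IntervalIntegrable (fun x => 1/(Real.log x)^6) MeasureTheory.volume (Real.exp (42063/20000 : ℝ)) (Real.exp (46763/20000 : ℝ)) :=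
      f6_int (two_le_exp (by norm_num)) (Real.exp_le_exp.mpr (by norm_num))
    rw [← intervalIntegral.integral_add_adjacent_intervals h1 h2]
    refine le_trans (le_of_eq (by norm_num)) (add_le_add S6 pieceAux6)
  have S8 : (3035315356297/1000000000000 : ℝ) ≤ ∫ x in (2:ℝ)..Real.exp (51463/20000 : ℝ), 1/(Real.log x)^6 := by
    have h1 : IntervalIntegrable (fun x => 1/(Real.log x)^6) MeasureTheory.volume 2 (Real.exp (46763/20000 : ℝ)) :=
      f6_int (le_refl 2) (two_le_exp (by norm_num))
    have h2 : IntervalIntegrable (fun x => 1/(Real.log x)^6) MeasureTheory.volume (Real.exp (46763/20000 : ℝ)) (Real.exp (51463/20000 : ℝ)) :=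
      f6_int (two_le_exp (by norm_num)) (Real.exp_le_exp.mpr (by norm_num))
    rw [← intervalIntegral.integral_add_adjacent_intervals h1 h2]
    refine le_trans (le_of_eq (by norm_num)) (add_le_add S7 pieceAux7)
  have S9 : (3044494526449/1000000000000 : ℝ) ≤ ∫ x in (2:ℝ)..Real.exp (56163/20000 : ℝ), 1/(Real.log x)^6 := by
    have h1 : IntervalIntegrable (fun x => 1/(Real.log x)^6) MeasureTheory.volume 2 (Real.exp (51463/20000 : ℝ)) :=
      f6_int (le_refl 2) (two_le_exp (by norm_num))
    have h2 : IntervalIntegrable (fun x => 1/(Real.log x)^6) MeasureTheory.volume (Real.exp (51463/20000 : ℝ)) (Real.exp (56163/20000 : ℝ)) :=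
      f6_int (two_le_exp (by norm_num)) (Real.exp_le_exp.mpr (by norm_num))
    rw [← intervalIntegral.integral_add_adjacent_intervals h1 h2]
    refine le_trans (le_of_eq (by norm_num)) (add_le_add S8 pieceAux8)
  have S10 : (3051511248673/1000000000000 : ℝ) ≤ ∫ x in (2:ℝ)..Real.exp (60863/20000 : ℝ), 1/(Real.log x)^6 := by
    have h1 : IntervalIntegrable (fun x => 1/(Real.log x)^6) MeasureTheory.volume 2 (Real.exp (56163/20000 : ℝ)) :=
      f6_int (le_refl 2) (two_le_exp (by norm_num))
    have h2 : IntervalIntegrable (fun x => 1/(Real.log x)^6) MeasureTheory.volume (Real.exp (56163/20000 : ℝ)) (Real.exp (60863/20000 : ℝ)) :=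
      f6_int (two_le_exp (by norm_num)) (Real.exp_le_exp.mpr (by norm_num))
    rw [← intervalIntegral.integral_add_adjacent_intervals h1 h2]
    refine le_trans (le_of_eq (by norm_num)) (add_le_add S9 pieceAux9)
  have S11 : (95534036017/31250000000 : ℝ) ≤ ∫ x in (2:ℝ)..Real.exp (65563/20000 : ℝ), 1/(Real.log x)^6 := by
    have h1 : IntervalIntegrable (fun x => 1/(Real.log x)^6) MeasureTheory.volume 2 (Real.exp (60863/20000 : ℝ)) :=
      f6_int (le_refl 2) (two_le_exp (by norm_num))
    have h2 : IntervalIntegrable (fun x => 1/(Real.log x)^6) MeasureTheory.volume (Real.exp (60863/20000 : ℝ)) (Real.exp (65563/20000 : ℝ)) :=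
      f6_int (two_le_exp (by norm_num)) (Real.exp_le_exp.mpr (by norm_num))
    rw [← intervalIntegral.integral_add_adjacent_intervals h1 h2]
    refine le_trans (le_of_eq (by norm_num)) (add_le_add S10 pieceAux10)
  have S12 : (3061674282811/1000000000000 : ℝ) ≤ ∫ x in (2:ℝ)..Real.exp (70263/20000 : ℝ), 1/(Real.log x)^6 := by
    have h1 : IntervalIntegrable (fun x => 1/(Real.log x)^6) MeasureTheory.volume 2 (Real.exp (65563/20000 : ℝ)) :=
      f6_int (le_refl 2) (two_le_exp (by norm_num))
    have h2 : IntervalIntegrable (fun x => 1/(Real.log x)^6) MeasureTheory.volume (Real.exp (65563/20000 : ℝ)) (Real.exp (70263/20000 : ℝ)) :=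
      f6_int (two_le_exp (by norm_num)) (Real.exp_le_exp.mpr (by norm_num))
    rw [← intervalIntegral.integral_add_adjacent_intervals h1 h2]
    refine le_trans (le_of_eq (by norm_num)) (add_le_add S11 pieceAux11)
  have S13 : (3065554126939/1000000000000 : ℝ) ≤ ∫ x in (2:ℝ)..Real.exp (74963/20000 : ℝ), 1/(Real.log x)^6 := by
    have h1 : IntervalIntegrable (fun x => 1/(Real.log x)^6) MeasureTheory.volume 2 (Real.exp (70263/20000 : ℝ)) :=
      f6_int (le_refl 2) (two_le_exp (by norm_num))
    have h2 : IntervalIntegrable (fun x => 1/(Real.log x)^6) MeasureTheory.volume (Real.exp (70263/20000 : ℝ)) (Real.exp (74963/20000 : ℝ)) :=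
      f6_int (two_le_exp (by norm_num)) (Real.exp_le_exp.mpr (by norm_num))
    rw [← intervalIntegral.integral_add_adjacent_intervals h1 h2]
    refine le_trans (le_of_eq (by norm_num)) (add_le_add S12 pieceAux12)
  have S14 : (767230333321/250000000000 : ℝ) ≤ ∫ x in (2:ℝ)..Real.exp (79663/20000 : ℝ), 1/(Real.log x)^6 := by
    have h1 : IntervalIntegrable (fun x => 1/(Real.log x)^6) MeasureTheory.volume 2 (Real.exp (74963/20000 : ℝ)) :=
      f6_int (le_refl 2) (two_le_exp (by norm_num))
    have h2 : IntervalIntegrable (fun x => 1/(Real.log x)^6) MeasureTheory.volume (Real.exp (74963/20000 : ℝ)) (Real.exp (79663/20000 : ℝ)) :=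
      f6_int (two_le_exp (by norm_num)) (Real.exp_le_exp.mpr (by norm_num))
    rw [← intervalIntegral.integral_add_adjacent_intervals h1 h2]
    refine le_trans (le_of_eq (by norm_num)) (add_le_add S13 pieceAux13)
  have S15 : (1535954777309/500000000000 : ℝ) ≤ ∫ x in (2:ℝ)..Real.exp (84363/20000 : ℝ), 1/(Real.log x)^6 := by
    have h1 : IntervalIntegrable (fun x => 1/(Real.log x)^6) MeasureTheory.volume 2 (Real.exp (79663/20000 : ℝ)) :=
      f6_int (le_refl 2) (two_le_exp (by norm_num))
    have h2 : IntervalIntegrable (fun x => 1/(Real.log x)^6) MeasureTheory.volume (Real.exp (79663/20000 : ℝ)) (Real.exp (84363/20000 : ℝ)) :=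
      f6_int (two_le_exp (by norm_num)) (Real.exp_le_exp.mpr (by norm_num))
    rw [← intervalIntegral.integral_add_adjacent_intervals h1 h2]
    refine le_trans (le_of_eq (by norm_num)) (add_le_add S14 pieceAux14)
  have S16 : (3074614496853/1000000000000 : ℝ) ≤ ∫ x in (2:ℝ)..Real.exp (89063/20000 : ℝ), 1/(Real.log x)^6 := by
    have h1 : IntervalIntegrable (fun x => 1/(Real.log x)^6) MeasureTheory.volume 2 (Real.exp (84363/20000 : ℝ)) :=
      f6_int (le_refl 2) (two_le_exp (by norm_num))
    have h2 : IntervalIntegrable (fun x => 1/(Real.log x)^6) MeasureTheory.volume (Real.exp (84363/20000 : ℝ)) (Real.exp (89063/20000 : ℝ)) :=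
      f6_int (two_le_exp (by norm_num)) (Real.exp_le_exp.mpr (by norm_num))
    rw [← intervalIntegral.integral_add_adjacent_intervals h1 h2]
    refine le_trans (le_of_eq (by norm_num)) (add_le_add S15 pieceAux15)
  have S17 : (3077106755439/1000000000000 : ℝ) ≤ ∫ x in (2:ℝ)..Real.exp (93763/20000 : ℝ), 1/(Real.log x)^6 := by
    have h1 : IntervalIntegrable (fun x => 1/(Real.log x)^6) MeasureTheory.volume 2 (Real.exp (89063/20000 : ℝ)) :=
      f6_int (le_refl 2) (two_le_exp (by norm_num))
    have h2 : IntervalIntegrable (fun x => 1/(Real.log x)^6) MeasureTheory.volume (Real.exp (89063/20000 : ℝ)) (Real.exp (93763/20000 : ℝ)) :=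
      f6_int (two_le_exp (by norm_num)) (Real.exp_le_exp.mpr (by norm_num))
    rw [← intervalIntegral.integral_add_adjacent_intervals h1 h2]
    refine le_trans (le_of_eq (by norm_num)) (add_le_add S16 pieceAux16)
  have S18 : (384929988951/125000000000 : ℝ) ≤ ∫ x in (2:ℝ)..Real.exp (98463/20000 : ℝ), 1/(Real.log x)^6 := by
    have h1 : IntervalIntegrable (fun x => 1/(Real.log x)^6) MeasureTheory.volume 2 (Real.exp (93763/20000 : ℝ)) :=
      f6_int (le_refl 2) (two_le_exp (by norm_num))
    have h2 : IntervalIntegrable (fun x => 1/(Real.log x)^6) MeasureTheory.volume (Real.exp (93763/20000 : ℝ)) (Real.exp (98463/20000 : ℝ)) :=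
      f6_int (two_le_exp (by norm_num)) (Real.exp_le_exp.mpr (by norm_num))
    rw [← intervalIntegral.integral_add_adjacent_intervals h1 h2]
    refine le_trans (le_of_eq (by norm_num)) (add_le_add S17 pieceAux17)
  have S19 : (385206974661/125000000000 : ℝ) ≤ ∫ x in (2:ℝ)..Real.exp (103163/20000 : ℝ), 1/(Real.log x)^6 := by
    have h1 : IntervalIntegrable (fun x => 1/(Real.log x)^6) MeasureTheory.volume 2 (Real.exp (98463/20000 : ℝ)) :=
      f6_int (le_refl 2) (two_le_exp (by norm_num))
    have h2 : IntervalIntegrable (fun x => 1/(Real.log x)^6) MeasureTheory.volume (Real.exp (98463/20000 : ℝ)) (Real.exp (103163/20000 : ℝ)) :=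
      f6_int (two_le_exp (by norm_num)) (Real.exp_le_exp.mpr (by norm_num))
    rw [← intervalIntegral.integral_add_adjacent_intervals h1 h2]
    refine le_trans (le_of_eq (by norm_num)) (add_le_add S18 pieceAux18)
  have S20 : (770947004309/250000000000 : ℝ) ≤ ∫ x in (2:ℝ)..Real.exp (107863/20000 : ℝ), 1/(Real.log x)^6 := by
    have h1 : IntervalIntegrable (fun x => 1/(Real.log x)^6) MeasureTheory.volume 2 (Real.exp (103163/20000 : ℝ)) :=
      f6_int (le_refl 2) (two_le_exp (by norm_num))
    have h2 : IntervalIntegrable (fun x => 1/(Real.log x)^6) MeasureTheory.volume (Real.exp (103163/20000 : ℝ)) (Real.exp (107863/20000 : ℝ)) :=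
      f6_int (two_le_exp (by norm_num)) (Real.exp_le_exp.mpr (by norm_num))
    rw [← intervalIntegral.integral_add_adjacent_intervals h1 h2]
    refine le_trans (le_of_eq (by norm_num)) (add_le_add S19 pieceAux19)
  have S21 : (3085864369893/1000000000000 : ℝ) ≤ ∫ x in (2:ℝ)..Real.exp (112563/20000 : ℝ), 1/(Real.log x)^6 := by
    have h1 : IntervalIntegrable (fun x => 1/(Real.log x)^6) MeasureTheory.volume 2 (Real.exp (107863/20000 : ℝ)) :=
      f6_int (le_refl 2) (two_le_exp (by norm_num))
    have h2 : IntervalIntegrable (fun x => 1/(Real.log x)^6) MeasureTheory.volume (Real.exp (107863/20000 : ℝ)) (Real.exp (112563/20000 : ℝ)) :=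
      f6_int (two_le_exp (by norm_num)) (Real.exp_le_exp.mpr (by norm_num))
    rw [← intervalIntegral.integral_add_adjacent_intervals h1 h2]
    refine le_trans (le_of_eq (by norm_num)) (add_le_add S20 pieceAux20)
  have S22 : (3087908556429/1000000000000 : ℝ) ≤ ∫ x in (2:ℝ)..Real.exp (117263/20000 : ℝ), 1/(Real.log x)^6 := by
    have h1 : IntervalIntegrable (fun x => 1/(Real.log x)^6) MeasureTheory.volume 2 (Real.exp (112563/20000 : ℝ)) :=
      f6_int (le_refl 2) (two_le_exp (by norm_num))
    have h2 : IntervalIntegrable (fun x => 1/(Real.log x)^6) MeasureTheory.volume (Real.exp (112563/20000 : ℝ)) (Real.exp (117263/20000 : ℝ)) :=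
      f6_int (two_le_exp (by norm_num)) (Real.exp_le_exp.mpr (by norm_num))
    rw [← intervalIntegral.integral_add_adjacent_intervals h1 h2]
    refine le_trans (le_of_eq (by norm_num)) (add_le_add S21 pieceAux21)
  have S23 : (3089941421007/1000000000000 : ℝ) ≤ ∫ x in (2:ℝ)..Real.exp (121963/20000 : ℝ), 1/(Real.log x)^6 := by
    have h1 : IntervalIntegrable (fun x => 1/(Real.log x)^6) MeasureTheory.volume 2 (Real.exp (117263/20000 : ℝ)) :=
      f6_int (le_refl 2) (two_le_exp (by norm_num))
    have h2 : IntervalIntegrable (fun x => 1/(Real.log x)^6) MeasureTheory.volume (Real.exp (117263/20000 : ℝ)) (Real.exp (121963/20000 : ℝ)) :=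
      f6_int (two_le_exp (by norm_num)) (Real.exp_le_exp.mpr (by norm_num))
    rw [← intervalIntegral.integral_add_adjacent_intervals h1 h2]
    refine le_trans (le_of_eq (by norm_num)) (add_le_add S22 pieceAux22)
  have S24 : (3091981877837/1000000000000 : ℝ) ≤ ∫ x in (2:ℝ)..Real.exp (126663/20000 : ℝ), 1/(Real.log x)^6 := by
    have h1 : IntervalIntegrable (fun x => 1/(Real.log x)^6) MeasureTheory.volume 2 (Real.exp (121963/20000 : ℝ)) :=
      f6_int (le_refl 2) (two_le_exp (by norm_num))
    have h2 : IntervalIntegrable (fun x => 1/(Real.log x)^6) MeasureTheory.volume (Real.exp (121963/20000 : ℝ)) (Real.exp (126663/20000 : ℝ)) :=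
      f6_int (two_le_exp (by norm_num)) (Real.exp_le_exp.mpr (by norm_num))
    rw [← intervalIntegral.integral_add_adjacent_intervals h1 h2]
    refine le_trans (le_of_eq (by norm_num)) (add_le_add S23 pieceAux23)
  have S25 : (3091998367693/1000000000000 : ℝ) ≤ ∫ x in (2:ℝ)..Real.exp (19797/3125 : ℝ), 1/(Real.log x)^6 := by
    have h1 : IntervalIntegrable (fun x => 1/(Real.log x)^6) MeasureTheory.volume 2 (Real.exp (126663/20000 : ℝ)) :=
      f6_int (le_refl 2) (two_le_exp (by norm_num))
    have h2 : IntervalIntegrable (fun x => 1/(Real.log x)^6) MeasureTheory.volume (Real.exp (126663/20000 : ℝ)) (Real.exp (19797/3125 : ℝ)) :=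
      f6_int (two_le_exp (by norm_num)) (Real.exp_le_exp.mpr (by norm_num))
    rw [← intervalIntegral.integral_add_adjacent_intervals h1 h2]
    refine le_trans (le_of_eq (by norm_num)) (add_le_add S24 pieceAux24)
  have hmono : (∫ x in (2:ℝ)..Real.exp (19797/3125 : ℝ), 1/(Real.log x)^6)
      ≤ ∫ x in (2:ℝ)..n, 1/(Real.log x)^6 := by
    refine intervalIntegral.integral_mono_interval (le_refl 2) (two_le_exp (by norm_num))
      (le_trans exp_le_564 (by linarith)) ?_ hi6
    refine MeasureTheory.ae_of_all _ (fun x => ?_)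
    positivity
  -- bound on G 2
  have hlog2 := Real.log_two_gt_d9
  have hL2 : (0:ℝ) < Real.log 2 := Real.log_pos one_lt_two
  have hp1 : ((6931471803/10000000000:ℝ)) ≤ Real.log 2 := by
    norm_num at hlog2; linarith
  have hp2 : ((6931471803/10000000000:ℝ))^2 ≤ Real.log 2^2 := by
    apply pow_le_pow_left₀ (by norm_num) hp1
  have hp3 : ((6931471803/10000000000:ℝ))^3 ≤ Real.log 2^3 := by
    apply pow_le_pow_left₀ (by norm_num) hp1
  have hp4 : ((6931471803/10000000000:ℝ))^4 ≤ Real.log 2^4 := by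
    apply pow_le_pow_left₀ (by norm_num) hp1
  have hp5 : ((6931471803/10000000000:ℝ))^5 ≤ Real.log 2^5 := by
    apply pow_le_pow_left₀ (by norm_num) hp1
  have hG2 : 2/Real.log 2 + 2/Real.log 2^2 + 2*2/Real.log 2^3 + 6*2/Real.log 2^4
      + 24*2/Real.log 2^5 < (37103936/100000 : ℝ) := by
    have b1 : 2/Real.log 2 ≤ 2/((6931471803/10000000000:ℝ)) :=
      div_le_div_of_nonneg_left (by norm_num) (by norm_num) hp1
    have b2 : 2/Real.log 2^2 ≤ 2/((6931471803/10000000000:ℝ))^2 :=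
      div_le_div_of_nonneg_left (by norm_num) (by positivity) hp2
    have b3 : 2*2/Real.log 2^3 ≤ 2*2/((6931471803/10000000000:ℝ))^3 :=
      div_le_div_of_nonneg_left (by norm_num) (by positivity) hp3
    have b4 : 6*2/Real.log 2^4 ≤ 6*2/((6931471803/10000000000:ℝ))^4 :=
      div_le_div_of_nonneg_left (by norm_num) (by positivity) hp4
    have b5 : 24*2/Real.log 2^5 ≤ 24*2/((6931471803/10000000000:ℝ))^5 :=
      div_le_div_of_nonneg_left (by norm_num) (by positivity) hp5
    have hfin : 2/((6931471803/10000000000:ℝ)) + 2/((6931471803/10000000000:ℝ))^2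
        + 2*2/((6931471803/10000000000:ℝ))^3 + 6*2/((6931471803/10000000000:ℝ))^4
        + 24*2/((6931471803/10000000000:ℝ))^5 < (37103936/100000 : ℝ) := by
      norm_num
    linarith
  have hV : (37103936/100000 : ℝ) < 120 * (3091998367693/1000000000000 : ℝ) := by norm_num
  rw [hsplit, key]
  have hI : (3091998367693/1000000000000 : ℝ) ≤ ∫ x in (2:ℝ)..n, 1/(Real.log x)^6 :=
    le_trans S25 hmono
  linarith
end

section
/- For every real n ≥ 2, 0.144 + ∫₂ⁿ dx/log x < n·Σ_{k=1}^{4} (k−1)!/(log n)^k + 51·n/(log n)⁵ = n/log n + n/(log n)² + 2n/(log n)³ + 6n/(log n)⁴ + 51n/(log n)⁵. -/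
open Finset

open MeasureTheory intervalIntegral Finset

noncomputable def Gf (x : ℝ) : ℝ :=
  x / Real.log x + x / (Real.log x) ^ 2 + 2 * x / (Real.log x) ^ 3
    + 6 * x / (Real.log x) ^ 4 + 51 * x / (Real.log x) ^ 5

noncomputable def If (x : ℝ) : ℝ := ∫ s in (2:ℝ)..x, 1 / Real.log s

noncomputable def Ff (x : ℝ) : ℝ := Gf x - If x

lemma logpos {x : ℝ} (hx : 3/2 < x) : 0 < Real.log x :=
  Real.log_pos (by linarith)

lemma intInt {a b : ℝ} (ha : 3/2 ≤ a) (hb : 3/2 ≤ b) :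
    IntervalIntegrable (fun s => 1 / Real.log s) volume a b := by
  apply ContinuousOn.intervalIntegrable
  intro s hs
  have hs1 : 3/2 ≤ s := by
    rcases Set.mem_uIcc.1 hs with h | h
    · linarith [h.1]
    · linarith [h.1]
  have hl : Real.log s ≠ 0 := ne_of_gt (Real.log_pos (by linarith))
  exact ContinuousAt.continuousWithinAt
    (continuousAt_const.div (Real.continuousAt_log (by linarith : (0:ℝ) < s).ne') hl)

lemma hasDerivAt_Gf {x : ℝ} (hx : 3/2 < x) :
    HasDerivAt Gf (1 / Real.log x + 27 / (Real.log x) ^ 5 - 255 / (Real.log x) ^ 6) x := by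
  have hx0 : x ≠ 0 := by linarith
  have hl : Real.log x ≠ 0 := ne_of_gt (logpos hx)
  have hlog := Real.hasDerivAt_log hx0
  have t1 : HasDerivAt (fun y => y / Real.log y)
      ((1 * Real.log x - x * x⁻¹) / (Real.log x) ^ 2) x :=
    (hasDerivAt_id' (x := x)).div hlog hl
  have t2 : HasDerivAt (fun y => y / (Real.log y) ^ 2)
      ((1 * (Real.log x) ^ 2 - x * (2 * Real.log x ^ 1 * x⁻¹)) / ((Real.log x) ^ 2) ^ 2) x :=
    (hasDerivAt_id' (x := x)).div (hlog.pow 2) (pow_ne_zero 2 hl)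
  have t3 : HasDerivAt (fun y => 2 * y / (Real.log y) ^ 3)
      ((2 * 1 * (Real.log x) ^ 3 - 2 * x * (3 * Real.log x ^ 2 * x⁻¹)) / ((Real.log x) ^ 3) ^ 2) x :=
    ((hasDerivAt_id' (x := x)).const_mul 2).div (hlog.pow 3) (pow_ne_zero 3 hl)
  have t4 : HasDerivAt (fun y => 6 * y / (Real.log y) ^ 4)
      ((6 * 1 * (Real.log x) ^ 4 - 6 * x * (4 * Real.log x ^ 3 * x⁻¹)) / ((Real.log x) ^ 4) ^ 2) x :=
    ((hasDerivAt_id' (x := x)).const_mul 6).div (hlog.pow 4) (pow_ne_zero 4 hl)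
  have t5 : HasDerivAt (fun y => 51 * y / (Real.log y) ^ 5)
      ((51 * 1 * (Real.log x) ^ 5 - 51 * x * (5 * Real.log x ^ 4 * x⁻¹)) / ((Real.log x) ^ 5) ^ 2) x :=
    ((hasDerivAt_id' (x := x)).const_mul 51).div (hlog.pow 5) (pow_ne_zero 5 hl)
  have := (((t1.add t2).add t3).add t4).add t5
  refine this.congr_deriv ?_
  field_simp
  ring


lemma hasDerivAt_If {x : ℝ} (hx : 3/2 < x) :
    HasDerivAt If (1 / Real.log x) x := by
  have hl : Real.log x ≠ 0 := ne_of_gt (Real.log_pos (by linarith))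
  exact intervalIntegral.integral_hasDerivAt_right (intInt (by norm_num) hx.le)
    ((measurable_const.div Real.measurable_log).stronglyMeasurable.stronglyMeasurableAtFilter)
    (continuousAt_const.div (Real.continuousAt_log (by linarith : (0:ℝ) < x).ne') hl)

lemma hasDerivAt_Ff {x : ℝ} (hx : 3/2 < x) :
    HasDerivAt Ff (27 / (Real.log x) ^ 5 - 255 / (Real.log x) ^ 6) x := by
  have := (hasDerivAt_Gf hx).sub (hasDerivAt_If hx)
  refine this.congr_deriv ?_
  ring

lemma Ff_min {n : ℝ} (hn : 2 ≤ n) : Ff (Real.exp (85/9)) ≤ Ff n := by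
  set X := Real.exp (85/9) with hXdef
  have hX2 : (2:ℝ) < X := by
    have h1 : Real.exp 1 < Real.exp (85/9) := Real.exp_lt_exp.mpr (by norm_num)
    have := Real.exp_one_gt_d9
    simp only [hXdef]; linarith
  rcases le_or_gt n X with hnX | hXn
  · have hanti : AntitoneOn Ff (Set.Icc 2 X) := by
      apply antitoneOn_of_deriv_nonpos (convex_Icc 2 X)
      · intro x hx
        exact (hasDerivAt_Ff (by linarith [hx.1] : (3:ℝ)/2 < x)).continuousAt.continuousWithinAt
      · intro x hx
        rw [interior_Icc] at hx
        exact ((hasDerivAt_Ff (by linarith [hx.1] : (3:ℝ)/2 < x)).differentiableAt).differentiableWithinAt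
      · intro x hx
        rw [interior_Icc] at hx
        have hx2 : (3:ℝ)/2 < x := by linarith [hx.1]
        rw [(hasDerivAt_Ff hx2).deriv]
        have hL : 0 < Real.log x := Real.log_pos (by linarith)
        have hLle : Real.log x < 85/9 := by
          have := Real.log_lt_log (by linarith : (0:ℝ) < x) hx.2
          rwa [hXdef, Real.log_exp] at this
        have heq : 27 / (Real.log x) ^ 5 - 255 / (Real.log x) ^ 6
            = (27 * Real.log x - 255) / (Real.log x) ^ 6 := by
          field_simp
        rw [heq]
        apply div_nonpos_of_nonpos_of_nonneg (by linarith) (by positivity)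
    exact hanti ⟨hn, hnX⟩ ⟨by linarith, le_rfl⟩ hnX
  · have hmono : MonotoneOn Ff (Set.Ici X) := by
      apply monotoneOn_of_deriv_nonneg (convex_Ici X)
      · intro x hx
        exact (hasDerivAt_Ff (by simp at hx; linarith : (3:ℝ)/2 < x)).continuousAt.continuousWithinAt
      · intro x hx
        rw [interior_Ici] at hx
        exact ((hasDerivAt_Ff (by simp at hx; linarith : (3:ℝ)/2 < x)).differentiableAt).differentiableWithinAt
      · intro x hx
        rw [interior_Ici] at hx
        have hx2 : (3:ℝ)/2 < x := by simp at hx; linarith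
        rw [(hasDerivAt_Ff hx2).deriv]
        have hL : 0 < Real.log x := Real.log_pos (by linarith)
        have hLge : 85/9 < Real.log x := by
          have := Real.log_lt_log (by positivity : (0:ℝ) < X) hx
          rwa [hXdef, Real.log_exp] at this
        have heq : 27 / (Real.log x) ^ 5 - 255 / (Real.log x) ^ 6
            = (27 * Real.log x - 255) / (Real.log x) ^ 6 := by
          field_simp
        rw [heq]
        apply div_nonneg (by linarith) (by positivity)
    exact hmono (Set.self_mem_Ici) (Set.mem_Ici.mpr hXn.le) hXn.le

-- remainder monotone
lemma rem_mono : MonotoneOn (fun s => Real.exp s - ∑ i ∈ range 38, s ^ i / (Nat.factorial i : ℝ))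
    (Set.Icc (0:ℝ) (85/9)) := by
  apply monotoneOn_of_deriv_nonneg (convex_Icc _ _)
  · exact (Real.continuous_exp.sub (continuous_finset_sum _
      (fun i _ => (continuous_pow i).div_const _))).continuousOn
  · intro x _
    apply DifferentiableAt.differentiableWithinAt
    exact (Real.differentiable_exp x).sub
      (DifferentiableAt.fun_sum fun i _ => (differentiable_pow i).differentiableAt.div_const _)
  · intro x hx
    rw [interior_Icc] at hx
    have hd : HasDerivAt (fun s => Real.exp s - ∑ i ∈ range 38, s ^ i / (Nat.factorial i : ℝ))
        (Real.exp x - ∑ i ∈ range 38, ((i:ℝ) * x ^ (i-1) / (Nat.factorial i : ℝ))) x := by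
      apply (Real.hasDerivAt_exp x).sub
      apply HasDerivAt.fun_sum
      intro i _
      exact (hasDerivAt_pow i x).div_const _
    rw [hd.deriv]
    have hsum : ∑ i ∈ range 38, ((i:ℝ) * x ^ (i-1) / (Nat.factorial i : ℝ))
        = ∑ i ∈ range 37, x ^ i / (Nat.factorial i : ℝ) := by
      rw [Finset.sum_range_succ']
      simp only [Nat.cast_zero, zero_mul, Nat.factorial_zero, Nat.cast_one, zero_div, add_zero,
        Nat.add_sub_cancel]
      refine Finset.sum_congr rfl fun i _ => ?_
      have h1 : ((Nat.factorial (i+1) : ℝ)) = (i+1) * (Nat.factorial i : ℝ) := by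
        rw [Nat.factorial_succ]; push_cast; ring
      have h2 : ((i:ℝ)+1) ≠ 0 := by positivity
      have h3 : (Nat.factorial i : ℝ) ≠ 0 := Nat.cast_ne_zero.mpr (Nat.factorial_ne_zero i)
      rw [h1]
      push_cast
      field_simp
    rw [hsum]
    have := Real.sum_le_exp_of_nonneg hx.1.le 37
    linarith

lemma exp_85_144_bounds : (1.804489592895771137:ℝ) ≤ Real.exp (85/144) ∧
    Real.exp (85/144) ≤ 1.804489592895786463 := by
  have h := Real.exp_bound (x := 85/144) (by rw [abs_of_nonneg] <;> norm_num) (n := 14) (by norm_num)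
  rw [abs_le] at h
  obtain ⟨h1, h2⟩ := h
  have habs : |(85:ℝ)/144| = 85/144 := by rw [abs_of_nonneg]; norm_num
  rw [habs] at h1 h2
  have hS : ∑ m ∈ range 14, ((85:ℝ)/144) ^ m / (Nat.factorial m : ℝ)
      = ∑ m ∈ range 14, ((85:ℝ)/144) ^ m / (Nat.factorial m : ℝ) := rfl
  constructor
  · have := h1
    simp only [Finset.sum_range_succ, Finset.sum_range_zero, Nat.factorial] at this ⊢
    norm_num at this ⊢
    linarith
  · have := h2
    simp only [Finset.sum_range_succ, Finset.sum_range_zero, Nat.factorial] at this ⊢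
    norm_num at this ⊢
    linarith

lemma exp_85_9_bounds : ((1.804489592895771137:ℝ))^(16:ℕ) ≤ Real.exp (85/9) ∧
    Real.exp (85/9) ≤ (1.804489592895786463:ℝ)^(16:ℕ) := by
  have h16 : Real.exp (85/9) = Real.exp (85/144) ^ (16:ℕ) := by
    rw [← Real.exp_nat_mul]; norm_num
  refine ⟨?_, ?_⟩
  · rw [h16]; exact pow_le_pow_left₀ (by norm_num) exp_85_144_bounds.1 16
  · rw [h16]; exact pow_le_pow_left₀ (Real.exp_nonneg _) exp_85_144_bounds.2 16

lemma l2pos : (0.6931471803:ℝ) < Real.log 2 := Real.log_two_gt_d9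
lemma l2lt : Real.log 2 < 0.6931471808 := Real.log_two_lt_d9

lemma sub_eq : (∫ s in (2:ℝ)..(Real.exp (85/9)), 1 / Real.log s)
    = ∫ s in (Real.log 2)..((85:ℝ)/9), Real.exp s * (1 / s) := by
  have hg : ContinuousOn (fun y => 1 / Real.log y)
      (Real.exp '' Set.uIcc (Real.log 2) ((85:ℝ)/9)) := by
    rintro y ⟨s, hs, rfl⟩
    have hmin : Real.log 2 ≤ s := by
      rcases Set.mem_uIcc.1 hs with h | h
      · exact h.1
      · have := l2lt; linarith [h.1]
    have h2 : (2:ℝ) ≤ Real.exp s := by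
      calc (2:ℝ) = Real.exp (Real.log 2) := (Real.exp_log (by norm_num)).symm
      _ ≤ Real.exp s := Real.exp_le_exp.mpr hmin
    have hl : Real.log (Real.exp s) ≠ 0 := by
      rw [Real.log_exp]
      have := l2pos; nlinarith [hmin]
    exact (continuousAt_const.div
      (Real.continuousAt_log (by linarith : (0:ℝ) < Real.exp s).ne') hl).continuousWithinAt
  have h := intervalIntegral.integral_comp_smul_deriv' (a := Real.log 2) (b := (85:ℝ)/9)
    (f := Real.exp) (f' := Real.exp) (g := fun y => 1 / Real.log y)
    (fun x _ => Real.hasDerivAt_exp x) Real.continuous_exp.continuousOn hg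
  rw [Real.exp_log (by norm_num : (0:ℝ) < 2)] at h
  rw [← h]
  apply intervalIntegral.integral_congr
  intro s _
  simp [Real.log_exp, smul_eq_mul]

lemma logt_ub : Real.log ((85:ℝ)/9) ≤ 2.245426679902 := by
  have hlog : Real.log ((85:ℝ)/9) = 3 * Real.log 2 + Real.log ((85:ℝ)/72) := by
    rw [show ((85:ℝ)/9) = 2^3 * (85/72) by norm_num,
      Real.log_mul (by norm_num) (by norm_num), Real.log_pow]
    push_cast; ring
  have hinv : Real.log ((85:ℝ)/72) = - Real.log ((72:ℝ)/85) := by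
    rw [show ((85:ℝ)/72) = ((72:ℝ)/85)⁻¹ by norm_num, Real.log_inv]
  have hser := (abs_le.1 (Real.abs_log_sub_add_sum_range_le
    (x := (13:ℝ)/85) (by rw [abs_of_nonneg] <;> norm_num) 12)).1
  rw [show |(13:ℝ)/85| = 13/85 by rw [abs_of_nonneg]; norm_num] at hser
  norm_num only at hser
  have := Real.log_two_lt_d9
  rw [hlog, hinv]
  linarith

lemma logl2_lb : (-0.366512921737:ℝ) ≤ Real.log (Real.log 2) := by
  have hmono : Real.log ((0.6931471803:ℝ)) ≤ Real.log (Real.log 2) :=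
    Real.log_le_log (by norm_num) Real.log_two_gt_d9.le
  have hsplit : Real.log ((0.6931471803:ℝ)) = Real.log ((6931471803:ℝ)/5000000000) - Real.log 2 := by
    rw [← Real.log_div (by norm_num) (by norm_num)]
    norm_num
  have hinv : Real.log ((6931471803:ℝ)/5000000000) = - Real.log ((5000000000:ℝ)/6931471803) := by
    rw [show ((6931471803:ℝ)/5000000000) = ((5000000000:ℝ)/6931471803)⁻¹ by norm_num, Real.log_inv]
  have hser := (abs_le.1 (Real.abs_log_sub_add_sum_range_le
    (x := (1931471803:ℝ)/6931471803) (by rw [abs_of_nonneg] <;> norm_num) 16)).2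
  rw [show |(1931471803:ℝ)/6931471803| = 1931471803/6931471803 by rw [abs_of_nonneg]; norm_num] at hser
  rw [show ((1:ℝ) - 1931471803/6931471803) = (5000000000:ℝ)/6931471803 by norm_num] at hser
  norm_num only at hser
  have := Real.log_two_lt_d9
  linarith

lemma Ubound : ((1.804489592895786463:ℝ))^(16:ℕ) - ∑ i ∈ range 38, ((85:ℝ)/9) ^ i / (Nat.factorial i : ℝ)
    ≤ 9/312500000 := by
  simp only [Finset.sum_range_succ, Finset.sum_range_zero, Nat.factorial]
  norm_num

lemma int_bound :
    (∫ s in (Real.log 2)..((85:ℝ)/9), Real.exp s * (1 / s))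
    ≤ (1 + 9/312500000) * (Real.log ((85:ℝ)/9 / Real.log 2))
      + ∑ j ∈ range 37, ((((85:ℝ)/9) ^ (j+1) - (Real.log 2) ^ (j+1)) / ((j:ℝ)+1)) / (Nat.factorial (j+1) : ℝ) := by
  have hl2pos : (0:ℝ) < Real.log 2 := Real.log_pos (by norm_num)
  have hl2lt : Real.log 2 < 1 := by have := Real.log_two_lt_d9; linarith
  have hle : Real.log 2 ≤ 85/9 := by linarith
  set ψ : ℝ → ℝ := fun s => (1 + 9/312500000) * (1/s) + ∑ j ∈ range 37, s ^ j / (Nat.factorial (j+1) : ℝ) with hψ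
  have hpt : ∀ s ∈ Set.Icc (Real.log 2) ((85:ℝ)/9), Real.exp s * (1/s) ≤ ψ s := by
    intro s hs
    have hs0 : 0 < s := lt_of_lt_of_le hl2pos hs.1
    have hrem := rem_mono ⟨hs0.le, hs.2⟩ ⟨by norm_num, le_rfl⟩ hs.2
    simp only at hrem
    have hexp : Real.exp s ≤ (∑ i ∈ range 38, s ^ i / (Nat.factorial i : ℝ)) + 9/312500000 := by
      have := exp_85_9_bounds.2
      have := Ubound
      linarith
    calc Real.exp s * (1/s) ≤ ((∑ i ∈ range 38, s ^ i / (Nat.factorial i : ℝ)) + 9/312500000) * (1/s) := by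
          apply mul_le_mul_of_nonneg_right hexp (by positivity)
      _ = ψ s := by
          rw [Finset.sum_range_succ']
          simp only [pow_zero, Nat.factorial_zero, Nat.cast_one]
          rw [add_mul, add_mul, Finset.sum_mul]
          have hterm : ∀ j ∈ range 37, s ^ (j+1) / (Nat.factorial (j+1) : ℝ) * (1/s)
              = s ^ j / (Nat.factorial (j+1) : ℝ) := by
            intro j _
            have h3 : (Nat.factorial (j+1) : ℝ) ≠ 0 := Nat.cast_ne_zero.mpr (Nat.factorial_ne_zero _)
            rw [pow_succ]
            field_simp
          rw [Finset.sum_congr rfl hterm, hψ]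
          ring
  have hcont1 : ContinuousOn (fun s => Real.exp s * (1/s)) (Set.uIcc (Real.log 2) ((85:ℝ)/9)) := by
    rw [Set.uIcc_of_le hle]
    intro s hs
    have hs0 : 0 < s := lt_of_lt_of_le hl2pos hs.1
    exact (Real.continuous_exp.continuousAt.mul
      (continuousAt_const.div continuousAt_id hs0.ne')).continuousWithinAt
  have hcont2 : ContinuousOn ψ (Set.uIcc (Real.log 2) ((85:ℝ)/9)) := by
    rw [Set.uIcc_of_le hle]
    intro s hs
    have hs0 : 0 < s := lt_of_lt_of_le hl2pos hs.1
    apply ContinuousWithinAt.add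
    · exact (continuousAt_const.mul
        (continuousAt_const.div continuousAt_id hs0.ne')).continuousWithinAt
    · exact (continuous_finset_sum _ (fun i _ =>
        (continuous_pow i).div_const _)).continuousAt.continuousWithinAt
  have hmono := intervalIntegral.integral_mono_on hle
    (hcont1.intervalIntegrable (μ := volume)) (hcont2.intervalIntegrable (μ := volume)) hpt
  refine le_trans hmono ?_
  have hsplit : (∫ s in (Real.log 2)..((85:ℝ)/9), ψ s)
      = (∫ s in (Real.log 2)..((85:ℝ)/9), (1 + 9/312500000) * (1/s))
        + ∫ s in (Real.log 2)..((85:ℝ)/9), ∑ j ∈ range 37, s ^ j / (Nat.factorial (j+1) : ℝ) := by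
    apply intervalIntegral.integral_add
    · apply ContinuousOn.intervalIntegrable
      rw [Set.uIcc_of_le hle]
      intro s hs
      have hs0 : 0 < s := lt_of_lt_of_le hl2pos hs.1
      exact (continuousAt_const.mul
        (continuousAt_const.div continuousAt_id hs0.ne')).continuousWithinAt
    · exact (continuous_finset_sum _ (fun i _ =>
        (continuous_pow i).div_const _)).intervalIntegrable _ _
  rw [hsplit]
  have h1 : (∫ s in (Real.log 2)..((85:ℝ)/9), (1 + 9/312500000) * (1/s))
      = (1 + 9/312500000) * Real.log ((85:ℝ)/9 / Real.log 2) := by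
    rw [intervalIntegral.integral_const_mul, integral_one_div]
    rw [Set.uIcc_of_le hle]
    intro h
    exact absurd h.1 (by linarith)
  have h2 : (∫ s in (Real.log 2)..((85:ℝ)/9), ∑ j ∈ range 37, s ^ j / (Nat.factorial (j+1) : ℝ))
      = ∑ j ∈ range 37, ((((85:ℝ)/9) ^ (j+1) - (Real.log 2) ^ (j+1)) / ((j:ℝ)+1)) / (Nat.factorial (j+1) : ℝ) := by
    rw [intervalIntegral.integral_finset_sum (fun j _ =>
      ((continuous_pow j).div_const _).intervalIntegrable _ _)]
    refine Finset.sum_congr rfl fun j _ => ?_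
    rw [intervalIntegral.integral_div, integral_pow]
  rw [h1, h2]

lemma sum_ub : ∑ j ∈ range 37, ((((85:ℝ)/9) ^ (j+1) - (Real.log 2) ^ (j+1)) / ((j:ℝ)+1)) / (Nat.factorial (j+1) : ℝ)
    ≤ 1525.15379239 := by
  have hterm : ∀ j ∈ range 37,
      ((((85:ℝ)/9) ^ (j+1) - (Real.log 2) ^ (j+1)) / ((j:ℝ)+1)) / (Nat.factorial (j+1) : ℝ)
      ≤ ((((85:ℝ)/9) ^ (j+1) - (0.6931471803:ℝ) ^ (j+1)) / ((j:ℝ)+1)) / (Nat.factorial (j+1) : ℝ) := by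
    intro j _
    have hp : (0.6931471803:ℝ)^(j+1) ≤ (Real.log 2)^(j+1) :=
      pow_le_pow_left₀ (by norm_num) Real.log_two_gt_d9.le _
    gcongr
  refine le_trans (Finset.sum_le_sum hterm) ?_
  simp only [Finset.sum_range_succ, Finset.sum_range_zero, Nat.factorial]
  norm_num


lemma key : (0.144:ℝ) < Ff (Real.exp (85/9)) := by
  have hlX : Real.log (Real.exp ((85:ℝ)/9)) = 85/9 := Real.log_exp _
  have hGX : Gf (Real.exp ((85:ℝ)/9)) = Real.exp ((85:ℝ)/9)
      * (9/85 + (9/85)^2 + 2*(9/85)^3 + 6*(9/85)^4 + 51*(9/85)^5) := by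
    unfold Gf
    rw [hlX]
    ring
  have hGlb : ((1.804489592895771137:ℝ))^(16:ℕ)
      * (9/85 + (9/85)^2 + 2*(9/85)^3 + 6*(9/85)^4 + 51*(9/85)^5) ≤ Gf (Real.exp ((85:ℝ)/9)) := by
    rw [hGX]
    exact mul_le_mul_of_nonneg_right exp_85_9_bounds.1 (by norm_num)
  have hl2pos : (0:ℝ) < Real.log 2 := Real.log_pos (by norm_num)
  have hlogdiv : Real.log ((85:ℝ)/9 / Real.log 2)
      = Real.log ((85:ℝ)/9) - Real.log (Real.log 2) :=
    Real.log_div (by norm_num) hl2pos.ne'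
  have hIub : If (Real.exp ((85:ℝ)/9))
      ≤ (1 + 9/312500000) * (2.245426679902 - (-0.366512921737)) + 1525.15379239 := by
    unfold If
    rw [sub_eq]
    refine le_trans int_bound ?_
    have h1 : (1 + 9/312500000 : ℝ) * Real.log ((85:ℝ)/9 / Real.log 2)
        ≤ (1 + 9/312500000) * (2.245426679902 - (-0.366512921737)) := by
      apply mul_le_mul_of_nonneg_left _ (by norm_num)
      rw [hlogdiv]
      linarith [logt_ub, logl2_lb]
    linarith [sum_ub]
  have hfin : (0.144:ℝ) < ((1.804489592895771137:ℝ))^(16:ℕ)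
      * (9/85 + (9/85)^2 + 2*(9/85)^3 + 6*(9/85)^4 + 51*(9/85)^5)
      - ((1 + 9/312500000) * (2.245426679902 - (-0.366512921737)) + 1525.15379239) := by
    norm_num
  unfold Ff
  linarith

theorem li_upper_bound (n : ℝ) (hn : 2 ≤ n) :
    0.144 + (∫ x in (2:ℝ)..n, 1 / Real.log x) <
      n / Real.log n + n / (Real.log n) ^ 2 + 2 * n / (Real.log n) ^ 3
        + 6 * n / (Real.log n) ^ 4 + 51 * n / (Real.log n) ^ 5 := by
  have h1 := Ff_min hn
  have h2 := key
  have h3 : (0.144:ℝ) < Ff n := lt_of_lt_of_le h2 h1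
  unfold Ff Gf If at h3
  linarith
end
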